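/- arXiv:2605.02298 — 7 statements merged into one kernel-verified Lean document; each statement's English description precedes it below -/
import Mathlib

section
/- For every permutation π of {1,…,n}, the rectangular distance between the permuton ĥπ associated with π and the empirical measure μ_π = (1/n)·Σ_{i=1}^n δ_{(i/n, π(i)/n)} satisfies 1/n ≤ d_□(ĥπ, μ_π) ≤ 4/n. -/
open MeasureTheory Set Filter Topology

/-- Rectangular distance between two measures on the plane: supremum over axis-aligned
rectangles `[a,b] × [c,d]` of the difference of their measures. -/
noncomputable def dRect (μ ν : Measure (ℝ × ℝ)) : ℝ :=
  ⨆ r : ℝ × ℝ × ℝ × ℝ,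
    |(μ (Icc r.1 r.2.1 ×ˢ Icc r.2.2.1 r.2.2.2)).toReal -
      (ν (Icc r.1 r.2.1 ×ˢ Icc r.2.2.1 r.2.2.2)).toReal|

/-- Star discrepancy: supremum over anchored rectangles `[0,x] × [0,y]`. -/
noncomputable def dStar (μ ν : Measure (ℝ × ℝ)) : ℝ :=
  ⨆ r : ℝ × ℝ,
    |(μ (Icc 0 r.1 ×ˢ Icc 0 r.2)).toReal - (ν (Icc 0 r.1 ×ˢ Icc 0 r.2)).toReal|

/-- A permuton: probability measure on the unit square with uniform marginals. -/
def IsPermuton (μ : Measure (ℝ × ℝ)) : Prop :=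
  IsProbabilityMeasure μ ∧ μ.map Prod.fst = volume.restrict (Icc 0 1) ∧
    μ.map Prod.snd = volume.restrict (Icc 0 1)

/-- The permuton associated with a permutation of `{1, …, n}` (0-indexed here):
density `n` on the union of the base squares. -/
noncomputable def hatPerm (n : ℕ) (π : Equiv.Perm (Fin n)) : Measure (ℝ × ℝ) :=
  (n : ENNReal) • volume.restrict (⋃ i : Fin n,
    Icc (((i : ℕ) : ℝ) / n) ((((i : ℕ) : ℝ) + 1) / n) ×ˢ
      Icc (((π i : ℕ) : ℝ) / n) ((((π i : ℕ) : ℝ) + 1) / n))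

/-- Empirical (uniform) measure on a finite indexed point family. -/
noncomputable def empMeasure {n : ℕ} (P : Fin n → ℝ × ℝ) : Measure (ℝ × ℝ) :=
  (n : ENNReal)⁻¹ • ∑ i, Measure.dirac (P i)

/-- The point set `{(i/n, π(i)/n) : i = 1, …, n}` associated with a permutation. -/
noncomputable def permPts (n : ℕ) (π : Equiv.Perm (Fin n)) : Fin n → ℝ × ℝ :=
  fun i => ((((i : ℕ) : ℝ) + 1) / n, (((π i : ℕ) : ℝ) + 1) / n)

/-- `D_n(μ)`: best rectangular-distance approximation of `μ` by an `n`-permutation. -/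
noncomputable def Dn (n : ℕ) (μ : Measure (ℝ × ℝ)) : ℝ :=
  ⨅ π : Equiv.Perm (Fin n), dRect μ (hatPerm n π)


/-!
Cut `[0,1]²` into the `n` squares carrying `hatPerm n π`. On each square both measures have mass
`1/n`: the permuton spreads it uniformly, the empirical measure puts it on the upper-right corner.
A square therefore contributes equally to both measures of a rectangle `[a,b] × [c,d]` unless a
side of the rectangle cuts it, i.e. `a ∈ (x, x']` or `b ∈ [x, x')` for its horizontal side
`[x, x']` (and likewise vertically). The squares lie in distinct columns and distinct rows, so each
of the four sides cuts at most one square, and a cut square changes the difference by at most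
`1/n`. For the lower bound, the degenerate rectangle at a point of `permPts n π` is null for the
permuton and has empirical mass `1/n`.
-/

open Function
open scoped ENNReal

namespace Permuton

section CellwiseDiscrepancy

variable {α : Type*} [MeasurableSpace α]

lemma measure_eq_of_subset_or_disjoint {μ ν : Measure α} {S R : Set α} (hμ : μ Sᶜ = 0)
    (hν : ν Sᶜ = 0) (huniv : μ univ = ν univ) (hSR : S ⊆ R ∨ Disjoint R S) : μ R = ν R := by
  rcases hSR with hSR | hRS
  · have hfull (ρ : Measure α) (hρ : ρ Sᶜ = 0) : ρ R = ρ univ :=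
      le_antisymm (measure_mono (subset_univ R)) <| (measure_univ_le_add_compl R).trans_eq <| by
        rw [measure_mono_null (compl_subset_compl.2 hSR) hρ, add_zero]
    rw [hfull μ hμ, hfull ν hν, huniv]
  · have hRS' : R ⊆ Sᶜ := subset_compl_iff_disjoint_right.2 hRS
    rw [measure_mono_null hRS' hμ, measure_mono_null hRS' hν]

lemma abs_toReal_sub_le_of_measure_univ_eq {μ ν : Measure α} [IsFiniteMeasure μ]
    (huniv : μ univ = ν univ) (R : Set α) :
    |(μ R).toReal - (ν R).toReal| ≤ (μ univ).toReal := by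
  have hν : ν univ ≠ ∞ := huniv ▸ measure_ne_top μ univ
  refine abs_sub_le_of_nonneg_of_le ENNReal.toReal_nonneg ?_ ENNReal.toReal_nonneg ?_
  · exact ENNReal.toReal_mono (measure_ne_top μ univ) (measure_mono (subset_univ R))
  · rw [huniv]
    exact ENNReal.toReal_mono hν (measure_mono (subset_univ R))

lemma abs_toReal_sum_sub_le {ι : Type*} [Fintype ι] {μ ν : ι → Measure α} {S : ι → Set α}
    {m : ℝ≥0∞} (hm : m ≠ ∞) (hμS : ∀ i, μ i (S i)ᶜ = 0) (hνS : ∀ i, ν i (S i)ᶜ = 0)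
    (hμm : ∀ i, μ i univ = m) (hνm : ∀ i, ν i univ = m) {R : Set α} (C : Finset ι)
    (hC : ∀ i ∉ C, S i ⊆ R ∨ Disjoint R (S i)) :
    |((∑ i, μ i) R).toReal - ((∑ i, ν i) R).toReal| ≤ C.card * m.toReal := by
  have hμfin (i : ι) : IsFiniteMeasure (μ i) := ⟨(hμm i).trans_lt hm.lt_top⟩
  have hνfin (i : ι) : IsFiniteMeasure (ν i) := ⟨(hνm i).trans_lt hm.lt_top⟩
  have huniv (i : ι) : μ i univ = ν i univ := (hμm i).trans (hνm i).symm
  simp only [Measure.finsetSum_apply]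
  rw [ENNReal.toReal_sum fun i _ => measure_ne_top _ _,
    ENNReal.toReal_sum fun i _ => measure_ne_top _ _, ← Finset.sum_sub_distrib]
  calc |∑ i, ((μ i R).toReal - (ν i R).toReal)|
      ≤ ∑ i, |(μ i R).toReal - (ν i R).toReal| := Finset.abs_sum_le_sum_abs _ _
    _ = ∑ i ∈ C, |(μ i R).toReal - (ν i R).toReal| := by
      refine (Finset.sum_subset (Finset.subset_univ C) fun i _ hi => ?_).symm
      rw [measure_eq_of_subset_or_disjoint (hμS i) (hνS i) (huniv i) (hC i hi), sub_self,
        abs_zero]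
    _ ≤ C.card • m.toReal := Finset.sum_le_card_nsmul _ _ _ fun i _ =>
      (abs_toReal_sub_le_of_measure_univ_eq (huniv i) R).trans_eq (by rw [hμm])
    _ = C.card * m.toReal := nsmul_eq_mul _ _

end CellwiseDiscrepancy

lemma card_filter_mem_le_one {α ι κ : Type*} [Fintype ι] {s : κ → Set α}
    (hs : Pairwise (Disjoint on s)) {f : ι → κ} (hf : Injective f) (x : α)
    [DecidablePred fun i => x ∈ s (f i)] :
    (Finset.univ.filter fun i => x ∈ s (f i)).card ≤ 1 := by
  refine Finset.card_le_one.2 fun i hi j hj => hf ?_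
  by_contra hij
  exact Set.disjoint_left.1 (hs hij) (Finset.mem_filter.1 hi).2 (Finset.mem_filter.1 hj).2

lemma monotone_natCast_div (n : ℕ) : Monotone fun k : ℕ => (k : ℝ) / n :=
  fun _ _ hkl => div_le_div_of_nonneg_right (Nat.cast_le.2 hkl) n.cast_nonneg

lemma pairwise_disjoint_Ioc_natCast_div (n : ℕ) :
    Pairwise (Disjoint on fun k : ℕ => Ioc ((k : ℝ) / n) (((k : ℝ) + 1) / n)) := by
  simpa using (monotone_natCast_div n).pairwise_disjoint_on_Ioc_succ

lemma pairwise_disjoint_Ico_natCast_div (n : ℕ) :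
    Pairwise (Disjoint on fun k : ℕ => Ico ((k : ℝ) / n) (((k : ℝ) + 1) / n)) := by
  simpa using (monotone_natCast_div n).pairwise_disjoint_on_Ico_succ

lemma volume_Icc_natCast_div {n : ℕ} (hn : n ≠ 0) (k : ℕ) :
    volume (Icc ((k : ℝ) / n) (((k : ℝ) + 1) / n)) = (n : ℝ≥0∞)⁻¹ := by
  have hn' : (0 : ℝ) < n := Nat.cast_pos.2 (Nat.pos_of_ne_zero hn)
  rw [Real.volume_Icc, add_div, add_sub_cancel_left, one_div, ENNReal.ofReal_inv_of_pos hn',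
    ENNReal.ofReal_natCast]

/-- Half-open so that each of `a`, `b` cuts at most one cell of a grid, while `¬Cuts` still forces
`[a, b]` to contain or avoid `[x, x']`. -/
def Cuts (a b x x' : ℝ) : Prop :=
  a ∈ Ioc x x' ∨ b ∈ Ico x x'

lemma subset_or_disjoint_of_not_cuts {a b x x' : ℝ} (h : ¬Cuts a b x x') :
    Icc x x' ⊆ Icc a b ∨ Disjoint (Icc a b) (Icc x x') := by
  simp only [Cuts, mem_Ioc, mem_Ico, not_or, not_and_or, not_lt, not_le] at h
  by_cases hsub : a ≤ x ∧ x' ≤ b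
  · exact Or.inl (Icc_subset_Icc hsub.1 hsub.2)
  · refine Or.inr (Set.disjoint_left.2 fun y ⟨hay, hyb⟩ ⟨hxy, hyx'⟩ => hsub ?_)
    obtain ⟨ha | ha, hb | hb⟩ := h <;> exact ⟨by linarith, by linarith⟩

lemma prod_subset_or_disjoint_of_not_cuts {a b c d x x' y y' : ℝ}
    (h : ¬(Cuts a b x x' ∨ Cuts c d y y')) :
    Icc x x' ×ˢ Icc y y' ⊆ Icc a b ×ˢ Icc c d ∨
      Disjoint (Icc a b ×ˢ Icc c d) (Icc x x' ×ˢ Icc y y') := by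
  rw [not_or] at h
  rcases subset_or_disjoint_of_not_cuts h.1 with hx | hx
  · rcases subset_or_disjoint_of_not_cuts h.2 with hy | hy
    · exact Or.inl (prod_mono hx hy)
    · exact Or.inr (disjoint_prod.2 (Or.inr hy))
  · exact Or.inr (disjoint_prod.2 (Or.inl hx))

open scoped Classical in
lemma card_filter_cuts_le_two {ι : Type*} [Fintype ι] {f : ι → ℕ} (hf : Injective f) (n : ℕ)
    (a b : ℝ) :
    (Finset.univ.filter fun i => Cuts a b ((f i : ℝ) / n) (((f i : ℝ) + 1) / n)).card ≤ 2 := by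
  refine (Finset.card_le_card fun i hi => ?_).trans <| (Finset.card_union_le _ _).trans <|
    add_le_add (card_filter_mem_le_one (pairwise_disjoint_Ioc_natCast_div n) hf a)
      (card_filter_mem_le_one (pairwise_disjoint_Ico_natCast_div n) hf b)
  simpa [Cuts] using hi

def permSquare (n : ℕ) (π : Equiv.Perm (Fin n)) (i : Fin n) : Set (ℝ × ℝ) :=
  Icc (((i : ℕ) : ℝ) / n) ((((i : ℕ) : ℝ) + 1) / n) ×ˢ
    Icc (((π i : ℕ) : ℝ) / n) ((((π i : ℕ) : ℝ) + 1) / n)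

lemma measurableSet_permSquare (n : ℕ) (π : Equiv.Perm (Fin n)) (i : Fin n) :
    MeasurableSet (permSquare n π i) :=
  measurableSet_Icc.prod measurableSet_Icc

lemma volume_permSquare {n : ℕ} (hn : n ≠ 0) (π : Equiv.Perm (Fin n)) (i : Fin n) :
    volume (permSquare n π i) = (n : ℝ≥0∞)⁻¹ * (n : ℝ≥0∞)⁻¹ := by
  rw [permSquare, Measure.volume_eq_prod, Measure.prod_prod, volume_Icc_natCast_div hn,
    volume_Icc_natCast_div hn]

lemma permPts_mem_permSquare (n : ℕ) (π : Equiv.Perm (Fin n)) (i : Fin n) :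
    permPts n π i ∈ permSquare n π i := by
  have hle (k : ℕ) : (k : ℝ) / n ≤ ((k : ℝ) + 1) / n :=
    div_le_div_of_nonneg_right (by linarith) n.cast_nonneg
  exact ⟨⟨hle _, le_rfl⟩, ⟨hle _, le_rfl⟩⟩

lemma pairwise_aedisjoint_permSquare (n : ℕ) (π : Equiv.Perm (Fin n)) :
    Pairwise (AEDisjoint volume on permSquare n π) := by
  intro i j hij
  have hcol : AEDisjoint volume (Icc (((i : ℕ) : ℝ) / n) ((((i : ℕ) : ℝ) + 1) / n))
      (Icc (((j : ℕ) : ℝ) / n) ((((j : ℕ) : ℝ) + 1) / n)) :=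
    (pairwise_disjoint_Ioc_natCast_div n (Fin.val_injective.ne hij)).aedisjoint.congr
      Ioc_ae_eq_Icc.symm Ioc_ae_eq_Icc.symm
  change volume (_ ∩ _) = 0
  rw [permSquare, permSquare, prod_inter_prod, Measure.volume_eq_prod, Measure.prod_prod, hcol,
    zero_mul]

lemma hatPerm_eq_sum (n : ℕ) (π : Equiv.Perm (Fin n)) :
    hatPerm n π = ∑ i, (n : ℝ≥0∞) • volume.restrict (permSquare n π i) := by
  rw [← Finset.smul_sum, ← Measure.sum_fintype, ← Measure.restrict_iUnion_ae
    (pairwise_aedisjoint_permSquare n π) fun i =>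
      (measurableSet_permSquare n π i).nullMeasurableSet]
  rfl

lemma hatPerm_singleton (n : ℕ) (π : Equiv.Perm (Fin n)) (p : ℝ × ℝ) : hatPerm n π {p} = 0 := by
  rw [hatPerm, Measure.smul_apply, Measure.restrict_apply (measurableSet_singleton p),
    measure_mono_null inter_subset_left (measure_singleton p), smul_zero]

lemma inv_le_empMeasure_singleton {n : ℕ} (P : Fin n → ℝ × ℝ) (i : Fin n) :
    (n : ℝ≥0∞)⁻¹ ≤ empMeasure P {P i} := by
  rw [empMeasure, Measure.smul_apply, Measure.finsetSum_apply, smul_eq_mul]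
  calc (n : ℝ≥0∞)⁻¹ = (n : ℝ≥0∞)⁻¹ * Measure.dirac (P i) {P i} := by
        rw [Measure.dirac_apply_of_mem (mem_singleton _), mul_one]
    _ ≤ _ := by
      gcongr
      exact Finset.single_le_sum (fun j _ => zero_le (a := Measure.dirac (P j) {P i}))
        (Finset.mem_univ i)

lemma isProbabilityMeasure_empMeasure {n : ℕ} (hn : n ≠ 0) (P : Fin n → ℝ × ℝ) :
    IsProbabilityMeasure (empMeasure P) := by
  refine ⟨?_⟩
  simp only [empMeasure, Measure.smul_apply, Measure.finsetSum_apply, measure_univ,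
    Finset.sum_const, Finset.card_univ, Fintype.card_fin, nsmul_eq_mul, mul_one, smul_eq_mul]
  exact ENNReal.inv_mul_cancel (Nat.cast_ne_zero.2 hn) (ENNReal.natCast_ne_top n)

lemma abs_hatPerm_sub_empMeasure_le {n : ℕ} (hn : n ≠ 0) (π : Equiv.Perm (Fin n))
    (a b c d : ℝ) :
    |(hatPerm n π (Icc a b ×ˢ Icc c d)).toReal -
      (empMeasure (permPts n π) (Icc a b ×ˢ Icc c d)).toReal| ≤ 4 / n := by
  classical
  set C := Finset.univ.filter fun i : Fin n =>
    Cuts a b (((i : ℕ) : ℝ) / n) ((((i : ℕ) : ℝ) + 1) / n) ∨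
      Cuts c d (((π i : ℕ) : ℝ) / n) ((((π i : ℕ) : ℝ) + 1) / n)
  have hC : C.card ≤ 4 := by
    simp only [C, Finset.filter_or]
    exact (Finset.card_union_le _ _).trans <| add_le_add
      (card_filter_cuts_le_two Fin.val_injective n a b)
      (card_filter_cuts_le_two (Fin.val_injective.comp π.injective) n c d)
  rw [hatPerm_eq_sum, empMeasure, Finset.smul_sum]
  calc _ ≤ C.card * ((n : ℝ≥0∞)⁻¹).toReal := by
        refine abs_toReal_sum_sub_le (S := permSquare n π) (ENNReal.inv_ne_top.2
          (Nat.cast_ne_zero.2 hn)) (fun i => ?_) (fun i => ?_) (fun i => ?_) (fun i => ?_) C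
          fun i hi => prod_subset_or_disjoint_of_not_cuts (by simpa [C] using hi)
        · rw [Measure.smul_apply, Measure.restrict_apply (measurableSet_permSquare n π i).compl,
            compl_inter_self, measure_empty, smul_zero]
        · rw [Measure.smul_apply, Measure.dirac_apply' _ (measurableSet_permSquare n π i).compl,
            indicator_of_notMem (notMem_compl_iff.2 (permPts_mem_permSquare n π i)), smul_zero]
        · rw [Measure.smul_apply, Measure.restrict_apply_univ, volume_permSquare hn, smul_eq_mul,
            ← mul_assoc, ENNReal.mul_inv_cancel (Nat.cast_ne_zero.2 hn) (ENNReal.natCast_ne_top n),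
            one_mul]
        · rw [Measure.smul_apply, measure_univ, smul_eq_mul, mul_one]
    _ ≤ 4 / n := by
      rw [ENNReal.toReal_inv, ENNReal.toReal_natCast, ← div_eq_mul_inv]
      gcongr
      exact_mod_cast hC

end Permuton

open Permuton

theorem hatPerm_dist_empirical (n : ℕ) (hn : 0 < n) (π : Equiv.Perm (Fin n)) :
    1 / (n : ℝ) ≤ dRect (hatPerm n π) (empMeasure (permPts n π)) ∧
      dRect (hatPerm n π) (empMeasure (permPts n π)) ≤ 4 / (n : ℝ) := by
  have hbound (r : ℝ × ℝ × ℝ × ℝ) :=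
    abs_hatPerm_sub_empMeasure_le hn.ne' π r.1 r.2.1 r.2.2.1 r.2.2.2
  refine ⟨?_, ciSup_le hbound⟩
  have := isProbabilityMeasure_empMeasure hn.ne' (permPts n π)
  set p := permPts n π ⟨0, hn⟩ with hp
  refine le_ciSup_of_le ⟨4 / n, forall_mem_range.2 hbound⟩ (p.1, p.1, p.2, p.2) ?_
  simp only [Icc_self, singleton_prod_singleton, Prod.mk.eta, hatPerm_singleton,
    ENNReal.toReal_zero, zero_sub, abs_neg, abs_of_nonneg ENNReal.toReal_nonneg]
  calc 1 / (n : ℝ) = ((n : ℝ≥0∞)⁻¹).toReal := by simp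
    _ ≤ _ := ENNReal.toReal_mono (measure_ne_top _ _) (hp ▸ inv_le_empMeasure_singleton _ _)
end

section
/- Let P ⊆ [0,1]² be a set of n points and μ a permuton with star discrepancy d*_□(μ_P, μ) < C/n for some C > 0, where μ_P is the uniform measure on P. Suppose P' is obtained from P by moving each point horizontally (changing only x-coordinates) in a manner preserving the relative order of x-coordinates, so that the new x-coordinates are i/n for i = 1,…,n in that order. Then for every anchored rectangle R = [0,x]×[0,y], the number of points of P in R and the number of points of P' in R differ by less than C+1; consequently d*_□(μ_P, μ_{P'}) < (C+1)/n. -/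
open MeasureTheory Set Filter Topology

open scoped Classical

section AuxHR

/-- Value of the empirical measure on a measurable set: count over `n`. -/
lemma empMeasure_apply_count {n : ℕ} (hn : 0 < n) (P : Fin n → ℝ × ℝ) {s : Set (ℝ × ℝ)}
    [DecidablePred fun i => P i ∈ s] (hs : MeasurableSet s) :
    (empMeasure P s).toReal
      = ((Finset.univ.filter fun i => P i ∈ s).card : ℝ) / n := by
  have h1 : empMeasure P s
      = (n : ENNReal)⁻¹ * ((Finset.univ.filter fun i => P i ∈ s).card : ENNReal) := by
    simp only [empMeasure, Measure.smul_apply, Measure.coe_finset_sum, Finset.sum_apply,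
      Measure.dirac_apply' _ hs, smul_eq_mul]
    congr 1
    rw [Finset.card_filter, Nat.cast_sum]
    apply Finset.sum_congr rfl
    intro i _
    rw [Set.indicator_apply]
    split_ifs <;> simp
  rw [h1, ENNReal.toReal_mul, ENNReal.toReal_inv, ENNReal.toReal_natCast,
    ENNReal.toReal_natCast, div_eq_mul_inv, mul_comm]

/-- Two downward closed finsets in a linear order are comparable. -/
lemma initial_comparable {α : Type*} [LinearOrder α] {A B : Finset α}
    (hA : ∀ ⦃i j : α⦄, i ≤ j → j ∈ A → i ∈ A)
    (hB : ∀ ⦃i j : α⦄, i ≤ j → j ∈ B → i ∈ B) :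
    A ⊆ B ∨ B ⊆ A := by
  by_contra h
  push_neg at h
  obtain ⟨h1, h2⟩ := h
  rw [Finset.not_subset] at h1 h2
  obtain ⟨a, haA, haB⟩ := h1
  obtain ⟨b, hbB, hbA⟩ := h2
  rcases le_total a b with hab | hba
  · exact haB (hB hab hbB)
  · exact hbA (hA hba haA)

lemma inter_card_abs_le {α : Type*} [DecidableEq α] {A B Y : Finset α} (h : A ⊆ B) :
    |((A ∩ Y).card : ℝ) - ((B ∩ Y).card : ℝ)| ≤ |(A.card : ℝ) - (B.card : ℝ)| := by
  have h1 : (B ∩ Y) ⊆ (A ∩ Y) ∪ (B \ A) := by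
    intro i hi
    simp only [Finset.mem_inter, Finset.mem_union, Finset.mem_sdiff] at *
    by_cases hiA : i ∈ A
    · exact Or.inl ⟨hiA, hi.2⟩
    · exact Or.inr ⟨hi.1, hiA⟩
  have h2 : (B ∩ Y).card ≤ (A ∩ Y).card + (B \ A).card :=
    le_trans (Finset.card_le_card h1) (Finset.card_union_le _ _)
  have h3 : (B \ A).card = B.card - A.card := Finset.card_sdiff_of_subset h
  have h4 : A.card ≤ B.card := Finset.card_le_card h
  have h5 : (A ∩ Y).card ≤ (B ∩ Y).card :=
    Finset.card_le_card (Finset.inter_subset_inter h (subset_refl _))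
  have h6 : (B ∩ Y).card + A.card ≤ (A ∩ Y).card + B.card := by omega
  have h6' : ((B ∩ Y).card : ℝ) + A.card ≤ ((A ∩ Y).card : ℝ) + B.card := by exact_mod_cast h6
  have h5' : ((A ∩ Y).card : ℝ) ≤ ((B ∩ Y).card : ℝ) := by exact_mod_cast h5
  have h4' : ((A).card : ℝ) ≤ ((B).card : ℝ) := by exact_mod_cast h4
  rw [abs_sub_comm, abs_of_nonneg (by linarith), abs_sub_comm, abs_of_nonneg (by linarith)]
  linarith

end AuxHR


theorem horizontal_regularization (n : ℕ) (hn : 0 < n) (C : ℝ) (hC : 0 < C)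
    (μ : Measure (ℝ × ℝ)) (hμ : IsPermuton μ)
    (P P' : Fin n → ℝ × ℝ)
    (hPin : ∀ i, P i ∈ Icc (0:ℝ) 1 ×ˢ Icc (0:ℝ) 1)
    (hsorted : StrictMono fun i => (P i).1)
    (hdisc : dStar (empMeasure P) μ < C / n)
    (hP' : ∀ i, P' i = ((((i : ℕ) : ℝ) + 1) / n, (P i).2)) :
    (∀ x y : ℝ,
      |((Finset.univ.filter fun i => P i ∈ Icc 0 x ×ˢ Icc 0 y).card : ℝ) -
        ((Finset.univ.filter fun i => P' i ∈ Icc 0 x ×ˢ Icc 0 y).card : ℝ)| < C + 1) ∧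
      dStar (empMeasure P) (empMeasure P') < (C + 1) / n  := by
  have hnR : (0:ℝ) < n := by exact_mod_cast hn
  obtain ⟨hprob, hfst, hsnd⟩ := hμ
  have hx0 : ∀ i, 0 ≤ (P i).1 := fun i => (hPin i).1.1
  have hx1 : ∀ i, (P i).1 ≤ 1 := fun i => (hPin i).1.2
  have hy0 : ∀ i, 0 ≤ (P i).2 := fun i => (hPin i).2.1
  have hy1 : ∀ i, (P i).2 ≤ 1 := fun i => (hPin i).2.2
  have hq0 : ∀ i : Fin n, 0 ≤ (((i:ℕ):ℝ)+1)/n := fun i => by positivity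
  have hq1 : ∀ i : Fin n, (((i:ℕ):ℝ)+1)/n ≤ 1 := fun i => by
    rw [div_le_one hnR]
    have : (i:ℕ) + 1 ≤ n := i.2
    exact_mod_cast this
  have hmeas : ∀ a b : ℝ, MeasurableSet (Icc (0:ℝ) a ×ˢ Icc (0:ℝ) b) :=
    fun a b => measurableSet_Icc.prod measurableSet_Icc
  -- value of μ on strips
  have hmu_strip : ∀ x : ℝ, 0 ≤ x → x ≤ 1 →
      (μ (Icc 0 x ×ˢ Icc (0:ℝ) 1)).toReal = x := by
    intro x h0 h1
    have hA : μ (Prod.fst ⁻¹' Icc (0:ℝ) x) = ENNReal.ofReal x := by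
      rw [← Measure.map_apply measurable_fst measurableSet_Icc, hfst,
        Measure.restrict_apply measurableSet_Icc, Set.Icc_inter_Icc]
      simp [min_eq_left h1, Real.volume_Icc]
    have hBc : μ ((Prod.snd ⁻¹' Icc (0:ℝ) 1)ᶜ) = 0 := by
      have hB : μ (Prod.snd ⁻¹' Icc (0:ℝ) 1) = 1 := by
        rw [← Measure.map_apply measurable_snd measurableSet_Icc, hsnd,
          Measure.restrict_apply measurableSet_Icc]
        simp [Real.volume_Icc]
      rw [measure_compl (measurable_snd measurableSet_Icc) (by rw [hB]; exact ENNReal.one_ne_top),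
        hB, measure_univ, tsub_self]
    have heq : Icc (0:ℝ) x ×ˢ Icc (0:ℝ) 1
        = (Prod.fst ⁻¹' Icc (0:ℝ) x) ∩ (Prod.snd ⁻¹' Icc (0:ℝ) 1) := Set.prod_eq _ _
    rw [heq, measure_inter_conull hBc, hA, ENNReal.toReal_ofReal h0]
  have hprobμ : IsProbabilityMeasure μ := hprob
  -- term-wise bound for the discrepancy sup
  have hbdd : BddAbove (Set.range fun r : ℝ × ℝ =>
      |(empMeasure P (Icc 0 r.1 ×ˢ Icc 0 r.2)).toReal -
        (μ (Icc 0 r.1 ×ˢ Icc 0 r.2)).toReal|) := by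
    refine ⟨2, ?_⟩
    rintro z ⟨r, rfl⟩
    have h1 : (empMeasure P (Icc 0 r.1 ×ˢ Icc 0 r.2)).toReal ≤ 1 := by
      rw [empMeasure_apply_count hn P (hmeas r.1 r.2), div_le_one hnR]
      have : (Finset.univ.filter fun i => P i ∈ Icc 0 r.1 ×ˢ Icc 0 r.2).card ≤ n := by
        simpa using Finset.card_filter_le Finset.univ
          (fun i => P i ∈ Icc 0 r.1 ×ˢ Icc 0 r.2)
      exact_mod_cast this
    have h10 : 0 ≤ (empMeasure P (Icc 0 r.1 ×ˢ Icc 0 r.2)).toReal := ENNReal.toReal_nonneg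
    have h2 : (μ (Icc 0 r.1 ×ˢ Icc 0 r.2)).toReal ≤ 1 := by
      have := prob_le_one (μ := μ) (s := Icc 0 r.1 ×ˢ Icc 0 r.2)
      calc (μ (Icc 0 r.1 ×ˢ Icc 0 r.2)).toReal ≤ (1 : ENNReal).toReal :=
            ENNReal.toReal_mono ENNReal.one_ne_top this
        _ = 1 := by simp
    have h20 : 0 ≤ (μ (Icc 0 r.1 ×ˢ Icc 0 r.2)).toReal := ENNReal.toReal_nonneg
    rw [abs_le]
    constructor <;> linarith
  -- the count of P in a vertical strip is close to n*x
  have hstrip : ∀ x : ℝ, 0 ≤ x → x ≤ 1 →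
      |((Finset.univ.filter fun i => (P i).1 ≤ x).card : ℝ) - n * x| < C := by
    intro x h0 h1
    have hterm : |(empMeasure P (Icc 0 x ×ˢ Icc 0 (1:ℝ))).toReal -
        (μ (Icc 0 x ×ˢ Icc 0 (1:ℝ))).toReal| ≤ dStar (empMeasure P) μ :=
      le_ciSup hbdd (x, (1:ℝ))
    have hfil : (Finset.univ.filter fun i => P i ∈ Icc (0:ℝ) x ×ˢ Icc (0:ℝ) 1)
        = Finset.univ.filter fun i => (P i).1 ≤ x := by
      apply Finset.filter_congr
      intro i _
      simp only [Set.mem_prod, Set.mem_Icc]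
      exact ⟨fun h => h.1.2, fun h => ⟨⟨hx0 i, h⟩, hy0 i, hy1 i⟩⟩
    have h2 : |((Finset.univ.filter fun i => (P i).1 ≤ x).card : ℝ)/n - x| < C / n := by
      calc |((Finset.univ.filter fun i => (P i).1 ≤ x).card : ℝ)/n - x|
          = |(empMeasure P (Icc 0 x ×ˢ Icc 0 (1:ℝ))).toReal -
              (μ (Icc 0 x ×ˢ Icc 0 (1:ℝ))).toReal| := by
            rw [empMeasure_apply_count hn P (hmeas x 1), hfil, hmu_strip x h0 h1]
        _ ≤ dStar (empMeasure P) μ := hterm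
        _ < C / n := hdisc
    have h3 : ((Finset.univ.filter fun i => (P i).1 ≤ x).card : ℝ)/n - x
        = (((Finset.univ.filter fun i => (P i).1 ≤ x).card : ℝ) - n * x) / n := by
      field_simp
    rw [h3, abs_div, abs_of_pos hnR, div_lt_div_iff_of_pos_right hnR] at h2
    exact h2
  -- count of the regularized x-coordinates in a strip
  have hBcard : ∀ x : ℝ, 0 ≤ x → x ≤ 1 →
      n * x - 1 ≤ ((Finset.univ.filter fun i : Fin n => (((i:ℕ):ℝ)+1)/n ≤ x).card : ℝ) ∧
      ((Finset.univ.filter fun i : Fin n => (((i:ℕ):ℝ)+1)/n ≤ x).card : ℝ) ≤ n * x := by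
    intro x h0 h1
    set t : ℝ := n * x with ht
    have ht0 : 0 ≤ t := by positivity
    have htn : t ≤ n := by nlinarith
    have hmem : ∀ i : Fin n, ((((i:ℕ):ℝ)+1)/n ≤ x ↔ (i:ℕ) + 1 ≤ ⌊t⌋₊) := by
      intro i
      rw [div_le_iff₀ hnR, Nat.le_floor_iff ht0]
      constructor
      · intro h; push_cast; rw [ht]; linarith
      · intro h; push_cast at h; rw [ht] at h; linarith
    constructor
    · -- lower bound via injection from range (min n ⌊t⌋₊)
      have hcard : min n ⌊t⌋₊ ≤
          (Finset.univ.filter fun i : Fin n => (((i:ℕ):ℝ)+1)/n ≤ x).card := by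
        have := Finset.card_le_card_of_injOn
          (f := fun j : ℕ => (⟨j % n, Nat.mod_lt j hn⟩ : Fin n))
          (s := Finset.range (min n ⌊t⌋₊))
          (t := Finset.univ.filter fun i : Fin n => (((i:ℕ):ℝ)+1)/n ≤ x)
          ?_ ?_
        · simpa using this
        · intro j hj
          rw [Finset.mem_coe, Finset.mem_range] at hj
          have hjn : j < n := lt_of_lt_of_le hj (min_le_left _ _)
          have hjt : j < ⌊t⌋₊ := lt_of_lt_of_le hj (min_le_right _ _)
          rw [Finset.mem_coe, Finset.mem_filter]
          refine ⟨Finset.mem_univ _, ?_⟩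
          rw [hmem]
          simp only [Nat.mod_eq_of_lt hjn]
          omega
        · intro a ha b hb hab
          rw [Finset.coe_range, Set.mem_Iio] at ha hb
          have han : a < n := lt_of_lt_of_le ha (min_le_left _ _)
          have hbn : b < n := lt_of_lt_of_le hb (min_le_left _ _)
          have := congrArg Fin.val hab
          simpa [Nat.mod_eq_of_lt han, Nat.mod_eq_of_lt hbn] using this
      have hmin : t - 1 ≤ (min n ⌊t⌋₊ : ℕ) := by
        rcases le_total (⌊t⌋₊ : ℕ) n with h | h
        · rw [min_eq_right h]
          have := Nat.lt_floor_add_one t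
          push_cast at this ⊢
          linarith
        · rw [min_eq_left h]
          push_cast
          linarith
      calc t - 1 ≤ (min n ⌊t⌋₊ : ℕ) := hmin
        _ ≤ _ := by exact_mod_cast hcard
    · -- upper bound via injection into range ⌊t⌋₊
      have hcard : (Finset.univ.filter fun i : Fin n => (((i:ℕ):ℝ)+1)/n ≤ x).card
          ≤ ⌊t⌋₊ := by
        have := Finset.card_le_card_of_injOn
          (f := fun i : Fin n => (i:ℕ))
          (s := Finset.univ.filter fun i : Fin n => (((i:ℕ):ℝ)+1)/n ≤ x)
          (t := Finset.range ⌊t⌋₊)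
          ?_ ?_
        · simpa using this
        · intro i hi
          rw [Finset.mem_coe, Finset.mem_filter, hmem] at hi
          simp only [Finset.mem_coe, Finset.mem_range]
          omega
        · intro a _ b _ hab
          exact Fin.val_injective hab
      calc ((Finset.univ.filter fun i : Fin n => (((i:ℕ):ℝ)+1)/n ≤ x).card : ℝ)
          ≤ (⌊t⌋₊ : ℝ) := by exact_mod_cast hcard
        _ ≤ t := Nat.floor_le ht0
  -- key counting estimate for 0 ≤ x ≤ 1
  have key : ∀ x y : ℝ, 0 ≤ x → x ≤ 1 →
      |((Finset.univ.filter fun i => P i ∈ Icc 0 x ×ˢ Icc 0 y).card : ℝ) -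
        ((Finset.univ.filter fun i => P' i ∈ Icc 0 x ×ˢ Icc 0 y).card : ℝ)| < C + 1 := by
    intro x y h0 h1
    set A := Finset.univ.filter fun i : Fin n => (P i).1 ≤ x with hA
    set B := Finset.univ.filter fun i : Fin n => (((i:ℕ):ℝ)+1)/n ≤ x with hB
    set Y := Finset.univ.filter fun i : Fin n => 0 ≤ (P i).2 ∧ (P i).2 ≤ y with hY
    have hPfil : (Finset.univ.filter fun i => P i ∈ Icc 0 x ×ˢ Icc 0 y) = A ∩ Y := by
      rw [hA, hY, ← Finset.filter_and]
      apply Finset.filter_congr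
      intro i _
      simp only [Set.mem_prod, Set.mem_Icc]
      exact ⟨fun h => ⟨h.1.2, h.2⟩, fun h => ⟨⟨hx0 i, h.1⟩, h.2⟩⟩
    have hP'fil : (Finset.univ.filter fun i => P' i ∈ Icc 0 x ×ˢ Icc 0 y) = B ∩ Y := by
      rw [hB, hY, ← Finset.filter_and]
      apply Finset.filter_congr
      intro i _
      rw [hP' i]
      simp only [Set.mem_prod, Set.mem_Icc]
      exact ⟨fun h => ⟨h.1.2, h.2⟩, fun h => ⟨⟨hq0 i, h.1⟩, h.2⟩⟩
    have hAdc : ∀ ⦃i j : Fin n⦄, i ≤ j → j ∈ A → i ∈ A := by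
      intro i j hij hj
      rw [hA, Finset.mem_filter] at *
      exact ⟨Finset.mem_univ _, le_trans (hsorted.monotone hij) hj.2⟩
    have hBdc : ∀ ⦃i j : Fin n⦄, i ≤ j → j ∈ B → i ∈ B := by
      intro i j hij hj
      rw [hB, Finset.mem_filter] at *
      refine ⟨Finset.mem_univ _, le_trans ?_ hj.2⟩
      have : ((i:ℕ):ℝ) ≤ ((j:ℕ):ℝ) := by exact_mod_cast hij
      gcongr
    have hABle : |((A ∩ Y).card : ℝ) - ((B ∩ Y).card : ℝ)|
        ≤ |(A.card : ℝ) - (B.card : ℝ)| := by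
      rcases initial_comparable hAdc hBdc with hsub | hsub
      · exact inter_card_abs_le hsub
      · rw [abs_sub_comm, abs_sub_comm (A.card : ℝ)]
        exact inter_card_abs_le hsub
    have h5 : |(A.card:ℝ) - n*x| < C := hstrip x h0 h1
    have h6 := hBcard x h0 h1
    rw [hPfil, hP'fil]
    refine lt_of_le_of_lt hABle ?_
    rw [abs_lt] at h5 ⊢
    obtain ⟨h6a, h6b⟩ := h6
    constructor <;> linarith [h5.1, h5.2]
  -- part 1 in full generality
  have part1 : ∀ x y : ℝ,
      |((Finset.univ.filter fun i => P i ∈ Icc 0 x ×ˢ Icc 0 y).card : ℝ) -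
        ((Finset.univ.filter fun i => P' i ∈ Icc 0 x ×ˢ Icc 0 y).card : ℝ)| < C + 1 := by
    intro x y
    by_cases h0 : 0 ≤ x
    · have hmin0 : 0 ≤ min x 1 := le_min h0 zero_le_one
      have hmin1 : min x 1 ≤ 1 := min_le_right _ _
      have e1 : (Finset.univ.filter fun i => P i ∈ Icc 0 x ×ˢ Icc 0 y)
          = Finset.univ.filter fun i => P i ∈ Icc 0 (min x 1) ×ˢ Icc 0 y := by
        apply Finset.filter_congr
        intro i _
        simp only [Set.mem_prod, Set.mem_Icc, le_min_iff]
        constructor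
        · rintro ⟨⟨ha, hb⟩, hc⟩; exact ⟨⟨ha, hb, hx1 i⟩, hc⟩
        · rintro ⟨⟨ha, hb, -⟩, hc⟩; exact ⟨⟨ha, hb⟩, hc⟩
      have e2 : (Finset.univ.filter fun i => P' i ∈ Icc 0 x ×ˢ Icc 0 y)
          = Finset.univ.filter fun i => P' i ∈ Icc 0 (min x 1) ×ˢ Icc 0 y := by
        apply Finset.filter_congr
        intro i _
        rw [hP' i]
        simp only [Set.mem_prod, Set.mem_Icc, le_min_iff]
        constructor
        · rintro ⟨⟨ha, hb⟩, hc⟩; exact ⟨⟨ha, hb, hq1 i⟩, hc⟩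
        · rintro ⟨⟨ha, hb, -⟩, hc⟩; exact ⟨⟨ha, hb⟩, hc⟩
      rw [e1, e2]
      exact key (min x 1) y hmin0 hmin1
    · push_neg at h0
      have e1 : (Finset.univ.filter fun i => P i ∈ Icc 0 x ×ˢ Icc 0 y) = ∅ := by
        rw [Finset.filter_eq_empty_iff]
        intro i _
        rw [Set.mem_prod, Set.mem_Icc, Set.mem_Icc]
        rintro ⟨⟨ha, hb⟩, -⟩
        linarith
      have e2 : (Finset.univ.filter fun i => P' i ∈ Icc 0 x ×ˢ Icc 0 y) = ∅ := by
        rw [Finset.filter_eq_empty_iff]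
        intro i _
        rw [hP' i, Set.mem_prod, Set.mem_Icc, Set.mem_Icc]
        rintro ⟨⟨ha, hb⟩, -⟩
        have := hq0 i
        linarith
      rw [e1, e2]
      simp only [Finset.card_empty, Nat.cast_zero, sub_zero, abs_zero]
      linarith
  refine ⟨part1, ?_⟩
  -- part 2: the sup bound
  set M : ℕ := ⌈C + 1⌉₊ - 1 with hM
  have hceil1 : 1 ≤ ⌈C + 1⌉₊ := Nat.one_le_ceil_iff.mpr (by linarith)
  have hMlt : (M:ℝ) < C + 1 := Nat.lt_ceil.mp (by omega)
  have hsup : dStar (empMeasure P) (empMeasure P') ≤ (M:ℝ) / n := by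
    unfold dStar
    apply ciSup_le
    intro r
    rw [empMeasure_apply_count hn P (hmeas r.1 r.2),
      empMeasure_apply_count hn P' (hmeas r.1 r.2)]
    have hab := part1 r.1 r.2
    set a := (Finset.univ.filter fun i => P i ∈ Icc 0 r.1 ×ˢ Icc 0 r.2).card with ha
    set b := (Finset.univ.filter fun i => P' i ∈ Icc 0 r.1 ×ˢ Icc 0 r.2).card with hb
    have habs : ∃ d : ℕ, (d:ℝ) = |(a:ℝ) - (b:ℝ)| := by
      rcases le_total a b with h | h
      · refine ⟨b - a, ?_⟩
        rw [Nat.cast_sub h, abs_sub_comm,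
          abs_of_nonneg (sub_nonneg.mpr (by exact_mod_cast h))]
      · refine ⟨a - b, ?_⟩
        rw [Nat.cast_sub h, abs_of_nonneg (sub_nonneg.mpr (by exact_mod_cast h))]
    obtain ⟨d, hd⟩ := habs
    have hdlt : d < ⌈C + 1⌉₊ := Nat.lt_ceil.mpr (by rw [hd]; exact hab)
    have hdM : (d:ℝ) ≤ M := by exact_mod_cast (by omega : d ≤ M)
    calc |(a:ℝ)/n - (b:ℝ)/n| = |(a:ℝ) - (b:ℝ)| / n := by
          rw [← sub_div, abs_div, abs_of_pos hnR]
      _ ≤ (M:ℝ) / n := by rw [← hd]; gcongr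
  refine lt_of_le_of_lt hsup ?_
  rw [div_lt_div_iff_of_pos_right hnR]
  exact hMlt
end

section
/- Let P ⊆ [0,1]² be an n-point set and μ a permuton with d*_□(μ_P, μ) < C/n. Let π(P) ∈ Sym(n) be the pattern determined by P (reading heights left to right), identified with the point set {(i/n, π(P)(i)/n)}. Then d*_□(μ_P, μ_{π(P)}) < (2C+3)/n. -/
open MeasureTheory Set Filter Topology

open scoped Classical

lemma emp_apply {n : ℕ} (P : Fin n → ℝ × ℝ) {S : Set (ℝ × ℝ)}
    [DecidablePred fun i : Fin n => P i ∈ S]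
    (hS : MeasurableSet S) :
    (empMeasure P S).toReal
      = ((Finset.univ.filter fun i => P i ∈ S).card : ℝ) / n := by
  rw [empMeasure, Measure.smul_apply, Measure.finset_sum_apply]
  have h1 : ∑ i : Fin n, Measure.dirac (P i) S
      = ((Finset.univ.filter fun i => P i ∈ S).card : ENNReal) := by
    simp only [Measure.dirac_apply' _ hS, Set.indicator_apply, Pi.one_apply]
    rw [Finset.sum_boole]
  rw [h1]
  simp only [smul_eq_mul, ENNReal.toReal_mul, ENNReal.toReal_inv, ENNReal.toReal_natCast]
  ring

lemma filter_perm_card {n : ℕ} (σ : Equiv.Perm (Fin n)) (p : Fin n → Prop)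
    [DecidablePred p] :
    (Finset.univ.filter fun i => p (σ i)).card = (Finset.univ.filter p).card := by
  rw [← Fintype.card_subtype, ← Fintype.card_subtype]
  exact Fintype.card_congr (σ.subtypeEquiv fun i => Iff.rfl)

lemma lower_char {n : ℕ} (q : Fin n → Prop) [DecidablePred q]
    (h : ∀ i j : Fin n, i ≤ j → q j → q i) (i : Fin n) :
    q i ↔ (i : ℕ) < (Finset.univ.filter q).card := by
  constructor
  · intro hi
    have hsub : Finset.Iic i ⊆ Finset.univ.filter q := by
      intro j hj
      simp only [Finset.mem_Iic] at hj
      simp only [Finset.mem_filter, Finset.mem_univ, true_and]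
      exact h j i hj hi
    have := Finset.card_le_card hsub
    rw [Fin.card_Iic] at this
    omega
  · intro hi
    by_contra hq
    have hsub : Finset.univ.filter q ⊆ Finset.Iio i := by
      intro j hj
      simp only [Finset.mem_filter, Finset.mem_univ, true_and] at hj
      simp only [Finset.mem_Iio]
      by_contra hij
      exact hq (h i j (le_of_not_gt hij) hj)
    have := Finset.card_le_card hsub
    rw [Fin.card_Iio] at this
    omega

lemma card_and_le {n : ℕ} (p q p' q' : Fin n → Prop)
    [DecidablePred p] [DecidablePred q] [DecidablePred p'] [DecidablePred q'] :
    (Finset.univ.filter fun i => p i ∧ q i).card ≤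
      (Finset.univ.filter fun i => p' i ∧ q' i).card
      + (Finset.univ.filter fun i => p i ∧ ¬ p' i).card
      + (Finset.univ.filter fun i => q i ∧ ¬ q' i).card := by
  have hsub : (Finset.univ.filter fun i => p i ∧ q i) ⊆
      ((Finset.univ.filter fun i => p' i ∧ q' i)
        ∪ (Finset.univ.filter fun i => p i ∧ ¬ p' i))
        ∪ (Finset.univ.filter fun i => q i ∧ ¬ q' i) := by
    intro i hi
    simp only [Finset.mem_filter, Finset.mem_univ, true_and, Finset.mem_union] at hi ⊢
    by_cases h1 : p' i
    · by_cases h2 : q' i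
      · exact Or.inl (Or.inl ⟨h1, h2⟩)
      · exact Or.inr ⟨hi.2, h2⟩
    · exact Or.inl (Or.inr ⟨hi.1, h1⟩)
  calc (Finset.univ.filter fun i => p i ∧ q i).card ≤ _ := Finset.card_le_card hsub
    _ ≤ _ := by
        refine le_trans (Finset.card_union_le _ _) ?_
        exact Nat.add_le_add_right (Finset.card_union_le _ _) _

lemma card_band {n : ℕ} (f : Fin n → ℕ) (hf : Function.Injective f) (l u : ℕ) :
    (Finset.univ.filter fun i => l ≤ f i ∧ f i < u).card ≤ u - l := by
  have hsub : (Finset.univ.filter fun i => l ≤ f i ∧ f i < u).image f ⊆ Finset.Ico l u := by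
    intro m hm
    simp only [Finset.mem_image, Finset.mem_filter] at hm
    obtain ⟨i, ⟨-, h1, h2⟩, rfl⟩ := hm
    exact Finset.mem_Ico.mpr ⟨h1, h2⟩
  have h2 := Finset.card_le_card hsub
  rwa [Finset.card_image_of_injective _ hf, Nat.card_Ico] at h2

lemma permuton_marg_x {μ : Measure (ℝ × ℝ)} (hμ : IsPermuton μ) {x : ℝ} (hx : 0 ≤ x) :
    (μ (Icc 0 x ×ˢ Icc 0 1)).toReal = min x 1 := by
  obtain ⟨hprob, hfst, hsnd⟩ := hμ
  have hnull : μ (Prod.snd ⁻¹' (Icc (0:ℝ) 1)ᶜ) = 0 := by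
    rw [← Measure.map_apply measurable_snd (measurableSet_Icc.compl), hsnd,
      Measure.restrict_apply (measurableSet_Icc.compl)]
    simp
  have key : μ (Icc 0 x ×ˢ Icc 0 1) = μ (Prod.fst ⁻¹' Icc 0 x) := by
    apply le_antisymm
    · exact measure_mono fun p hp => hp.1
    · have hsub : Prod.fst ⁻¹' Icc (0:ℝ) x ⊆
          (Icc 0 x ×ˢ Icc 0 1) ∪ Prod.snd ⁻¹' (Icc (0:ℝ) 1)ᶜ := by
        intro p hp
        by_cases h2 : p.2 ∈ Icc (0:ℝ) 1
        · exact Or.inl ⟨hp, h2⟩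
        · exact Or.inr h2
      calc μ (Prod.fst ⁻¹' Icc 0 x)
          ≤ μ ((Icc 0 x ×ˢ Icc 0 1) ∪ Prod.snd ⁻¹' (Icc (0:ℝ) 1)ᶜ) := measure_mono hsub
        _ ≤ μ (Icc 0 x ×ˢ Icc 0 1) + μ (Prod.snd ⁻¹' (Icc (0:ℝ) 1)ᶜ) := measure_union_le _ _
        _ = μ (Icc 0 x ×ˢ Icc 0 1) := by rw [hnull, add_zero]
  rw [key, ← Measure.map_apply measurable_fst measurableSet_Icc, hfst,
    Measure.restrict_apply measurableSet_Icc, Icc_inter_Icc]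
  simp only [max_self, Real.volume_Icc]
  rw [ENNReal.toReal_ofReal (by simp [hx])]
  simp

lemma permuton_marg_y {μ : Measure (ℝ × ℝ)} (hμ : IsPermuton μ) {y : ℝ} (hy : 0 ≤ y) :
    (μ (Icc 0 1 ×ˢ Icc 0 y)).toReal = min y 1 := by
  obtain ⟨hprob, hfst, hsnd⟩ := hμ
  have hnull : μ (Prod.fst ⁻¹' (Icc (0:ℝ) 1)ᶜ) = 0 := by
    rw [← Measure.map_apply measurable_fst (measurableSet_Icc.compl), hfst,
      Measure.restrict_apply (measurableSet_Icc.compl)]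
    simp
  have key : μ (Icc 0 1 ×ˢ Icc 0 y) = μ (Prod.snd ⁻¹' Icc 0 y) := by
    apply le_antisymm
    · exact measure_mono fun p hp => hp.2
    · have hsub : Prod.snd ⁻¹' Icc (0:ℝ) y ⊆
          (Icc 0 1 ×ˢ Icc 0 y) ∪ Prod.fst ⁻¹' (Icc (0:ℝ) 1)ᶜ := by
        intro p hp
        by_cases h2 : p.1 ∈ Icc (0:ℝ) 1
        · exact Or.inl ⟨h2, hp⟩
        · exact Or.inr h2
      calc μ (Prod.snd ⁻¹' Icc 0 y)
          ≤ μ ((Icc 0 1 ×ˢ Icc 0 y) ∪ Prod.fst ⁻¹' (Icc (0:ℝ) 1)ᶜ) := measure_mono hsub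
        _ ≤ μ (Icc 0 1 ×ˢ Icc 0 y) + μ (Prod.fst ⁻¹' (Icc (0:ℝ) 1)ᶜ) := measure_union_le _ _
        _ = μ (Icc 0 1 ×ˢ Icc 0 y) := by rw [hnull, add_zero]
  rw [key, ← Measure.map_apply measurable_snd measurableSet_Icc, hsnd,
    Measure.restrict_apply measurableSet_Icc, Icc_inter_Icc]
  simp only [max_self, Real.volume_Icc]
  rw [ENNReal.toReal_ofReal (by simp [hy])]
  simp

theorem pattern_regularization (n : ℕ) (hn : 0 < n) (C : ℝ) (hC : 0 < C)
    (μ : Measure (ℝ × ℝ)) (hμ : IsPermuton μ)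
    (P : Fin n → ℝ × ℝ)
    (hPin : ∀ i, P i ∈ Icc (0:ℝ) 1 ×ˢ Icc (0:ℝ) 1)
    (hsorted : StrictMono fun i => (P i).1)
    (hdisc : dStar (empMeasure P) μ < C / n)
    (σ : Equiv.Perm (Fin n))
    (hσ : ∀ i j, (P i).2 < (P j).2 ↔ σ i < σ j) :
    dStar (empMeasure P) (empMeasure (permPts n σ)) < (2 * C + 3) / n := by
  have hprob : IsProbabilityMeasure μ := hμ.1
  have hn0 : (0:ℝ) < n := Nat.cast_pos.mpr hn
  have hmeas : ∀ x y : ℝ, MeasurableSet (Icc (0:ℝ) x ×ˢ Icc (0:ℝ) y) :=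
    fun x y => measurableSet_Icc.prod measurableSet_Icc
  -- extract marginal discrepancy bounds
  have hbdd : BddAbove (Set.range fun r : ℝ × ℝ =>
      |(empMeasure P (Icc 0 r.1 ×ˢ Icc 0 r.2)).toReal -
        (μ (Icc 0 r.1 ×ˢ Icc 0 r.2)).toReal|) := by
    refine ⟨2, ?_⟩
    rintro v ⟨r, rfl⟩
    have h1 : (empMeasure P (Icc 0 r.1 ×ˢ Icc 0 r.2)).toReal ≤ 1 := by
      rw [emp_apply P (hmeas r.1 r.2), div_le_one hn0]
      exact_mod_cast (Finset.card_filter_le Finset.univ _).trans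
        (le_of_eq (by simp : (Finset.univ : Finset (Fin n)).card = n))
    have h11 : (0:ℝ) ≤ (empMeasure P (Icc 0 r.1 ×ˢ Icc 0 r.2)).toReal := ENNReal.toReal_nonneg
    have h2 : (μ (Icc 0 r.1 ×ˢ Icc 0 r.2)).toReal ≤ 1 := by
      calc (μ (Icc 0 r.1 ×ˢ Icc 0 r.2)).toReal ≤ (1 : ENNReal).toReal :=
            ENNReal.toReal_mono ENNReal.one_ne_top prob_le_one
        _ = 1 := ENNReal.toReal_one
    have h22 : (0:ℝ) ≤ (μ (Icc 0 r.1 ×ˢ Icc 0 r.2)).toReal := ENNReal.toReal_nonneg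
    exact abs_le.mpr ⟨by linarith, by linarith⟩
  rw [dStar] at hdisc ⊢
  have hterm : ∀ x y : ℝ,
      |(empMeasure P (Icc 0 x ×ˢ Icc 0 y)).toReal -
        (μ (Icc 0 x ×ˢ Icc 0 y)).toReal| < C / n :=
    fun x y => lt_of_le_of_lt (le_ciSup hbdd (x, y)) hdisc
  -- main per-rectangle bound
  have main : ∀ r : ℝ × ℝ,
      |(empMeasure P (Icc 0 r.1 ×ˢ Icc 0 r.2)).toReal -
        (empMeasure (permPts n σ) (Icc 0 r.1 ×ˢ Icc 0 r.2)).toReal| ≤ (2*C+2)/n := by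
    rintro ⟨x, y⟩
    show |(empMeasure P (Icc 0 x ×ˢ Icc 0 y)).toReal -
        (empMeasure (permPts n σ) (Icc 0 x ×ˢ Icc 0 y)).toReal| ≤ (2*C+2)/n
    have hpos : (0:ℝ) ≤ (2*C+2)/n := by positivity
    by_cases hx : 0 ≤ x
    · by_cases hy : 0 ≤ y
      · -- nondegenerate case
        set x' := min x 1 with hx'def
        set y' := min y 1 with hy'def
        have hx'0 : 0 ≤ x' := le_min hx one_pos.le
        have hy'0 : 0 ≤ y' := le_min hy one_pos.le
        set k := (Finset.univ.filter fun i => (P i).1 ≤ x).card with hkdef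
        set m := (Finset.univ.filter fun i => (P i).2 ≤ y).card with hmdef
        set a := ⌊(n:ℝ) * x'⌋₊ with hadef
        set b := ⌊(n:ℝ) * y'⌋₊ with hbdef
        -- discrepancy at (x, 1)
        have hk : |(k:ℝ) - n * x'| < C := by
          have h := hterm x 1
          rw [emp_apply P (hmeas x 1)] at h
          have hfilter : (Finset.univ.filter fun i => P i ∈ Icc (0:ℝ) x ×ˢ Icc (0:ℝ) 1)
              = Finset.univ.filter fun i => (P i).1 ≤ x := by
            apply Finset.filter_congr
            intro i _
            constructor
            · exact fun h' => h'.1.2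
            · exact fun h' => ⟨⟨(hPin i).1.1, h'⟩, (hPin i).2⟩
          rw [hfilter] at h
          rw [permuton_marg_x hμ hx] at h
          have heq : (k:ℝ) - n * x' = ((k:ℝ)/n - x') * n := by field_simp
          rw [heq, abs_mul, abs_of_pos hn0]
          calc |(k:ℝ)/n - x'| * n < (C/n) * n := by
                exact mul_lt_mul_of_pos_right h hn0
            _ = C := div_mul_cancel₀ C (ne_of_gt hn0)
        have hm : |(m:ℝ) - n * y'| < C := by
          have h := hterm 1 y
          rw [emp_apply P (hmeas 1 y)] at h
          have hfilter : (Finset.univ.filter fun i => P i ∈ Icc (0:ℝ) 1 ×ˢ Icc (0:ℝ) y)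
              = Finset.univ.filter fun i => (P i).2 ≤ y := by
            apply Finset.filter_congr
            intro i _
            constructor
            · exact fun h' => h'.2.2
            · exact fun h' => ⟨(hPin i).1, ⟨(hPin i).2.1, h'⟩⟩
          rw [hfilter] at h
          rw [permuton_marg_y hμ hy] at h
          have heq : (m:ℝ) - n * y' = ((m:ℝ)/n - y') * n := by field_simp
          rw [heq, abs_mul, abs_of_pos hn0]
          calc |(m:ℝ)/n - y'| * n < (C/n) * n := mul_lt_mul_of_pos_right h hn0
            _ = C := div_mul_cancel₀ C (ne_of_gt hn0)
        -- lower-set characterizations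
        have hkchar : ∀ i : Fin n, (P i).1 ≤ x ↔ (i:ℕ) < k := by
          intro i
          exact lower_char (fun i => (P i).1 ≤ x)
            (fun i j hij hj => le_trans (hsorted.monotone hij) hj) i
        have hmchar : ∀ i : Fin n, (P i).2 ≤ y ↔ ((σ i : Fin n):ℕ) < m := by
          intro i
          have hq : ∀ s t : Fin n, s ≤ t → (P (σ.symm t)).2 ≤ y → (P (σ.symm s)).2 ≤ y := by
            intro s t hst ht
            rcases eq_or_lt_of_le hst with h | h
            · subst h; exact ht
            · refine le_trans (le_of_lt ?_) ht
              rw [hσ (σ.symm s) (σ.symm t)]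
              simpa using h
          have hcard : (Finset.univ.filter fun s => (P (σ.symm s)).2 ≤ y).card = m := by
            rw [hmdef]
            rw [← filter_perm_card σ (fun s => (P (σ.symm s)).2 ≤ y)]
            apply congrArg Finset.card
            apply Finset.filter_congr
            intro i _
            simp
          have := lower_char (fun s => (P (σ.symm s)).2 ≤ y) hq (σ i)
          rw [hcard] at this
          simpa using this
        -- permPts x-condition
        have hachar : ∀ i : Fin n, ((i:ℕ):ℝ)+1 ≤ (n:ℝ) * x ↔ (i:ℕ) < a := by
          intro i
          constructor
          · intro h
            have hle1 : ((i:ℕ):ℝ)+1 ≤ (n:ℝ) := by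
              have := i.isLt
              have : ((i:ℕ):ℝ)+1 ≤ (n:ℝ) := by exact_mod_cast Nat.succ_le_of_lt i.isLt
              exact this
            have hle : ((i:ℕ):ℝ)+1 ≤ (n:ℝ) * x' := by
              rcases min_cases x 1 with ⟨he, _⟩ | ⟨he, _⟩
              · rw [hx'def, he]; exact h
              · rw [hx'def, he, mul_one]; exact hle1
            have : (i:ℕ)+1 ≤ a := Nat.le_floor (by push_cast; linarith)
            omega
          · intro h
            have h1 : ((i:ℕ):ℝ)+1 ≤ (a:ℝ) := by exact_mod_cast Nat.succ_le_of_lt h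
            have h2 : (a:ℝ) ≤ (n:ℝ) * x' := Nat.floor_le (by positivity)
            have h3 : (n:ℝ) * x' ≤ (n:ℝ) * x :=
              mul_le_mul_of_nonneg_left (min_le_left x 1) hn0.le
            linarith
        have hbchar : ∀ s : Fin n, ((s:ℕ):ℝ)+1 ≤ (n:ℝ) * y ↔ (s:ℕ) < b := by
          intro s
          constructor
          · intro h
            have hle1 : ((s:ℕ):ℝ)+1 ≤ (n:ℝ) := by exact_mod_cast Nat.succ_le_of_lt s.isLt
            have hle : ((s:ℕ):ℝ)+1 ≤ (n:ℝ) * y' := by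
              rcases min_cases y 1 with ⟨he, _⟩ | ⟨he, _⟩
              · rw [hy'def, he]; exact h
              · rw [hy'def, he, mul_one]; exact hle1
            have : (s:ℕ)+1 ≤ b := Nat.le_floor (by push_cast; linarith)
            omega
          · intro h
            have h1 : ((s:ℕ):ℝ)+1 ≤ (b:ℝ) := by exact_mod_cast Nat.succ_le_of_lt h
            have h2 : (b:ℝ) ≤ (n:ℝ) * y' := Nat.floor_le (by positivity)
            have h3 : (n:ℝ) * y' ≤ (n:ℝ) * y :=
              mul_le_mul_of_nonneg_left (min_le_left y 1) hn0.le
            linarith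
        -- counts
        set A := (Finset.univ.filter fun i => P i ∈ Icc (0:ℝ) x ×ˢ Icc (0:ℝ) y).card with hAdef
        set B := (Finset.univ.filter fun i =>
          permPts n σ i ∈ Icc (0:ℝ) x ×ˢ Icc (0:ℝ) y).card with hBdef
        have hAeq : A = (Finset.univ.filter fun i : Fin n =>
            (i:ℕ) < k ∧ ((σ i : Fin n):ℕ) < m).card := by
          apply congrArg Finset.card
          apply Finset.filter_congr
          intro i _
          constructor
          · intro h'
            exact ⟨(hkchar i).mp h'.1.2, (hmchar i).mp h'.2.2⟩
          · intro h'
            exact ⟨⟨(hPin i).1.1, (hkchar i).mpr h'.1⟩, ⟨(hPin i).2.1, (hmchar i).mpr h'.2⟩⟩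
        have hBeq : B = (Finset.univ.filter fun i : Fin n =>
            (i:ℕ) < a ∧ ((σ i : Fin n):ℕ) < b).card := by
          apply congrArg Finset.card
          apply Finset.filter_congr
          intro i _
          simp only [permPts, Set.mem_prod, Set.mem_Icc]
          constructor
          · rintro ⟨⟨-, h1⟩, -, h2⟩
            refine ⟨(hachar i).mp ?_, (hbchar (σ i)).mp ?_⟩
            · have := (div_le_iff₀ hn0).mp h1
              linarith [mul_comm x (n:ℝ)]
            · have := (div_le_iff₀ hn0).mp h2
              linarith [mul_comm y (n:ℝ)]
          · rintro ⟨h1, h2⟩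
            have ha1 := (hachar i).mpr h1
            have hb1 := (hbchar (σ i)).mpr h2
            refine ⟨⟨by positivity, ?_⟩, by positivity, ?_⟩
            · rw [div_le_iff₀ hn0]
              linarith [mul_comm x (n:ℝ)]
            · rw [div_le_iff₀ hn0]
              linarith [mul_comm y (n:ℝ)]
        -- difference counts
        have hD1 : (Finset.univ.filter fun i : Fin n => (i:ℕ) < k ∧ ¬ (i:ℕ) < a).card ≤ k - a := by
          refine le_trans (Finset.card_le_card ?_)
            (card_band (fun i : Fin n => (i:ℕ)) Fin.val_injective a k)
          intro i hi
          simp only [Finset.mem_filter, Finset.mem_univ, true_and] at hi ⊢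
          omega
        have hD2 : (Finset.univ.filter fun i : Fin n =>
            ((σ i : Fin n):ℕ) < m ∧ ¬ ((σ i : Fin n):ℕ) < b).card ≤ m - b := by
          refine le_trans (Finset.card_le_card ?_)
            (card_band (fun i : Fin n => ((σ i : Fin n):ℕ))
              (Fin.val_injective.comp σ.injective) b m)
          intro i hi
          simp only [Finset.mem_filter, Finset.mem_univ, true_and] at hi ⊢
          omega
        have hD1' : (Finset.univ.filter fun i : Fin n => (i:ℕ) < a ∧ ¬ (i:ℕ) < k).card ≤ a - k := by
          refine le_trans (Finset.card_le_card ?_)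
            (card_band (fun i : Fin n => (i:ℕ)) Fin.val_injective k a)
          intro i hi
          simp only [Finset.mem_filter, Finset.mem_univ, true_and] at hi ⊢
          omega
        have hD2' : (Finset.univ.filter fun i : Fin n =>
            ((σ i : Fin n):ℕ) < b ∧ ¬ ((σ i : Fin n):ℕ) < m).card ≤ b - m := by
          refine le_trans (Finset.card_le_card ?_)
            (card_band (fun i : Fin n => ((σ i : Fin n):ℕ))
              (Fin.val_injective.comp σ.injective) m b)
          intro i hi
          simp only [Finset.mem_filter, Finset.mem_univ, true_and] at hi ⊢
          omega
        have hABle : A ≤ B + (k - a) + (m - b) := by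
          rw [hAeq, hBeq]
          refine le_trans (card_and_le (fun i : Fin n => (i:ℕ) < k)
            (fun i : Fin n => ((σ i : Fin n):ℕ) < m) (fun i : Fin n => (i:ℕ) < a)
            (fun i : Fin n => ((σ i : Fin n):ℕ) < b)) ?_
          exact Nat.add_le_add (Nat.add_le_add le_rfl hD1) hD2
        have hBAle : B ≤ A + (a - k) + (b - m) := by
          rw [hAeq, hBeq]
          refine le_trans (card_and_le (fun i : Fin n => (i:ℕ) < a)
            (fun i : Fin n => ((σ i : Fin n):ℕ) < b) (fun i : Fin n => (i:ℕ) < k)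
            (fun i : Fin n => ((σ i : Fin n):ℕ) < m)) ?_
          exact Nat.add_le_add (Nat.add_le_add le_rfl hD1') hD2'
        -- real bounds on the differences
        have hfla : (a:ℝ) ≤ (n:ℝ) * x' := Nat.floor_le (by positivity)
        have hflb : (b:ℝ) ≤ (n:ℝ) * y' := Nat.floor_le (by positivity)
        have hfa : (n:ℝ) * x' < (a:ℝ) + 1 := Nat.lt_floor_add_one _
        have hfb : (n:ℝ) * y' < (b:ℝ) + 1 := Nat.lt_floor_add_one _
        have hk1 := (abs_lt.mp hk).1
        have hk2 := (abs_lt.mp hk).2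
        have hm1 := (abs_lt.mp hm).1
        have hm2 := (abs_lt.mp hm).2
        have hka : ((k - a : ℕ):ℝ) < C + 1 := by
          rcases le_or_gt a k with hle | hlt
          · rw [Nat.cast_sub hle]
            linarith
          · rw [Nat.sub_eq_zero_of_le hlt.le]
            simp only [Nat.cast_zero]
            linarith
        have hmb : ((m - b : ℕ):ℝ) < C + 1 := by
          rcases le_or_gt b m with hle | hlt
          · rw [Nat.cast_sub hle]
            linarith
          · rw [Nat.sub_eq_zero_of_le hlt.le]
            simp only [Nat.cast_zero]
            linarith
        have hak : ((a - k : ℕ):ℝ) < C := by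
          rcases le_or_gt k a with hle | hlt
          · rw [Nat.cast_sub hle]
            linarith
          · rw [Nat.sub_eq_zero_of_le hlt.le]
            simp only [Nat.cast_zero]
            linarith
        have hbm : ((b - m : ℕ):ℝ) < C := by
          rcases le_or_gt m b with hle | hlt
          · rw [Nat.cast_sub hle]
            linarith
          · rw [Nat.sub_eq_zero_of_le hlt.le]
            simp only [Nat.cast_zero]
            linarith
        have hABr : (A:ℝ) ≤ (B:ℝ) + (C+1) + (C+1) := by
          have hc : (A:ℝ) ≤ (B:ℝ) + ((k - a : ℕ):ℝ) + ((m - b : ℕ):ℝ) := by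
            exact_mod_cast hABle
          linarith
        have hBAr : (B:ℝ) ≤ (A:ℝ) + C + C := by
          have hc : (B:ℝ) ≤ (A:ℝ) + ((a - k : ℕ):ℝ) + ((b - m : ℕ):ℝ) := by
            exact_mod_cast hBAle
          linarith
        rw [emp_apply P (hmeas x y), emp_apply (permPts n σ) (hmeas x y), ← hAdef, ← hBdef,
          div_sub_div_same, abs_div, abs_of_pos hn0]
        have habs : |(A:ℝ) - (B:ℝ)| ≤ 2*C + 2 :=
          abs_le.mpr ⟨by linarith, by linarith⟩
        exact div_le_div_of_nonneg_right habs hn0.le |>.trans le_rfl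
      · -- y < 0
        rw [Set.Icc_eq_empty (by linarith : ¬ (0:ℝ) ≤ y), Set.prod_empty]
        simpa using hpos
    · rw [Set.Icc_eq_empty (by linarith : ¬ (0:ℝ) ≤ x), Set.empty_prod]
      simpa using hpos
  calc (⨆ r : ℝ × ℝ, |(empMeasure P (Icc 0 r.1 ×ˢ Icc 0 r.2)).toReal -
        (empMeasure (permPts n σ) (Icc 0 r.1 ×ˢ Icc 0 r.2)).toReal|) ≤ (2*C+2)/n :=
      ciSup_le main
    _ < (2*C+3)/n := by
      rw [div_lt_div_iff₀ hn0 hn0]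
      nlinarith
end

section
/- If a permuton μ satisfies D_n(μ) = o(1/n) along some subsequence of n, i.e., there exist integers n_1 < n_2 < ⋯ and permutations π_k ∈ Sym(n_k) with n_k · d_□(μ, ĥπ_k) → 0, then there is a measure-preserving bijection f between full-measure subsets of [0,1] such that μ is the pushforward of Lebesgue measure under x ↦ (x, f(x)). -/
open MeasureTheory Set Filter Topology

/-- the `i`-th cell of the permutation grid -/
def cellSet (n : ℕ) (π : Equiv.Perm (Fin n)) (i : Fin n) : Set (ℝ × ℝ) :=
  Icc (((i : ℕ) : ℝ) / n) ((((i : ℕ) : ℝ) + 1) / n) ×ˢ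
    Icc (((π i : ℕ) : ℝ) / n) ((((π i : ℕ) : ℝ) + 1) / n)

lemma cellSet_measurable (n : ℕ) (π : Equiv.Perm (Fin n)) (i : Fin n) :
    MeasurableSet (cellSet n π i) :=
  measurableSet_Icc.prod measurableSet_Icc

lemma hatPerm_def (n : ℕ) (π : Equiv.Perm (Fin n)) :
    hatPerm n π = (n : ENNReal) • volume.restrict (⋃ i, cellSet n π i) := rfl

lemma ofReal_one_div_nat {n : ℕ} (hn : 0 < n) :
    ENNReal.ofReal (1 / (n : ℝ)) = ((n : ENNReal))⁻¹ := by
  rw [one_div, ENNReal.ofReal_inv_of_pos (by exact_mod_cast hn), ENNReal.ofReal_natCast]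

lemma volume_cellSet {n : ℕ} (hn : 0 < n) (π : Equiv.Perm (Fin n)) (i : Fin n) :
    volume (cellSet n π i) = ((n : ENNReal))⁻¹ * ((n : ENNReal))⁻¹ := by
  have hne : (n : ℝ) ≠ 0 := by exact_mod_cast hn.ne'
  have hl : ∀ a : ℝ, (a + 1) / n - a / n = 1 / n := by
    intro a; field_simp; ring
  rw [cellSet, Measure.volume_eq_prod, Measure.prod_prod, Real.volume_Icc, Real.volume_Icc,
    hl, hl, ofReal_one_div_nat hn]

lemma hatPerm_cell {n : ℕ} (hn : 0 < n) (π : Equiv.Perm (Fin n)) (i : Fin n) :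
    hatPerm n π (cellSet n π i) = ((n : ENNReal))⁻¹ := by
  have hsub : cellSet n π i ⊆ ⋃ j, cellSet n π j := subset_iUnion _ i
  rw [hatPerm_def, Measure.smul_apply, smul_eq_mul,
    Measure.restrict_apply (cellSet_measurable n π i), inter_eq_left.2 hsub,
    volume_cellSet hn, ← mul_assoc, ENNReal.mul_inv_cancel (by exact_mod_cast hn.ne')
      (ENNReal.natCast_ne_top n), one_mul]

lemma hatPerm_univ_le {n : ℕ} (hn : 0 < n) (π : Equiv.Perm (Fin n)) :
    hatPerm n π univ ≤ 1 := by
  have h1 : volume (⋃ i, cellSet n π i) ≤ ((n : ENNReal))⁻¹ := by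
    refine le_trans (measure_iUnion_le _) ?_
    calc ∑' i : Fin n, volume (cellSet n π i)
        = ∑' _i : Fin n, ((n : ENNReal))⁻¹ * ((n : ENNReal))⁻¹ := by
          simp_rw [volume_cellSet hn]
      _ = (n : ENNReal) * (((n : ENNReal))⁻¹ * ((n : ENNReal))⁻¹) := by
          rw [tsum_fintype]; simp [Finset.sum_const, mul_comm]
      _ = ((n : ENNReal))⁻¹ := by
          rw [← mul_assoc, ENNReal.mul_inv_cancel (by exact_mod_cast hn.ne')
            (ENNReal.natCast_ne_top n), one_mul]
      _ ≤ ((n : ENNReal))⁻¹ := le_rfl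
  rw [hatPerm_def, Measure.smul_apply, smul_eq_mul, Measure.restrict_apply MeasurableSet.univ,
    univ_inter]
  calc (n : ENNReal) * volume (⋃ i, cellSet n π i) ≤ (n : ENNReal) * ((n : ENNReal))⁻¹ :=
        mul_le_mul_right h1 _
    _ = 1 := ENNReal.mul_inv_cancel (by exact_mod_cast hn.ne') (ENNReal.natCast_ne_top n)

lemma abs_sub_le_dRect (μ ν : Measure (ℝ × ℝ)) (hμ : μ univ ≤ 1) (hν : ν univ ≤ 1)
    (a b c d : ℝ) :
    |(μ (Icc a b ×ˢ Icc c d)).toReal - (ν (Icc a b ×ˢ Icc c d)).toReal| ≤ dRect μ ν := by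
  have key : ∀ (ρ : Measure (ℝ × ℝ)), ρ univ ≤ 1 → ∀ s : Set (ℝ × ℝ), (ρ s).toReal ≤ 1 := by
    intro ρ hρ s
    have h1 : ρ s ≤ 1 := le_trans (measure_mono (subset_univ s)) hρ
    simpa using ENNReal.toReal_mono ENNReal.one_ne_top h1
  have hbdd : BddAbove (Set.range fun r : ℝ × ℝ × ℝ × ℝ =>
      |(μ (Icc r.1 r.2.1 ×ˢ Icc r.2.2.1 r.2.2.2)).toReal -
        (ν (Icc r.1 r.2.1 ×ˢ Icc r.2.2.1 r.2.2.2)).toReal|) := by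
    refine ⟨2, ?_⟩
    rintro x ⟨r, rfl⟩
    have h1 := key μ hμ (Icc r.1 r.2.1 ×ˢ Icc r.2.2.1 r.2.2.2)
    have h2 := key ν hν (Icc r.1 r.2.1 ×ˢ Icc r.2.2.1 r.2.2.2)
    have h3 : (0:ℝ) ≤ (μ (Icc r.1 r.2.1 ×ˢ Icc r.2.2.1 r.2.2.2)).toReal := ENNReal.toReal_nonneg
    have h4 : (0:ℝ) ≤ (ν (Icc r.1 r.2.1 ×ˢ Icc r.2.2.1 r.2.2.2)).toReal := ENNReal.toReal_nonneg
    rw [abs_le]; constructor <;> linarith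
  exact le_ciSup hbdd (⟨a, b, c, d⟩ : ℝ × ℝ × ℝ × ℝ)

lemma dRect_nonneg (μ ν : Measure (ℝ × ℝ)) (hμ : μ univ ≤ 1) (hν : ν univ ≤ 1) :
    0 ≤ dRect μ ν := by
  have := abs_sub_le_dRect μ ν hμ hν 0 0 0 0
  exact le_trans (abs_nonneg _) this

lemma permuton_fst_apply {μ : Measure (ℝ × ℝ)} (hμ : IsPermuton μ) {s : Set ℝ}
    (hs : MeasurableSet s) : μ (Prod.fst ⁻¹' s) = volume.restrict (Icc 0 1) s := by
  rw [← hμ.2.1, Measure.map_apply measurable_fst hs]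

lemma permuton_snd_apply {μ : Measure (ℝ × ℝ)} (hμ : IsPermuton μ) {s : Set ℝ}
    (hs : MeasurableSet s) : μ (Prod.snd ⁻¹' s) = volume.restrict (Icc 0 1) s := by
  rw [← hμ.2.2, Measure.map_apply measurable_snd hs]

lemma permuton_fst_singleton {μ : Measure (ℝ × ℝ)} (hμ : IsPermuton μ) (a : ℝ) :
    μ (Prod.fst ⁻¹' {a}) = 0 := by
  rw [permuton_fst_apply hμ (measurableSet_singleton a)]
  exact le_antisymm (le_trans (Measure.restrict_apply_le _ _) (by simp)) (zero_le)

lemma permuton_snd_singleton {μ : Measure (ℝ × ℝ)} (hμ : IsPermuton μ) (a : ℝ) :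
    μ (Prod.snd ⁻¹' {a}) = 0 := by
  rw [permuton_snd_apply hμ (measurableSet_singleton a)]
  exact le_antisymm (le_trans (Measure.restrict_apply_le _ _) (by simp)) (zero_le)

lemma cell_inter_null {μ : Measure (ℝ × ℝ)} (hμ : IsPermuton μ) {n : ℕ} (hn : 0 < n)
    (π : Equiv.Perm (Fin n)) {i j : Fin n} (hij : i ≠ j) :
    μ (cellSet n π i ∩ cellSet n π j) = 0 := by
  have key : ∀ i j : Fin n, (i : ℕ) < (j : ℕ) → μ (cellSet n π i ∩ cellSet n π j) = 0 := by
    intro i j hij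
    have hnr : (0:ℝ) < n := by exact_mod_cast hn
    have hsub : cellSet n π i ∩ cellSet n π j ⊆ Prod.fst ⁻¹' Icc (((j:ℕ):ℝ)/n) ((((i:ℕ):ℝ)+1)/n) := by
      rintro p ⟨hpi, hpj⟩
      exact ⟨hpj.1.1, hpi.1.2⟩
    refine le_antisymm (le_trans (measure_mono hsub) ?_) (zero_le)
    rw [permuton_fst_apply hμ measurableSet_Icc]
    refine le_trans (Measure.restrict_apply_le _ _) ?_
    rw [Real.volume_Icc]
    have : (((i:ℕ):ℝ)+1)/n - ((j:ℕ):ℝ)/n ≤ 0 := by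
      have h1 : ((i:ℕ):ℝ) + 1 ≤ ((j:ℕ):ℝ) := by exact_mod_cast hij
      have h2 : (((i:ℕ):ℝ)+1)/n ≤ ((j:ℕ):ℝ)/n := by gcongr
      linarith
    simp [ENNReal.ofReal_eq_zero.2 this]
  rcases lt_or_gt_of_ne (fun h => hij (Fin.ext h)) with h | h
  · exact key i j h
  · rw [inter_comm]; exact key j i h

lemma sum_measure_cells {μ : Measure (ℝ × ℝ)} (hμ : IsPermuton μ) {n : ℕ} (hn : 0 < n)
    (π : Equiv.Perm (Fin n)) :
    μ (⋃ i, cellSet n π i) = ∑ i, μ (cellSet n π i) := by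
  rw [measure_iUnion₀ ?_ (fun i => (cellSet_measurable n π i).nullMeasurableSet)]
  · exact tsum_fintype _
  · intro i j hij
    exact cell_inter_null hμ hn π hij

lemma measure_compl_cells {μ : Measure (ℝ × ℝ)} (hμ : IsPermuton μ) {n : ℕ} (hn : 0 < n)
    (π : Equiv.Perm (Fin n)) :
    μ ((⋃ i, cellSet n π i)ᶜ) ≤ ENNReal.ofReal ((n : ℝ) * dRect μ (hatPerm n π)) := by
  haveI hprob := hμ.1
  have hnr : (0:ℝ) < n := by exact_mod_cast hn
  set d := dRect μ (hatPerm n π) with hd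
  have hcell : ∀ i : Fin n, 1/(n:ℝ) - d ≤ (μ (cellSet n π i)).toReal := by
    intro i
    have h := abs_sub_le_dRect μ (hatPerm n π) (by simp) (hatPerm_univ_le hn π)
      (((i : ℕ) : ℝ) / n) ((((i : ℕ) : ℝ) + 1) / n)
      (((π i : ℕ) : ℝ) / n) ((((π i : ℕ) : ℝ) + 1) / n)
    have hcs : (Icc (((i : ℕ) : ℝ) / n) ((((i : ℕ) : ℝ) + 1) / n) ×ˢ
        Icc (((π i : ℕ) : ℝ) / n) ((((π i : ℕ) : ℝ) + 1) / n)) = cellSet n π i := rfl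
    rw [hcs, hatPerm_cell hn π i] at h
    have htr : (((n : ENNReal))⁻¹).toReal = 1/(n:ℝ) := by
      simp [ENNReal.toReal_inv, one_div]
    rw [htr] at h
    have := abs_le.1 h
    linarith [this.1]
  have hG : 1 - (n:ℝ) * d ≤ (μ (⋃ i, cellSet n π i)).toReal := by
    rw [sum_measure_cells hμ hn π]
    rw [ENNReal.toReal_sum (fun i _ => measure_ne_top μ _)]
    calc 1 - (n:ℝ) * d = ∑ _i : Fin n, (1/(n:ℝ) - d) := by
          rw [Finset.sum_const, Finset.card_univ, Fintype.card_fin, nsmul_eq_mul]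
          field_simp
      _ ≤ ∑ i, (μ (cellSet n π i)).toReal := Finset.sum_le_sum (fun i _ => hcell i)
  have hGmeas : MeasurableSet (⋃ i, cellSet n π i) :=
    MeasurableSet.iUnion (fun i => cellSet_measurable n π i)
  have hcompl : (μ ((⋃ i, cellSet n π i)ᶜ)).toReal ≤ (n:ℝ) * d := by
    have hsum : μ (⋃ i, cellSet n π i) + μ ((⋃ i, cellSet n π i)ᶜ) = 1 := by
      rw [measure_add_measure_compl hGmeas, measure_univ]
    have := congrArg ENNReal.toReal hsum
    rw [ENNReal.toReal_add (measure_ne_top μ _) (measure_ne_top μ _)] at this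
    simp only [measure_univ, ENNReal.toReal_one] at this
    linarith
  calc μ ((⋃ i, cellSet n π i)ᶜ)
      = ENNReal.ofReal ((μ ((⋃ i, cellSet n π i)ᶜ)).toReal) :=
        (ENNReal.ofReal_toReal (measure_ne_top μ _)).symm
    _ ≤ ENNReal.ofReal ((n : ℝ) * d) := ENNReal.ofReal_le_ofReal hcompl

/-- step function associated with a permutation -/
noncomputable def gstep (n : ℕ) (π : Equiv.Perm (Fin n)) (x : ℝ) : ℝ :=
  if h : (⌊x * n⌋).toNat < n then (((π ⟨(⌊x * n⌋).toNat, h⟩ : Fin n) : ℕ) : ℝ) / n else 0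

lemma gstep_measurable (n : ℕ) (π : Equiv.Perm (Fin n)) : Measurable (gstep n π) := by
  have : gstep n π = (fun m : ℤ =>
      if h : m.toNat < n then (((π ⟨m.toNat, h⟩ : Fin n) : ℕ) : ℝ) / n else (0:ℝ)) ∘
      (fun x : ℝ => ⌊x * n⌋) := rfl
  rw [this]
  exact (measurable_from_top).comp (Int.measurable_floor.comp (measurable_id.mul_const _))

lemma floor_eq_of_mem {n : ℕ} (hn : 0 < n) {x : ℝ} {i : ℕ} (hi : i < n)
    (h1 : ((i:ℕ):ℝ)/n < x) (h2 : x < (((i:ℕ):ℝ)+1)/n) : ⌊x * n⌋ = (i : ℤ) := by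
  have hnr : (0:ℝ) < n := by exact_mod_cast hn
  rw [Int.floor_eq_iff]
  constructor
  · have := (div_lt_iff₀ hnr).1 h1
    push_cast
    linarith
  · have := (lt_div_iff₀ hnr).1 h2
    push_cast
    push_cast at this
    linarith

lemma gstep_close {n : ℕ} (hn : 0 < n) (π : Equiv.Perm (Fin n)) {p : ℝ × ℝ}
    (hp : p ∈ ⋃ i, cellSet n π i)
    (hx : ∀ i : ℕ, i ≤ n → p.1 ≠ (i:ℝ)/n) (hy : ∀ i : ℕ, i ≤ n → p.2 ≠ (i:ℝ)/n) :
    |gstep n π p.1 - p.2| ≤ 1/n ∧ |gstep n π⁻¹ p.2 - p.1| ≤ 1/n := by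
  have hnr : (0:ℝ) < n := by exact_mod_cast hn
  obtain ⟨i, hi⟩ := mem_iUnion.1 hp
  obtain ⟨hpx, hpy⟩ := hi
  -- strict inequalities for x
  have hx1 : ((i:ℕ):ℝ)/n < p.1 := by
    rcases lt_or_eq_of_le hpx.1 with h | h
    · exact h
    · exact absurd h.symm (hx (i:ℕ) (le_of_lt i.isLt))
  have hx2 : p.1 < (((i:ℕ):ℝ)+1)/n := by
    rcases lt_or_eq_of_le hpx.2 with h | h
    · exact h
    · exfalso
      refine hx ((i:ℕ)+1) i.isLt ?_
      rw [h]; push_cast; ring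
  have hy1 : ((π i:ℕ):ℝ)/n < p.2 := by
    rcases lt_or_eq_of_le hpy.1 with h | h
    · exact h
    · exact absurd h.symm (hy ((π i):ℕ) (le_of_lt (π i).isLt))
  have hy2 : p.2 < (((π i:ℕ):ℝ)+1)/n := by
    rcases lt_or_eq_of_le hpy.2 with h | h
    · exact h
    · exfalso
      refine hy (((π i):ℕ)+1) (π i).isLt ?_
      rw [h]; push_cast; ring
  have hfx : ⌊p.1 * n⌋ = ((i:ℕ) : ℤ) := floor_eq_of_mem hn i.isLt hx1 hx2
  have hfy : ⌊p.2 * n⌋ = ((π i:ℕ) : ℤ) := floor_eq_of_mem hn (π i).isLt hy1 hy2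
  constructor
  · have hval : gstep n π p.1 = ((π i:ℕ):ℝ)/n := by
      rw [gstep, hfx]
      have ht : ((i:ℕ):ℤ).toNat = (i:ℕ) := Int.toNat_natCast _
      have hlt : ((i:ℕ):ℤ).toNat < n := by rw [ht]; exact i.isLt
      rw [dif_pos hlt]
      have heq : (⟨((i:ℕ):ℤ).toNat, hlt⟩ : Fin n) = i := Fin.ext (by simp [ht])
      rw [heq]
    rw [hval, abs_le]
    have hsplit : (((π i:ℕ):ℝ)+1)/n = ((π i:ℕ):ℝ)/n + 1/n := by ring
    rw [hsplit] at hy2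
    have hpos : 0 < 1/(n:ℝ) := by positivity
    exact ⟨by linarith, by linarith⟩
  · have hval : gstep n π⁻¹ p.2 = ((i:ℕ):ℝ)/n := by
      rw [gstep, hfy]
      have ht : (((π i:ℕ)):ℤ).toNat = ((π i):ℕ) := Int.toNat_natCast _
      have hlt : (((π i:ℕ)):ℤ).toNat < n := by rw [ht]; exact (π i).isLt
      rw [dif_pos hlt]
      have : (⟨(((π i:ℕ)):ℤ).toNat, hlt⟩ : Fin n) = π i := Fin.ext (by simp [ht])
      rw [this]
      simp
    rw [hval, abs_le]
    have hsplit : (((i:ℕ):ℝ)+1)/n = ((i:ℕ):ℝ)/n + 1/n := by ring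
    rw [hsplit] at hx2
    have hpos : 0 < 1/(n:ℝ) := by positivity
    exact ⟨by linarith, by linarith⟩

lemma eq_map_graph_fst (μ : Measure (ℝ × ℝ)) (f : ℝ → ℝ) (hf : Measurable f)
    (E : Set (ℝ × ℝ)) (hE : μ Eᶜ = 0) (hgraph : ∀ p ∈ E, p.2 = f p.1) :
    μ = Measure.map (fun x => (x, f x)) (μ.map Prod.fst) := by
  have hpair : Measurable fun x : ℝ => (x, f x) := measurable_id.prodMk hf
  ext s hs
  rw [Measure.map_apply hpair hs, Measure.map_apply measurable_fst (hpair hs)]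
  have h1 : μ s = μ (s ∩ E) := (measure_inter_conull hE).symm
  have h2 : μ (Prod.fst ⁻¹' ((fun x => (x, f x)) ⁻¹' s)) =
      μ (Prod.fst ⁻¹' ((fun x => (x, f x)) ⁻¹' s) ∩ E) := (measure_inter_conull hE).symm
  rw [h1, h2]
  congr 1
  ext p
  simp only [mem_inter_iff, mem_preimage, and_congr_left_iff]
  intro hpE
  have : (p.1, f p.1) = p := by
    have := hgraph p hpE
    exact Prod.ext rfl this.symm
  rw [this]

lemma eq_map_graph_snd (μ : Measure (ℝ × ℝ)) (g : ℝ → ℝ) (hg : Measurable g)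
    (E : Set (ℝ × ℝ)) (hE : μ Eᶜ = 0) (hgraph : ∀ p ∈ E, p.1 = g p.2) :
    μ = Measure.map (fun y => (g y, y)) (μ.map Prod.snd) := by
  have hpair : Measurable fun y : ℝ => (g y, y) := hg.prodMk measurable_id
  ext s hs
  rw [Measure.map_apply hpair hs, Measure.map_apply measurable_snd (hpair hs)]
  have h1 : μ s = μ (s ∩ E) := (measure_inter_conull hE).symm
  have h2 : μ (Prod.snd ⁻¹' ((fun y => (g y, y)) ⁻¹' s)) =
      μ (Prod.snd ⁻¹' ((fun y => (g y, y)) ⁻¹' s) ∩ E) := (measure_inter_conull hE).symm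
  rw [h1, h2]
  congr 1
  ext p
  simp only [mem_inter_iff, mem_preimage, and_congr_left_iff]
  intro hpE
  have : (g p.2, p.2) = p := by
    have := hgraph p hpE
    exact Prod.ext this.symm rfl
  rw [this]

/-- grid lines of level `n` -/
def gridLines (n : ℕ) : Set (ℝ × ℝ) :=
  {p : ℝ × ℝ | ∃ i : ℕ, i ≤ n ∧ (p.1 = (i:ℝ)/n ∨ p.2 = (i:ℝ)/n)}

lemma gridLines_null {μ : Measure (ℝ × ℝ)} (hμ : IsPermuton μ) (n : ℕ) :
    μ (gridLines n) = 0 := by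
  have hsub : gridLines n ⊆ ⋃ i : ℕ,
      (Prod.fst ⁻¹' {((i:ℝ)/n)} ∪ Prod.snd ⁻¹' {((i:ℝ)/n)}) := by
    rintro p ⟨i, _, h | h⟩
    · exact mem_iUnion.2 ⟨i, Or.inl h⟩
    · exact mem_iUnion.2 ⟨i, Or.inr h⟩
  refine le_antisymm (le_trans (measure_mono hsub) ?_) (zero_le)
  rw [measure_iUnion_null (fun i => ?_)]
  exact measure_union_null (permuton_fst_singleton hμ _) (permuton_snd_singleton hμ _)

lemma exists_lim_fun (u : ℕ → ℝ → ℝ) (hu : ∀ j, Measurable (u j)) :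
    ∃ f : ℝ → ℝ, Measurable f ∧
      ∀ x c, Tendsto (fun j => u j x) atTop (𝓝 c) → f x = c := by
  classical
  let A : Set ℝ := {x | ∃ c, Tendsto (fun j => u j x) atTop (𝓝 c)}
  have hAm : MeasurableSet A := measurableSet_exists_tendsto hu
  let h : ℕ → ℝ → ℝ := fun j => A.piecewise (u j) 0
  have hhm : ∀ j, Measurable (h j) := fun j =>
    Measurable.piecewise hAm (hu j) measurable_const
  let f : ℝ → ℝ := fun x => limUnder atTop (fun j => h j x)
  have hconv : ∀ x, Tendsto (fun j => h j x) atTop (𝓝 (f x)) := by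
    intro x
    by_cases hx : x ∈ A
    · obtain ⟨c, hc⟩ := id hx
      have he : (fun j => h j x) = fun j => u j x :=
        funext fun j => Set.piecewise_eq_of_mem _ _ _ hx
      have hth : Tendsto (fun j => h j x) atTop (𝓝 c) := by rw [he]; exact hc
      have hfx : f x = c := hth.limUnder_eq
      rw [hfx]; exact hth
    · have he : (fun j => h j x) = fun _ => (0:ℝ) :=
        funext fun j => Set.piecewise_eq_of_notMem _ _ _ hx
      have hth : Tendsto (fun j => h j x) atTop (𝓝 0) := by
        rw [he]; exact tendsto_const_nhds
      have hfx : f x = 0 := hth.limUnder_eq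
      rw [hfx]; exact hth
  refine ⟨f, measurable_of_tendsto_metrizable hhm (tendsto_pi_nhds.2 hconv), ?_⟩
  intro x c hc
  have hx : x ∈ A := ⟨c, hc⟩
  have he : (fun j => h j x) = fun j => u j x :=
    funext fun j => Set.piecewise_eq_of_mem _ _ _ hx
  have hth : Tendsto (fun j => h j x) atTop (𝓝 c) := by rw [he]; exact hc
  exact hth.limUnder_eq

lemma ofReal_half_pow (j : ℕ) :
    ENNReal.ofReal ((1/2:ℝ)^j) = ((2:ENNReal))⁻¹ ^ j := by
  rw [ENNReal.ofReal_pow (by norm_num)]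
  congr 1
  rw [one_div, ENNReal.ofReal_inv_of_pos (by norm_num)]
  norm_num

theorem superlinear_approx_implies_bijection (μ : Measure (ℝ × ℝ)) (hμ : IsPermuton μ)
    (nseq : ℕ → ℕ) (hmono : StrictMono nseq) (hpos : ∀ k, 0 < nseq k)
    (π : ∀ k, Equiv.Perm (Fin (nseq k)))
    (happrox : Tendsto (fun k => (nseq k : ℝ) * dRect μ (hatPerm (nseq k) (π k)))
      atTop (𝓝 0)) :
    ∃ (A B : Set ℝ) (f : ℝ → ℝ),
      A ⊆ Icc 0 1 ∧ B ⊆ Icc 0 1 ∧ MeasurableSet A ∧ MeasurableSet B ∧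
      volume A = 1 ∧ volume B = 1 ∧ Set.BijOn f A B ∧
      Measure.map f (volume.restrict A) = volume.restrict (Icc 0 1) ∧
      μ = Measure.map (fun x => (x, f x)) (volume.restrict A) := by
  classical
  haveI hprob : IsProbabilityMeasure μ := hμ.1
  set ν : Measure ℝ := volume.restrict (Icc (0:ℝ) 1) with hν
  obtain ⟨φ, hφmono, hφ⟩ : ∃ φ : ℕ → ℕ, StrictMono φ ∧ ∀ j,
      (nseq (φ j) : ℝ) * dRect μ (hatPerm (nseq (φ j)) (π (φ j))) < (1/2)^j := by
    apply Filter.extraction_forall_of_eventually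
      (P := fun j k => (nseq k : ℝ) * dRect μ (hatPerm (nseq k) (π k)) < (1/2)^j)
    intro j
    exact happrox.eventually_lt_const (by positivity)
  set nn : ℕ → ℕ := fun j => nseq (φ j) with hnn
  set σ : ∀ j, Equiv.Perm (Fin (nn j)) := fun j => π (φ j) with hσdef
  set G : ℕ → Set (ℝ × ℝ) := fun j => ⋃ i, cellSet (nn j) (σ j) i with hGdef
  have hsum : (∑' j, μ ((G j)ᶜ)) ≠ ⊤ := by
    have hle : ∀ j, μ ((G j)ᶜ) ≤ ((2:ENNReal))⁻¹ ^ j := by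
      intro j
      refine le_trans (measure_compl_cells hμ (hpos (φ j)) (σ j)) ?_
      rw [← ofReal_half_pow]
      exact ENNReal.ofReal_le_ofReal (le_of_lt (hφ j))
    refine ne_top_of_le_ne_top ?_ (ENNReal.tsum_le_tsum hle)
    rw [ENNReal.tsum_geometric, ENNReal.one_sub_inv_two]
    simp
  have hBC : ∀ᵐ p ∂μ, ∀ᶠ j in atTop, p ∉ (G j)ᶜ := ae_eventually_notMem hsum
  have hLines : ∀ᵐ p ∂μ, ∀ j : ℕ, p ∉ gridLines (nn j) := by
    rw [ae_all_iff]
    intro j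
    rw [ae_iff]
    simpa [not_not] using gridLines_null hμ (nn j)
  have hnn_tend : Tendsto (fun j => 1/((nn j : ℕ) : ℝ)) atTop (𝓝 0) := by
    have h1 : Tendsto (fun j => ((nn j : ℕ) : ℝ)) atTop atTop :=
      tendsto_natCast_atTop_atTop.comp ((hmono.comp hφmono).tendsto_atTop)
    simpa [one_div, Function.comp_def] using tendsto_inv_atTop_zero.comp h1
  set gg : ℕ → ℝ → ℝ := fun j => gstep (nn j) (σ j) with hggdef
  set gg' : ℕ → ℝ → ℝ := fun j => gstep (nn j) (σ j)⁻¹ with hggdef'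
  set E : Set (ℝ × ℝ) := {p | Tendsto (fun j => gg j p.1) atTop (𝓝 p.2) ∧
      Tendsto (fun j => gg' j p.2) atTop (𝓝 p.1)} with hEdef
  have hEae : ∀ᵐ p ∂μ, p ∈ E := by
    filter_upwards [hBC, hLines] with p h1 h2
    have hclose : ∀ᶠ j in atTop,
        |gg j p.1 - p.2| ≤ 1/((nn j : ℕ) : ℝ) ∧ |gg' j p.2 - p.1| ≤ 1/((nn j : ℕ) : ℝ) := by
      filter_upwards [h1] with j hj
      have hpG : p ∈ G j := Set.not_notMem.1 hj
      have hx : ∀ i : ℕ, i ≤ nn j → p.1 ≠ (i:ℝ)/(nn j) := by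
        intro i hi he; exact h2 j ⟨i, hi, Or.inl he⟩
      have hy : ∀ i : ℕ, i ≤ nn j → p.2 ≠ (i:ℝ)/(nn j) := by
        intro i hi he; exact h2 j ⟨i, hi, Or.inr he⟩
      exact gstep_close (hpos (φ j)) (σ j) hpG hx hy
    simp only [hEdef, mem_setOf_eq]
    constructor
    · rw [tendsto_iff_dist_tendsto_zero]
      refine squeeze_zero' (Eventually.of_forall fun j => dist_nonneg) ?_ hnn_tend
      filter_upwards [hclose] with j hj
      rw [Real.dist_eq]; exact hj.1
    · rw [tendsto_iff_dist_tendsto_zero]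
      refine squeeze_zero' (Eventually.of_forall fun j => dist_nonneg) ?_ hnn_tend
      filter_upwards [hclose] with j hj
      rw [Real.dist_eq]; exact hj.2
  have hEc : μ Eᶜ = 0 := ae_iff.1 hEae
  obtain ⟨f, hfm, hfspec⟩ := exists_lim_fun gg (fun j => gstep_measurable _ _)
  obtain ⟨g, hgm, hgspec⟩ := exists_lim_fun gg' (fun j => gstep_measurable _ _)
  have hfE : ∀ p ∈ E, p.2 = f p.1 := fun p hp => (hfspec p.1 p.2 hp.1).symm
  have hgE : ∀ p ∈ E, p.1 = g p.2 := fun p hp => (hgspec p.2 p.1 hp.2).symm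
  have hpairf : Measurable fun x : ℝ => (x, f x) := measurable_id.prodMk hfm
  have hpairg : Measurable fun y : ℝ => (g y, y) := hgm.prodMk measurable_id
  have hμf : μ = Measure.map (fun x => (x, f x)) ν := by
    have h := eq_map_graph_fst μ f hfm E hEc hfE
    rwa [hμ.2.1] at h
  have hμg : μ = Measure.map (fun y => (g y, y)) ν := by
    have h := eq_map_graph_snd μ g hgm E hEc hgE
    rwa [hμ.2.2] at h
  have hmapf : Measure.map f ν = ν := by
    have h1 : μ.map Prod.snd = ν := hμ.2.2
    rw [hμf, Measure.map_map measurable_snd hpairf] at h1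
    simpa [Function.comp_def] using h1
  have hmapg : Measure.map g ν = ν := by
    have h1 : μ.map Prod.fst = ν := hμ.2.1
    rw [hμg, Measure.map_map measurable_fst hpairg] at h1
    simpa [Function.comp_def] using h1
  have hgf : ν {x | g (f x) ≠ x} = 0 := by
    have hS : MeasurableSet {p : ℝ × ℝ | g p.2 ≠ p.1} :=
      (measurableSet_eq_fun (hgm.comp measurable_snd) measurable_fst).compl
    have hSE : {p : ℝ × ℝ | g p.2 ≠ p.1} ∩ E = ∅ := by
      ext p
      simp only [mem_inter_iff, mem_setOf_eq, mem_empty_iff_false, iff_false, not_and]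
      intro hne hpe; exact hne (hgE p hpe).symm
    have hμS : μ {p : ℝ × ℝ | g p.2 ≠ p.1} = 0 := by
      rw [← measure_inter_conull hEc, hSE, measure_empty]
    have heq : ν {x | g (f x) ≠ x} = μ {p : ℝ × ℝ | g p.2 ≠ p.1} := by
      rw [hμf, Measure.map_apply hpairf hS]
      rfl
    rw [heq, hμS]
  have hfg : ν {y | f (g y) ≠ y} = 0 := by
    have hS : MeasurableSet {p : ℝ × ℝ | f p.1 ≠ p.2} :=
      (measurableSet_eq_fun (hfm.comp measurable_fst) measurable_snd).compl
    have hSE : {p : ℝ × ℝ | f p.1 ≠ p.2} ∩ E = ∅ := by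
      ext p
      simp only [mem_inter_iff, mem_setOf_eq, mem_empty_iff_false, iff_false, not_and]
      intro hne hpe; exact hne (hfE p hpe).symm
    have hμS : μ {p : ℝ × ℝ | f p.1 ≠ p.2} = 0 := by
      rw [← measure_inter_conull hEc, hSE, measure_empty]
    have heq : ν {y | f (g y) ≠ y} = μ {p : ℝ × ℝ | f p.1 ≠ p.2} := by
      rw [hμg, Measure.map_apply hpairg hS]
      rfl
    rw [heq, hμS]
  have hmA : MeasurableSet {x : ℝ | g (f x) ≠ x} := by
    exact (measurableSet_eq_fun (hgm.comp hfm) measurable_id).compl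
  have hmB : MeasurableSet {y : ℝ | f (g y) ≠ y} := by
    exact (measurableSet_eq_fun (hfm.comp hgm) measurable_id).compl
  set A2 : Set ℝ := Icc 0 1 ∩ {x | g (f x) = x} with hA2def
  set B2 : Set ℝ := Icc 0 1 ∩ {y | f (g y) = y} with hB2def
  have hA2m : MeasurableSet A2 :=
    measurableSet_Icc.inter (measurableSet_eq_fun (hgm.comp hfm) measurable_id)
  have hB2m : MeasurableSet B2 :=
    measurableSet_Icc.inter (measurableSet_eq_fun (hfm.comp hgm) measurable_id)
  have hA2ae : A2 =ᵐ[volume] Icc (0:ℝ) 1 := by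
    rw [ae_eq_set]
    constructor
    · rw [diff_eq_empty.2 inter_subset_left, measure_empty]
    · have hsub : Icc (0:ℝ) 1 \ A2 ⊆ {x | g (f x) ≠ x} ∩ Icc 0 1 := by
        rintro x ⟨hx1, hx2⟩
        exact ⟨fun he => hx2 ⟨hx1, he⟩, hx1⟩
      refine measure_mono_null hsub ?_
      have : volume ({x | g (f x) ≠ x} ∩ Icc (0:ℝ) 1) = ν {x | g (f x) ≠ x} := by
        rw [hν, Measure.restrict_apply hmA]
      rw [this, hgf]
  have hB2ae : B2 =ᵐ[volume] Icc (0:ℝ) 1 := by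
    rw [ae_eq_set]
    constructor
    · rw [diff_eq_empty.2 inter_subset_left, measure_empty]
    · have hsub : Icc (0:ℝ) 1 \ B2 ⊆ {y | f (g y) ≠ y} ∩ Icc 0 1 := by
        rintro y ⟨hy1, hy2⟩
        exact ⟨fun he => hy2 ⟨hy1, he⟩, hy1⟩
      refine measure_mono_null hsub ?_
      have : volume ({y | f (g y) ≠ y} ∩ Icc (0:ℝ) 1) = ν {y | f (g y) ≠ y} := by
        rw [hν, Measure.restrict_apply hmB]
      rw [this, hfg]
  set A : Set ℝ := A2 ∩ f ⁻¹' B2 with hAdef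
  set B : Set ℝ := B2 ∩ g ⁻¹' A2 with hBdef
  have hAm : MeasurableSet A := hA2m.inter (hfm hB2m)
  have hBm : MeasurableSet B := hB2m.inter (hgm hA2m)
  have hfB2 : ν (f ⁻¹' B2ᶜ) = 0 := by
    rw [← Measure.map_apply hfm hB2m.compl, hmapf, hν,
      Measure.restrict_apply hB2m.compl]
    have : B2ᶜ ∩ Icc (0:ℝ) 1 = Icc (0:ℝ) 1 \ B2 := by rw [inter_comm]; rfl
    rw [this]
    exact (ae_eq_set.1 hB2ae).2
  have hgA2 : ν (g ⁻¹' A2ᶜ) = 0 := by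
    rw [← Measure.map_apply hgm hA2m.compl, hmapg, hν,
      Measure.restrict_apply hA2m.compl]
    have : A2ᶜ ∩ Icc (0:ℝ) 1 = Icc (0:ℝ) 1 \ A2 := by rw [inter_comm]; rfl
    rw [this]
    exact (ae_eq_set.1 hA2ae).2
  have hAae : A =ᵐ[volume] Icc (0:ℝ) 1 := by
    rw [ae_eq_set]
    constructor
    · have : A \ Icc (0:ℝ) 1 = ∅ :=
        diff_eq_empty.2 (fun x hx => hx.1.1)
      rw [this, measure_empty]
    · have hsub : Icc (0:ℝ) 1 \ A ⊆ (Icc (0:ℝ) 1 \ A2) ∪ (f ⁻¹' B2ᶜ ∩ Icc 0 1) := by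
        rintro x ⟨hx1, hx2⟩
        by_cases hxa : x ∈ A2
        · refine Or.inr ⟨fun hb => hx2 ⟨hxa, hb⟩, hx1⟩
        · exact Or.inl ⟨hx1, hxa⟩
      refine measure_mono_null hsub (measure_union_null (ae_eq_set.1 hA2ae).2 ?_)
      have : volume (f ⁻¹' B2ᶜ ∩ Icc (0:ℝ) 1) = ν (f ⁻¹' B2ᶜ) := by
        rw [hν, Measure.restrict_apply (hfm hB2m.compl)]
      rw [this, hfB2]
  have hBae : B =ᵐ[volume] Icc (0:ℝ) 1 := by
    rw [ae_eq_set]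
    constructor
    · have : B \ Icc (0:ℝ) 1 = ∅ :=
        diff_eq_empty.2 (fun y hy => hy.1.1)
      rw [this, measure_empty]
    · have hsub : Icc (0:ℝ) 1 \ B ⊆ (Icc (0:ℝ) 1 \ B2) ∪ (g ⁻¹' A2ᶜ ∩ Icc 0 1) := by
        rintro y ⟨hy1, hy2⟩
        by_cases hyb : y ∈ B2
        · refine Or.inr ⟨fun ha => hy2 ⟨hyb, ha⟩, hy1⟩
        · exact Or.inl ⟨hy1, hyb⟩
      refine measure_mono_null hsub (measure_union_null (ae_eq_set.1 hB2ae).2 ?_)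
      have : volume (g ⁻¹' A2ᶜ ∩ Icc (0:ℝ) 1) = ν (g ⁻¹' A2ᶜ) := by
        rw [hν, Measure.restrict_apply (hgm hA2m.compl)]
      rw [this, hgA2]
  refine ⟨A, B, f, fun x hx => hx.1.1, fun y hy => hy.1.1, hAm, hBm, ?_, ?_, ?_, ?_, ?_⟩
  · rw [measure_congr hAae, Real.volume_Icc]; norm_num
  · rw [measure_congr hBae, Real.volume_Icc]; norm_num
  · refine Set.InvOn.bijOn ⟨fun x hx => hx.1.2, fun y hy => hy.1.2⟩ ?_ ?_
    · intro x hx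
      exact ⟨hx.2, by rw [mem_preimage, hx.1.2]; exact hx.1⟩
    · intro y hy
      exact ⟨hy.2, by rw [mem_preimage, hy.1.2]; exact hy.1⟩
  · rw [Measure.restrict_congr_set hAae]
    exact hmapf
  · rw [Measure.restrict_congr_set hAae]
    exact hμf
end

section
/- Let μ be a permuton supported on the graph of a function f that is Hölder continuous at a point x ∈ (0,1) with exponent α ∈ (0,1] and constant C ≥ 1: |f(t) − f(x)| ≤ C|t − x|^α for all t. Then there is a constant c > 0 (depending only on C and α) such that for every n and every π ∈ Sym(n), d_□(μ, ĥπ) ≥ c·n^{−1/α}. In particular, if f is Lipschitz at some point, then D_n(μ) = Ω(1/n). -/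
open MeasureTheory Set Filter Topology

lemma hatPerm_aux_univ_le (n : ℕ) (π : Equiv.Perm (Fin n)) :
    ((n : ENNReal) • volume.restrict (⋃ i : Fin n,
      Icc (((i : ℕ) : ℝ) / n) ((((i : ℕ) : ℝ) + 1) / n) ×ˢ
        Icc (((π i : ℕ) : ℝ) / n) ((((π i : ℕ) : ℝ) + 1) / n))) Set.univ ≤ 1 := by
  rcases Nat.eq_zero_or_pos n with rfl | hn
  · simp
  have hnR : (0:ℝ) < n := Nat.cast_pos.mpr hn
  rw [Measure.smul_apply, smul_eq_mul, Measure.restrict_apply MeasurableSet.univ, Set.univ_inter]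
  have h1 : ∀ i : Fin n,
      volume (Icc (((i:ℕ):ℝ)/n) ((((i:ℕ):ℝ)+1)/n) ×ˢ
        Icc (((π i:ℕ):ℝ)/n) ((((π i:ℕ):ℝ)+1)/n)) = (n:ENNReal)⁻¹ * (n:ENNReal)⁻¹ := by
    intro i
    rw [Measure.volume_eq_prod, Measure.prod_prod, Real.volume_Icc, Real.volume_Icc]
    have h2 : ((((i:ℕ):ℝ)+1)/n) - (((i:ℕ):ℝ)/n) = (n:ℝ)⁻¹ := by field_simp; ring
    have h3 : ((((π i:ℕ):ℝ)+1)/n) - (((π i:ℕ):ℝ)/n) = (n:ℝ)⁻¹ := by field_simp; ring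
    rw [h2, h3, ENNReal.ofReal_inv_of_pos hnR, ENNReal.ofReal_natCast]
  have hne : (n:ENNReal) ≠ 0 := by exact_mod_cast hn.ne'
  have hnt : (n:ENNReal) ≠ ⊤ := ENNReal.natCast_ne_top n
  calc (n:ENNReal) * volume (⋃ i : Fin n,
      Icc (((i:ℕ):ℝ)/n) ((((i:ℕ):ℝ)+1)/n) ×ˢ
        Icc (((π i:ℕ):ℝ)/n) ((((π i:ℕ):ℝ)+1)/n))
      ≤ (n:ENNReal) * ∑ i : Fin n, volume (Icc (((i:ℕ):ℝ)/n) ((((i:ℕ):ℝ)+1)/n) ×ˢ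
        Icc (((π i:ℕ):ℝ)/n) ((((π i:ℕ):ℝ)+1)/n)) :=
        mul_le_mul_right (measure_iUnion_fintype_le _ _) _
    _ = (n:ENNReal) * ∑ _i : Fin n, (n:ENNReal)⁻¹ * (n:ENNReal)⁻¹ := by
        congr 1; exact Finset.sum_congr rfl fun i _ => h1 i
    _ = (n:ENNReal) * ((n:ENNReal) * ((n:ENNReal)⁻¹ * (n:ENNReal)⁻¹)) := by
        rw [Finset.sum_const, Finset.card_univ, Fintype.card_fin, nsmul_eq_mul]
    _ = ((n:ENNReal) * (n:ENNReal)⁻¹) * ((n:ENNReal) * (n:ENNReal)⁻¹) := by ring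
    _ = 1 := by rw [ENNReal.mul_inv_cancel hne hnt, one_mul]

lemma abs_sub_le_dRect_s6 (μ ν : Measure (ℝ × ℝ)) (hμ : μ Set.univ ≤ 1) (hν : ν Set.univ ≤ 1)
    (r : ℝ × ℝ × ℝ × ℝ) :
    |(μ (Icc r.1 r.2.1 ×ˢ Icc r.2.2.1 r.2.2.2)).toReal -
      (ν (Icc r.1 r.2.1 ×ˢ Icc r.2.2.1 r.2.2.2)).toReal| ≤ dRect μ ν := by
  apply le_ciSup (f := fun r : ℝ × ℝ × ℝ × ℝ =>
    |(μ (Icc r.1 r.2.1 ×ˢ Icc r.2.2.1 r.2.2.2)).toReal -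
      (ν (Icc r.1 r.2.1 ×ˢ Icc r.2.2.1 r.2.2.2)).toReal|)
  refine ⟨2, ?_⟩
  rintro y ⟨s, rfl⟩
  have hμs : (μ (Icc s.1 s.2.1 ×ˢ Icc s.2.2.1 s.2.2.2)).toReal ≤ 1 := by
    have h : μ (Icc s.1 s.2.1 ×ˢ Icc s.2.2.1 s.2.2.2) ≤ 1 :=
      (measure_mono (Set.subset_univ _)).trans hμ
    simpa using ENNReal.toReal_mono ENNReal.one_ne_top h
  have hνs : (ν (Icc s.1 s.2.1 ×ˢ Icc s.2.2.1 s.2.2.2)).toReal ≤ 1 := by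
    have h : ν (Icc s.1 s.2.1 ×ˢ Icc s.2.2.1 s.2.2.2) ≤ 1 :=
      (measure_mono (Set.subset_univ _)).trans hν
    simpa using ENNReal.toReal_mono ENNReal.one_ne_top h
  have h1 := ENNReal.toReal_nonneg (a := μ (Icc s.1 s.2.1 ×ˢ Icc s.2.2.1 s.2.2.2))
  have h2 := ENNReal.toReal_nonneg (a := ν (Icc s.1 s.2.1 ×ˢ Icc s.2.2.1 s.2.2.2))
  rw [abs_sub_le_iff]
  constructor <;> linarith

set_option maxHeartbeats 2000000 in
theorem holder_point_obstructs_approx (C α : ℝ) (hC : 1 ≤ C) (hα0 : 0 < α) (hα1 : α ≤ 1) :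
    ∃ c > 0, ∀ (μ : Measure (ℝ × ℝ)) (f : ℝ → ℝ) (x : ℝ),
      IsPermuton μ →
      (∀ᵐ p ∂μ, p.2 = f p.1) →
      x ∈ Ioo (0:ℝ) 1 →
      (∀ t ∈ Icc (0:ℝ) 1, |f t - f x| ≤ C * |t - x| ^ α) →
      ∀ n : ℕ, 0 < n → ∀ π : Equiv.Perm (Fin n),
        c * (n : ℝ) ^ (-(1 / α)) ≤ dRect μ (hatPerm n π) := by
  have hα : α ≠ 0 := ne_of_gt hα0
  have hC0 : (0:ℝ) < C := lt_of_lt_of_le one_pos hC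
  refine ⟨(5*C) ^ (-(1/α)) / 4, by positivity, ?_⟩
  intro μ f x hμ hsupp hx hHol n hn π
  have hnR : (0:ℝ) < n := Nat.cast_pos.mpr hn
  set ε : ℝ := 1/(20*n) with hε_def
  have hε : 0 < ε := by positivity
  set t : ℝ := (5*C) ^ (-(1/α)) * (n:ℝ) ^ (-(1/α)) with ht_def
  have ht0 : 0 < t := by positivity
  have h5C : (1:ℝ) ≤ 5*C := by linarith
  have hexp : -(1/α) ≤ 0 := by
    have : 0 < 1/α := by positivity
    linarith
  have ht1 : t ≤ 1 := by
    have h1 : (5*C) ^ (-(1/α)) ≤ 1 := Real.rpow_le_one_of_one_le_of_nonpos h5C hexp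
    have h2 : (n:ℝ) ^ (-(1/α)) ≤ 1 :=
      Real.rpow_le_one_of_one_le_of_nonpos (by exact_mod_cast hn) hexp
    have h3 : (0:ℝ) ≤ (n:ℝ) ^ (-(1/α)) := Real.rpow_nonneg hnR.le _
    nlinarith [Real.rpow_nonneg (le_trans zero_le_one h5C) (-(1/α))]
  have htpow : t ^ α = (5*C)⁻¹ * (n:ℝ)⁻¹ := by
    rw [ht_def, Real.mul_rpow (Real.rpow_nonneg (by linarith) _) (Real.rpow_nonneg hnR.le _),
        ← Real.rpow_mul (by linarith : (0:ℝ) ≤ 5*C) , ← Real.rpow_mul hnR.le]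
    rw [neg_mul, one_div, inv_mul_cancel₀ hα, ← one_div, show -(1:ℝ) = -1 from rfl,
        Real.rpow_neg_one, Real.rpow_neg_one]
    norm_num
  have htα : C * t ^ α = 4*ε := by
    rw [htpow, hε_def]
    field_simp
    ring
  have ht2 : t ≤ 10*ε := by
    have h1 : t ≤ t ^ α := by
      nth_rewrite 1 [← Real.rpow_one t]
      exact Real.rpow_le_rpow_of_exponent_ge ht0 ht1 hα1
    have h2 : (5*C)⁻¹ * (n:ℝ)⁻¹ ≤ 10*ε := by
      rw [hε_def]
      rw [show (10:ℝ) * (1/(20*n)) = 2⁻¹ * (n:ℝ)⁻¹ by field_simp; ring]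
      have hi : (5*C)⁻¹ ≤ (2:ℝ)⁻¹ := inv_anti₀ two_pos (by linarith)
      exact mul_le_mul_of_nonneg_right hi (inv_nonneg.mpr hnR.le)
    rw [htpow] at h1
    linarith
  obtain ⟨hx0, hx1⟩ := hx
  -- column index
  have hfl0 : 0 ≤ ⌊(n:ℝ)*x⌋ := Int.floor_nonneg.mpr (by positivity)
  set k : ℕ := (⌊(n:ℝ)*x⌋).toNat with hk_def
  have hkR : (k:ℝ) = ((⌊(n:ℝ)*x⌋ : ℤ) : ℝ) := by exact_mod_cast Int.toNat_of_nonneg hfl0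
  have hk1 : (k:ℝ) ≤ n*x := by rw [hkR]; exact Int.floor_le _
  have hk2 : (n:ℝ)*x < k+1 := by rw [hkR]; exact Int.lt_floor_add_one _
  have hkn : k < n := by
    by_contra h
    push_neg at h
    have : (n:ℝ) ≤ k := by exact_mod_cast h
    nlinarith
  set i : Fin n := ⟨k, hkn⟩ with hi_def
  have hiN : ((i:ℕ):ℝ) = (k:ℝ) := rfl
  have hxl : (k:ℝ)/n ≤ x := by rw [div_le_iff₀ hnR]; nlinarith
  have hxr : x ≤ ((k:ℝ)+1)/n := by rw [le_div_iff₀ hnR]; nlinarith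
  have hcolw : ((k:ℝ)+1)/n = (k:ℝ)/n + 20*ε := by rw [hε_def]; field_simp
  -- x-interval
  obtain ⟨a, hab1, hab2, hax⟩ : ∃ a : ℝ, (k:ℝ)/n ≤ a ∧ a + t ≤ ((k:ℝ)+1)/n ∧
      ∀ s ∈ Icc a (a+t), |s - x| ≤ t := by
    rcases le_or_gt (10*ε) (x - (k:ℝ)/n) with h | h
    · refine ⟨x - t, by linarith, by linarith, fun s hs => ?_⟩
      rw [abs_le]; exact ⟨by linarith [hs.1], by linarith [hs.2]⟩
    · refine ⟨x, hxl, by rw [hcolw]; linarith, fun s hs => ?_⟩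
      rw [abs_le]; exact ⟨by linarith [hs.1], by linarith [hs.2]⟩
  -- y-interval
  set j : ℕ := (π i : ℕ) with hj_def
  have hroww : ((j:ℝ)+1)/n = (j:ℝ)/n + 20*ε := by rw [hε_def]; field_simp
  obtain ⟨c, hc1, hc2, hcm⟩ : ∃ c : ℝ, (j:ℝ)/n ≤ c ∧ c + 5*ε ≤ (j:ℝ)/n + 20*ε ∧
      ∀ s ∈ Icc c (c + 5*ε), 4*ε < |s - f x| := by
    rcases le_or_gt (f x) ((j:ℝ)/n + 10*ε) with h | h
    · refine ⟨(j:ℝ)/n + 15*ε, by linarith, by linarith, fun s hs => ?_⟩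
      have : 4*ε < s - f x := by linarith [hs.1]
      exact lt_of_lt_of_le this (le_abs_self _)
    · refine ⟨(j:ℝ)/n, le_refl _, by linarith, fun s hs => ?_⟩
      have : 4*ε < -(s - f x) := by linarith [hs.2]
      exact lt_of_lt_of_le this (neg_le_abs _)
  -- the rectangle
  have hk1n : ((k:ℝ)+1)/n ≤ 1 := by
    rw [div_le_one hnR]
    have : (k:ℝ)+1 ≤ n := by exact_mod_cast hkn
    linarith
  have hμR : μ (Icc a (a+t) ×ˢ Icc c (c+5*ε)) = 0 := by
    apply measure_mono_null _ (ae_iff.mp hsupp)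
    have hkn0 : (0:ℝ) ≤ (k:ℝ)/n := by positivity
    rintro ⟨p1, p2⟩ ⟨hp1, hp2⟩
    simp only [mem_setOf_eq]
    intro hpe
    have hp10 : 0 ≤ p1 := le_trans hkn0 (le_trans hab1 hp1.1)
    have hp11 : p1 ≤ 1 := le_trans hp1.2 (le_trans hab2 hk1n)
    have hH := hHol p1 ⟨hp10, hp11⟩
    have h2 : |p1 - x| ≤ t := hax p1 hp1
    have h3 : |p1 - x| ^ α ≤ t ^ α := Real.rpow_le_rpow (abs_nonneg _) h2 hα0.le
    have h4 : |f p1 - f x| ≤ 4*ε := by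
      calc |f p1 - f x| ≤ C * |p1 - x| ^ α := hH
        _ ≤ C * t ^ α := mul_le_mul_of_nonneg_left h3 hC0.le
        _ = 4*ε := htα
    have h5 := hcm p2 hp2
    rw [hpe] at h5
    linarith
  have hRU : Icc a (a+t) ×ˢ Icc c (c+5*ε) ⊆ ⋃ i' : Fin n,
      Icc (((i':ℕ):ℝ)/n) ((((i':ℕ):ℝ)+1)/n) ×ˢ
        Icc (((π i':ℕ):ℝ)/n) ((((π i':ℕ):ℝ)+1)/n) := by
    apply Set.subset_iUnion_of_subset i
    apply Set.prod_mono
    · rw [hiN]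
      exact Icc_subset_Icc hab1 hab2
    · rw [show ((π i : ℕ):ℝ) = (j:ℝ) from by rw [hj_def]]
      exact Icc_subset_Icc hc1 (by rw [hroww]; exact hc2)
  have hν : ((hatPerm n π) (Icc a (a+t) ×ˢ Icc c (c+5*ε))).toReal = (n:ℝ) * (t * (5*ε)) := by
    rw [hatPerm, Measure.smul_apply, smul_eq_mul,
        Measure.restrict_apply (measurableSet_Icc.prod measurableSet_Icc),
        Set.inter_eq_left.mpr hRU, Measure.volume_eq_prod, Measure.prod_prod,
        Real.volume_Icc, Real.volume_Icc,
        show a + t - a = t by ring, show c + 5*ε - c = 5*ε by ring,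
        ← ENNReal.ofReal_mul ht0.le, ENNReal.toReal_mul,
        ENNReal.toReal_ofReal (by positivity : (0:ℝ) ≤ t*(5*ε))]
    simp
  have hb := abs_sub_le_dRect_s6 μ (hatPerm n π)
    (le_of_eq hμ.1.measure_univ) (by rw [hatPerm]; exact hatPerm_aux_univ_le n π)
    (a, a+t, c, c+5*ε)
  simp only at hb
  rw [hμR, hν] at hb
  simp only [ENNReal.toReal_zero, zero_sub, abs_neg] at hb
  rw [abs_of_nonneg (by positivity)] at hb
  calc (5*C) ^ (-(1/α)) / 4 * (n:ℝ) ^ (-(1/α)) = (n:ℝ) * (t * (5*ε)) := by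
        rw [ht_def, hε_def]; field_simp; ring
    _ ≤ dRect μ (hatPerm n π) := hb
end

section
/- Inside a square Q of side length 1/n, consider the region disjoint from the cusp {(t,y) : |y − y₀| ≤ C·|t − t₀|^α}, where (t₀,y₀) ∈ Q, C ≥ 1, and 0 < α ≤ 1. Then Q contains an axis-aligned rectangle disjoint from the cusp whose area is at least c·n^{−1−1/α}, where c > 0 depends only on C and α; one may take a rectangle with side lengths t and 1/(2n) − C·t^α with t = (1/(2Cn(α+1)))^{1/α}. -/
open MeasureTheory Set Filter Topology

/-!
Put the rectangle on the side of `t₀` and of `y₀` where `Q` extends by at least half its side.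
Horizontally it spans `[t₀, t₀ + t/2]`, where the cusp stays strictly below height `C t^α`;
vertically it spans `[y₀ + C t^α, y₀ + 1/(2n)]`. With `t^α = 1/(2Cn(α+1))` the area is
`(t/2) · α/(2n(α+1))`, a constant times `n^(-1-1/α)`.
-/

open Real

lemma exists_Icc_annulus_subset_Icc {q L x₀ s e : ℝ} (hx₀ : x₀ ∈ Icc q (q + L))
    (hs : 0 ≤ s) (he : e ≤ L / 2) :
    ∃ a b : ℝ, b - a = e - s ∧ Icc a b ⊆ Icc q (q + L) ∧
      ∀ y ∈ Icc a b, s ≤ |y - x₀| ∧ |y - x₀| ≤ e := by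
  obtain ⟨hq, hqL⟩ := hx₀
  rcases le_or_gt x₀ (q + L / 2) with hleft | hright
  · refine ⟨x₀ + s, x₀ + e, by ring, Icc_subset_Icc (by linarith) (by linarith), ?_⟩
    rintro y ⟨hy₁, hy₂⟩
    rw [abs_of_nonneg (by linarith)]
    constructor <;> linarith
  · refine ⟨x₀ - e, x₀ - s, by ring, Icc_subset_Icc (by linarith) (by linarith), ?_⟩
    rintro y ⟨hy₁, hy₂⟩
    rw [abs_of_nonpos (by linarith)]
    constructor <;> linarith

/-- Half-width `t / 2` rather than `t` makes the inequality strict, so a closed rectangle cannot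
touch the cusp. -/
lemma disjoint_prod_cusp {C α t t₀ y₀ : ℝ} {I J : Set ℝ} (hC : 0 < C) (hα : 0 < α)
    (ht : 0 < t) (hI : ∀ x ∈ I, |x - t₀| ≤ t / 2) (hJ : ∀ y ∈ J, C * t ^ α ≤ |y - y₀|) :
    Disjoint (I ×ˢ J) {p : ℝ × ℝ | |p.2 - y₀| ≤ C * |p.1 - t₀| ^ α} := by
  rw [disjoint_left]
  rintro ⟨x, y⟩ ⟨hx, hy⟩ hcusp
  have hshrink : |x - t₀| ^ α < t ^ α :=
    (rpow_le_rpow (abs_nonneg _) (hI x hx) hα.le).trans_lt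
      (rpow_lt_rpow (by positivity) (half_lt_self ht) hα)
  have hcusp' : |y - y₀| ≤ C * |x - t₀| ^ α := hcusp
  exact (hcusp'.trans_lt (mul_lt_mul_of_pos_left hshrink hC)).not_ge (hJ y hy)

/-- The paper's width: it maximises `t * (1 / (2 N) - C t^α)`. -/
noncomputable def cuspWidth (C α N : ℝ) : ℝ := (1 / (2 * C * N * (α + 1))) ^ (1 / α)

section cuspWidth

variable {C α N : ℝ}

lemma cuspWidth_pos (hC : 0 < C) (hα : 0 < α) (hN : 0 < N) : 0 < cuspWidth C α N :=
  rpow_pos_of_pos (by positivity) _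

lemma mul_cuspWidth_rpow (hC : 0 < C) (hα : 0 < α) (hN : 0 < N) :
    C * cuspWidth C α N ^ α = 1 / (2 * N * (α + 1)) := by
  rw [cuspWidth, one_div α, rpow_inv_rpow (by positivity) hα.ne']
  field_simp

lemma cuspWidth_le (hC : 1 ≤ C) (hα₀ : 0 < α) (hα₁ : α ≤ 1) (hN : 1 ≤ N) :
    cuspWidth C α N ≤ 1 / N := by
  have hC₀ : 0 < C := by linarith
  have hN₀ : 0 < N := by linarith
  rw [← rpow_le_rpow_iff (cuspWidth_pos hC₀ hα₀ hN₀).le (by positivity) hα₀,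
    ← mul_le_mul_iff_of_pos_left hC₀, mul_cuspWidth_rpow hC₀ hα₀ hN₀]
  calc 1 / (2 * N * (α + 1)) ≤ 1 / N := by gcongr; nlinarith
    _ ≤ (1 / N) ^ α := (rpow_one (1 / N)).symm.trans_le <|
        rpow_le_rpow_of_exponent_ge (by positivity) (by rwa [div_le_one hN₀]) hα₁
    _ ≤ C * (1 / N) ^ α := le_mul_of_one_le_left (by positivity) hC

lemma cuspWidth_area (hC : 0 < C) (hα : 0 < α) (hN : 0 < N) :
    cuspWidth C α N / 2 * (1 / (2 * N) - C * cuspWidth C α N ^ α) =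
      (1 / (2 * C * (α + 1))) ^ (1 / α) * (α / (4 * (α + 1))) * N ^ (-1 - 1 / α) := by
  have hsplit : cuspWidth C α N = (1 / (2 * C * (α + 1))) ^ (1 / α) * N⁻¹ ^ (1 / α) := by
    rw [cuspWidth, ← mul_rpow (by positivity) (by positivity)]
    congr 1
    field_simp
  have hpow : N ^ (-1 - 1 / α) = N⁻¹ * N⁻¹ ^ (1 / α) := by
    rw [rpow_sub hN, rpow_neg_one, inv_rpow hN.le, div_eq_mul_inv]
  rw [mul_cuspWidth_rpow hC hα hN, hsplit, hpow]
  field_simp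
  ring

end cuspWidth

theorem rectangle_avoiding_cusp (C α : ℝ) (hC : 1 ≤ C) (hα0 : 0 < α) (hα1 : α ≤ 1) :
    ∃ c > 0, ∀ (n : ℕ), 0 < n → ∀ q₁ q₂ t₀ y₀ : ℝ,
      (t₀, y₀) ∈ Icc q₁ (q₁ + 1 / n) ×ˢ Icc q₂ (q₂ + 1 / n) →
      ∃ a b a' b' : ℝ,
        Icc a b ×ˢ Icc a' b' ⊆ Icc q₁ (q₁ + 1 / n) ×ˢ Icc q₂ (q₂ + 1 / n) ∧
        Disjoint (Icc a b ×ˢ Icc a' b')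
          {p : ℝ × ℝ | |p.2 - y₀| ≤ C * |p.1 - t₀| ^ α} ∧
        c * (n : ℝ) ^ (-1 - 1 / α : ℝ) ≤ (b - a) * (b' - a') := by
  have hC₀ : 0 < C := by linarith
  refine ⟨(1 / (2 * C * (α + 1))) ^ (1 / α) * (α / (4 * (α + 1))), by positivity, ?_⟩
  rintro n hn q₁ q₂ t₀ y₀ ⟨ht₀, hy₀⟩
  have hN : (1 : ℝ) ≤ n := by exact_mod_cast hn
  have hN₀ : (0 : ℝ) < n := by linarith
  set t := cuspWidth C α n
  have ht : 0 < t := cuspWidth_pos hC₀ hα0 hN₀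
  obtain ⟨a, b, hab, habQ, hx⟩ := exists_Icc_annulus_subset_Icc ht₀ le_rfl
    (e := t / 2) (by linarith [cuspWidth_le hC hα0 hα1 hN])
  obtain ⟨a', b', hab', habQ', hy⟩ := exists_Icc_annulus_subset_Icc hy₀
    (s := C * t ^ α) (e := 1 / (2 * n)) (by positivity) (by rw [div_div, mul_comm])
  refine ⟨a, b, a', b', prod_mono habQ habQ',
    disjoint_prod_cusp hC₀ hα0 ht (fun x hx' => (hx x hx').2) (fun y hy' => (hy y hy').1), ?_⟩
  rw [hab, hab', sub_zero, cuspWidth_area hC₀ hα0 hN₀]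
end

section
/- Fix a strictly increasing sequence of integers n_1 < n_2 < ⋯ with n_1 ≥ 2, set N_k = n_1·n_2⋯n_k, and fix 0 < r < 1/2. Let ℐ_k be the family of grid intervals of length 1/N_k in [0,1], and let ℐ_{k,r} consist of those I ∈ ℐ_k whose parent interval I' ∈ ℐ_{k−1} (the unique one containing I) satisfies I ⊆ [min I' + r|I'|, max I' − r|I'|]. For k₀ large enough that F_{k₀,r} = ⋂_{k≥k₀} ⋃ℐ_{k,r} is nonempty, the Hausdorff dimension of F_{k₀,r} equals 1. -/
open MeasureTheory Set Filter Topology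

/-- `N_k = n_1 ⋯ n_k`. -/
def Nprod (nseq : ℕ → ℕ) (k : ℕ) : ℕ := ∏ i ∈ Finset.Icc 1 k, nseq i

/-- The `j`-th grid interval of level `k` is an `r`-good interval: it lies in the middle
`(1-2r)`-fraction of its parent interval at level `k-1`. -/
def goodInt (nseq : ℕ → ℕ) (r : ℝ) (k j : ℕ) : Prop :=
  j < Nprod nseq k ∧ ∃ jp < Nprod nseq (k - 1),
    Icc ((j : ℝ) / Nprod nseq k) (((j : ℝ) + 1) / Nprod nseq k) ⊆
      Icc ((jp : ℝ) / Nprod nseq (k - 1) + r / Nprod nseq (k - 1))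
        (((jp : ℝ) + 1) / Nprod nseq (k - 1) - r / Nprod nseq (k - 1))

/-- `F_{k₀,r}`: the points lying in an `r`-good interval at every level `k ≥ k₀`. -/
def fractalSet (nseq : ℕ → ℕ) (r : ℝ) (k₀ : ℕ) : Set ℝ :=
  ⋂ k, ⋂ (_ : k₀ ≤ k), ⋃ j, ⋃ (_ : goodInt nseq r k j),
    Icc ((j : ℝ) / Nprod nseq k) (((j : ℝ) + 1) / Nprod nseq k)

section Aux
open scoped Classical

variable {nseq : ℕ → ℕ} {r : ℝ} {k₀ : ℕ}

lemma two_le (hmono : StrictMono nseq) (h2 : 2 ≤ nseq 1) {i : ℕ} (hi : 1 ≤ i) :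
    2 ≤ nseq i := le_trans h2 (hmono.monotone hi)

lemma succ_le (hmono : StrictMono nseq) (h2 : 2 ≤ nseq 1) :
    ∀ i, 1 ≤ i → i + 1 ≤ nseq i := by
  intro i hi
  induction i with
  | zero => omega
  | succ m ih =>
    rcases Nat.eq_zero_or_pos m with rfl | hm
    · simpa using h2
    · have ha := ih hm
      have hb := hmono (by omega : m < m + 1)
      omega

lemma Nprod_pos (hmono : StrictMono nseq) (h2 : 2 ≤ nseq 1) (k : ℕ) :
    0 < Nprod nseq k := by
  refine Finset.prod_pos fun i hi => ?_
  have : 1 ≤ i := (Finset.mem_Icc.mp hi).1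
  have := two_le hmono h2 this
  omega

lemma Nprod_succ (k : ℕ) : Nprod nseq (k + 1) = Nprod nseq k * nseq (k + 1) :=
  Finset.prod_Icc_succ_top (Nat.succ_le_succ (Nat.zero_le k)) _

lemma Nprod_ge_pow (hmono : StrictMono nseq) (h2 : 2 ≤ nseq 1) (k₀ s : ℕ) :
    2 ^ s * Nprod nseq k₀ ≤ Nprod nseq (k₀ + s) := by
  induction s with
  | zero => simp
  | succ m ih =>
    have h1 : Nprod nseq (k₀ + m + 1) = Nprod nseq (k₀ + m) * nseq (k₀ + m + 1) :=
      Nprod_succ _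
    have h2' : 2 ≤ nseq (k₀ + m + 1) := two_le hmono h2 (by omega)
    calc 2 ^ (m + 1) * Nprod nseq k₀ = (2 ^ m * Nprod nseq k₀) * 2 := by ring
    _ ≤ Nprod nseq (k₀ + m) * nseq (k₀ + m + 1) := by
        exact Nat.mul_le_mul ih h2'
    _ = Nprod nseq (k₀ + (m + 1)) := by rw [← h1]; ring_nf

set_option maxHeartbeats 1000000 in
lemma goodInt_iff (hmono : StrictMono nseq) (h2 : 2 ≤ nseq 1) (hr0 : 0 < r)
    {k : ℕ} (hk : 1 ≤ k) (j : ℕ) :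
    goodInt nseq r k j ↔ j < Nprod nseq k ∧
      r * (nseq k : ℝ) ≤ ((j % nseq k : ℕ) : ℝ) ∧
      ((j % nseq k : ℕ) : ℝ) + 1 + r * (nseq k : ℝ) ≤ (nseq k : ℝ) := by
  obtain ⟨k', rfl⟩ : ∃ k', k = k' + 1 := ⟨k - 1, (Nat.succ_pred_eq_of_pos hk).symm⟩
  have hNp : 0 < Nprod nseq k' := Nprod_pos hmono h2 k'
  have hn2 : 2 ≤ nseq (k' + 1) := two_le hmono h2 (by omega)
  have hn : 0 < nseq (k' + 1) := by omega
  have hNs : Nprod nseq (k' + 1) = Nprod nseq k' * nseq (k' + 1) := Nprod_succ k'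
  have hN : 0 < Nprod nseq (k' + 1) := by rw [hNs]; exact Nat.mul_pos hNp hn
  have hN'R : (0 : ℝ) < (Nprod nseq k' : ℝ) := by exact_mod_cast hNp
  have hNR : (0 : ℝ) < (Nprod nseq (k' + 1) : ℝ) := by exact_mod_cast hN
  have hnR : (0 : ℝ) < (nseq (k' + 1) : ℝ) := by exact_mod_cast hn
  have hNR' : (Nprod nseq (k' + 1) : ℝ) = (Nprod nseq k' : ℝ) * (nseq (k' + 1) : ℝ) := by
    exact_mod_cast congrArg (Nat.cast : ℕ → ℝ) hNs
  set n : ℕ := nseq (k' + 1) with hn_def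
  set N' : ℕ := Nprod nseq k' with hN'_def
  set N : ℕ := Nprod nseq (k' + 1) with hN_def
  have hpred : (k' + 1) - 1 = k' := rfl
  constructor
  · rintro ⟨hj, jp, hjp, hsub⟩
    rw [hpred] at hjp hsub
    have hab : (j : ℝ) / N ≤ ((j : ℝ) + 1) / N := by gcongr; linarith
    rw [Set.Icc_subset_Icc_iff hab] at hsub
    obtain ⟨h1, h2'⟩ := hsub
    have e1 : ((jp : ℝ) * n + r * n) / (N : ℝ) = (jp : ℝ) / N' + r / N' := by
      rw [hNR', ← add_mul, mul_div_mul_right _ _ (ne_of_gt hnR), add_div]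
    have e2 : (((jp : ℝ) + 1) * n - r * n) / (N : ℝ) = ((jp : ℝ) + 1) / N' - r / N' := by
      rw [hNR', ← sub_mul, mul_div_mul_right _ _ (ne_of_gt hnR), sub_div]
    rw [← e1, div_le_div_iff_of_pos_right hNR] at h1
    rw [← e2, div_le_div_iff_of_pos_right hNR] at h2'
    have hrn : (0 : ℝ) < r * n := by positivity
    have hlo : jp * n ≤ j := by
      have : ((jp * n : ℕ) : ℝ) ≤ (j : ℝ) := by push_cast; nlinarith
      exact_mod_cast this
    have hhi : j < (jp + 1) * n := by
      have : ((j : ℕ) : ℝ) < (((jp + 1) * n : ℕ) : ℝ) := by push_cast; nlinarith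
      exact_mod_cast this
    have hjdiv : j / n = jp := Nat.div_eq_of_lt_le hlo hhi
    have hmod : (n : ℝ) * jp + ((j % n : ℕ) : ℝ) = (j : ℝ) := by
      have := Nat.div_add_mod j n
      rw [hjdiv] at this
      exact_mod_cast this
    refine ⟨hj, by nlinarith, by nlinarith⟩
  · rintro ⟨hj, hm1, hm2⟩
    have hjdlt : j / n < N' := by
      rw [Nat.div_lt_iff_lt_mul hn]
      rw [hNs] at hj
      omega
    refine ⟨hj, j / n, ?_, ?_⟩
    · rw [hpred]; exact hjdlt
    · rw [hpred]
      have hmod : (n : ℝ) * ((j / n : ℕ) : ℝ) + ((j % n : ℕ) : ℝ) = (j : ℝ) := by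
        exact_mod_cast Nat.div_add_mod j n
      have e1 : (((j / n : ℕ) : ℝ) * n + r * n) / (N : ℝ) = ((j / n : ℕ) : ℝ) / N' + r / N' := by
        rw [hNR', ← add_mul, mul_div_mul_right _ _ (ne_of_gt hnR), add_div]
      have e2 : ((((j / n : ℕ) : ℝ) + 1) * n - r * n) / (N : ℝ) =
          (((j / n : ℕ) : ℝ) + 1) / N' - r / N' := by
        rw [hNR', ← sub_mul, mul_div_mul_right _ _ (ne_of_gt hnR), sub_div]
      apply Set.Icc_subset_Icc
      · rw [← e1, div_le_div_iff_of_pos_right hNR]; linarith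
      · rw [← e2, div_le_div_iff_of_pos_right hNR]; linarith

end Aux

open scoped Classical in
noncomputable def mcnt (nseq : ℕ → ℕ) (r : ℝ) (k : ℕ) : ℕ :=
  ((Finset.range (nseq k)).filter
    (fun i : ℕ => r * (nseq k : ℝ) ≤ (i : ℝ) ∧ (i : ℝ) + 1 + r * (nseq k : ℝ) ≤ (nseq k : ℝ))).card

open scoped Classical in
noncomputable def fiber (nseq : ℕ → ℕ) (r : ℝ) (k p : ℕ) : Finset ℕ :=
  (Finset.range (Nprod nseq k)).filter (fun j => goodInt nseq r k j ∧ j / nseq k = p)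

open scoped Classical in
noncomputable def survA (nseq : ℕ → ℕ) (r : ℝ) (k₀ : ℕ) : ℕ → Finset ℕ
  | 0 => (Finset.range (Nprod nseq k₀)).filter (fun j => goodInt nseq r k₀ j)
  | (t + 1) => (Finset.range (Nprod nseq (k₀ + t + 1))).filter
      (fun j => goodInt nseq r (k₀ + t + 1) j ∧ j / nseq (k₀ + t + 1) ∈ survA nseq r k₀ t)

section Aux2
open scoped Classical

variable {nseq : ℕ → ℕ} {r : ℝ} {k₀ : ℕ}

lemma mem_survA_lt {t j : ℕ} (h : j ∈ survA nseq r k₀ t) : j < Nprod nseq (k₀ + t) := by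
  cases t with
  | zero => rw [survA] at h; simpa using (Finset.mem_filter.mp h).1
  | succ m => rw [survA] at h; simpa [Nat.add_assoc] using (Finset.mem_filter.mp h).1

lemma mem_survA_good {t j : ℕ} (h : j ∈ survA nseq r k₀ t) : goodInt nseq r (k₀ + t) j := by
  cases t with
  | zero => rw [survA] at h; exact (Finset.mem_filter.mp h).2
  | succ m => rw [survA] at h; exact (Finset.mem_filter.mp h).2.1

lemma parent_mem_survA {t j : ℕ} (h : j ∈ survA nseq r k₀ (t + 1)) :
    j / nseq (k₀ + t + 1) ∈ survA nseq r k₀ t := by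
  rw [survA] at h; exact (Finset.mem_filter.mp h).2.2

lemma survA_succ_eq (t : ℕ) :
    survA nseq r k₀ (t + 1) =
      (survA nseq r k₀ t).biUnion (fun p => fiber nseq r (k₀ + t + 1) p) := by
  ext j
  simp only [survA, fiber, Finset.mem_biUnion, Finset.mem_filter, Finset.mem_range]
  constructor
  · rintro ⟨h1, h2, h3⟩; exact ⟨_, h3, h1, h2, rfl⟩
  · rintro ⟨p, hp, h1, h2, rfl⟩; exact ⟨h1, h2, hp⟩

lemma fiber_disjoint {k : ℕ} {p p' : ℕ} (h : p ≠ p') :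
    Disjoint (fiber nseq r k p) (fiber nseq r k p') := by
  rw [Finset.disjoint_left]
  intro j hj hj'
  exact h ((Finset.mem_filter.mp hj).2.2.symm.trans (Finset.mem_filter.mp hj').2.2)

lemma card_fiber (hmono : StrictMono nseq) (h2 : 2 ≤ nseq 1) (hr0 : 0 < r)
    {k : ℕ} (hk : 1 ≤ k) {p : ℕ} (hp : p < Nprod nseq (k - 1)) :
    (fiber nseq r k p).card = mcnt nseq r k := by
  obtain ⟨k', rfl⟩ : ∃ k', k = k' + 1 := ⟨k - 1, (Nat.succ_pred_eq_of_pos hk).symm⟩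
  have hn2 : 2 ≤ nseq (k' + 1) := two_le hmono h2 (by omega)
  have hn : 0 < nseq (k' + 1) := by omega
  have hNs : Nprod nseq (k' + 1) = Nprod nseq k' * nseq (k' + 1) := Nprod_succ k'
  have hpred : (k' + 1) - 1 = k' := rfl
  rw [hpred] at hp
  apply Finset.card_bij' (fun j _ => j % nseq (k' + 1)) (fun i _ => p * nseq (k' + 1) + i)
  · intro j hj
    simp only [fiber, Finset.mem_filter, Finset.mem_range] at hj
    obtain ⟨hjN, hgood, hjp⟩ := hj
    rw [goodInt_iff hmono h2 hr0 (by omega)] at hgood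
    simp only [mcnt, Finset.mem_filter, Finset.mem_range]
    exact ⟨Nat.mod_lt _ hn, hgood.2.1, hgood.2.2⟩
  · intro i hi
    simp only [mcnt, Finset.mem_filter, Finset.mem_range] at hi
    obtain ⟨hin, hc1, hc2⟩ := hi
    simp only [fiber, Finset.mem_filter, Finset.mem_range]
    have hjN : p * nseq (k' + 1) + i < Nprod nseq (k' + 1) := by
      rw [hNs]
      have : p * nseq (k' + 1) + i < (p + 1) * nseq (k' + 1) := by nlinarith [hin]
      nlinarith [hp, hn]
    have hdiv : (p * nseq (k' + 1) + i) / nseq (k' + 1) = p := by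
      rw [add_comm, Nat.add_mul_div_right _ _ hn, Nat.div_eq_of_lt hin]; omega
    have hmodd : (p * nseq (k' + 1) + i) % nseq (k' + 1) = i := by
      rw [add_comm, Nat.add_mul_mod_self_right, Nat.mod_eq_of_lt hin]
    refine ⟨hjN, ?_, hdiv⟩
    rw [goodInt_iff hmono h2 hr0 (by omega), hmodd]
    exact ⟨hjN, hc1, hc2⟩
  · intro j hj
    simp only [fiber, Finset.mem_filter, Finset.mem_range] at hj
    obtain ⟨_, _, hjp⟩ := hj
    conv_rhs => rw [← Nat.div_add_mod j (nseq (k' + 1))]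
    rw [hjp]; ring
  · intro i hi
    simp only [mcnt, Finset.mem_filter, Finset.mem_range] at hi
    rw [add_comm, Nat.add_mul_mod_self_right, Nat.mod_eq_of_lt hi.1]

lemma card_survA_succ (hmono : StrictMono nseq) (h2 : 2 ≤ nseq 1) (hr0 : 0 < r) (t : ℕ) :
    (survA nseq r k₀ (t + 1)).card = (survA nseq r k₀ t).card * mcnt nseq r (k₀ + t + 1) := by
  rw [survA_succ_eq, Finset.card_biUnion (fun p _ p' _ h => fiber_disjoint h)]
  rw [Finset.sum_congr rfl (fun p hp => card_fiber hmono h2 hr0 (by omega)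
    (by simpa using mem_survA_lt hp))]
  simp [mul_comm]

open scoped Classical in
noncomputable def cnt (nseq : ℕ → ℕ) (r : ℝ) (k₀ t : ℕ) (x : ℝ) : ℕ :=
  ((survA nseq r k₀ t).filter
    (fun j : ℕ => ((j : ℝ) + 1) / (Nprod nseq (k₀ + t) : ℝ) ≤ x)).card

noncomputable def gfa (nseq : ℕ → ℕ) (r : ℝ) (k₀ t : ℕ) (x : ℝ) : ℝ :=
  (cnt nseq r k₀ t x : ℝ) / ((survA nseq r k₀ t).card : ℝ)

noncomputable def gfun (nseq : ℕ → ℕ) (r : ℝ) (k₀ : ℕ) (x : ℝ) : ℝ :=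
  ⨆ t, gfa nseq r k₀ t x

open scoped Classical in
noncomputable def Bset (nseq : ℕ → ℕ) (r : ℝ) (k₀ t : ℕ) (x y : ℝ) : Finset ℕ :=
  (survA nseq r k₀ t).filter
    (fun p : ℕ => (p : ℝ) / (Nprod nseq (k₀ + t) : ℝ) < y ∧
      x < ((p : ℝ) + 1) / (Nprod nseq (k₀ + t) : ℝ))

section Aux3
open scoped Classical

variable {nseq : ℕ → ℕ} {r : ℝ} {k₀ : ℕ}

-- membership in a fiber gives the numeric bounds used everywhere
lemma fiber_mem_bounds {k p j : ℕ} (hn : 0 < nseq k) (hj : j ∈ fiber nseq r k p) :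
    p * nseq k ≤ j ∧ j + 1 ≤ (p + 1) * nseq k ∧ j < Nprod nseq k ∧ goodInt nseq r k j := by
  simp only [fiber, Finset.mem_filter, Finset.mem_range] at hj
  obtain ⟨h1, h2, h3⟩ := hj
  subst h3
  refine ⟨Nat.div_mul_le_self j _, ?_, h1, h2⟩
  have := (Nat.div_lt_iff_lt_mul hn).mp (show j / nseq k < j / nseq k + 1 by omega)
  omega

lemma cnt_succ_ge (hmono : StrictMono nseq) (h2 : 2 ≤ nseq 1) (hr0 : 0 < r)
    (t : ℕ) (x : ℝ) :
    mcnt nseq r (k₀ + t + 1) * cnt nseq r k₀ t x ≤ cnt nseq r k₀ (t + 1) x := by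
  classical
  have hn : 0 < nseq (k₀ + t + 1) := by have := two_le hmono h2 (by omega : 1 ≤ k₀ + t + 1); omega
  have hNp : (0:ℝ) < (Nprod nseq (k₀ + t) : ℝ) := by
    exact_mod_cast Nprod_pos hmono h2 (k₀ + t)
  have hNp1 : (0:ℝ) < (Nprod nseq (k₀ + t + 1) : ℝ) := by
    exact_mod_cast Nprod_pos hmono h2 (k₀ + t + 1)
  set S := ((survA nseq r k₀ t).filter
    (fun j : ℕ => ((j : ℝ) + 1) / (Nprod nseq (k₀ + t) : ℝ) ≤ x)) with hS
  have hsub : S.biUnion (fun p => fiber nseq r (k₀ + t + 1) p) ⊆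
      (survA nseq r k₀ (t + 1)).filter
        (fun j : ℕ => ((j : ℝ) + 1) / (Nprod nseq (k₀ + t + 1) : ℝ) ≤ x) := by
    intro j hj
    rw [Finset.mem_biUnion] at hj
    obtain ⟨p, hpS, hjf⟩ := hj
    rw [hS, Finset.mem_filter] at hpS
    obtain ⟨hpA, hpx⟩ := hpS
    obtain ⟨hlo, hhi, hjN, hgood⟩ := fiber_mem_bounds hn hjf
    have hjdiv : j / nseq (k₀ + t + 1) = p := by
      simp only [fiber, Finset.mem_filter] at hjf; exact hjf.2.2
    have hjA : j ∈ survA nseq r k₀ (t + 1) := by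
      rw [survA, Finset.mem_filter, Finset.mem_range]
      exact ⟨hjN, hgood, by rw [hjdiv]; exact hpA⟩
    rw [Finset.mem_filter]
    refine ⟨hjA, ?_⟩
    have hNs : (Nprod nseq (k₀ + t + 1) : ℝ) =
        (Nprod nseq (k₀ + t) : ℝ) * (nseq (k₀ + t + 1) : ℝ) := by
      exact_mod_cast congrArg (Nat.cast : ℕ → ℝ) (Nprod_succ (k₀ + t))
    have hstep : ((j : ℝ) + 1) / (Nprod nseq (k₀ + t + 1) : ℝ) ≤
        ((p : ℝ) + 1) / (Nprod nseq (k₀ + t) : ℝ) := by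
      have hnR : (0:ℝ) < (nseq (k₀ + t + 1) : ℝ) := by exact_mod_cast hn
      have hcast : ((j : ℝ) + 1) ≤ ((p : ℝ) + 1) * (nseq (k₀ + t + 1) : ℝ) := by
        exact_mod_cast hhi
      rw [hNs, div_le_div_iff₀ (by positivity) hNp]
      calc ((j:ℝ) + 1) * (Nprod nseq (k₀ + t) : ℝ)
          ≤ ((p : ℝ) + 1) * (nseq (k₀ + t + 1) : ℝ) * (Nprod nseq (k₀ + t) : ℝ) := by
            apply mul_le_mul_of_nonneg_right hcast hNp.le
        _ = ((p : ℝ) + 1) * ((Nprod nseq (k₀ + t) : ℝ) * (nseq (k₀ + t + 1) : ℝ)) := by ring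
    exact hstep.trans hpx
  calc mcnt nseq r (k₀ + t + 1) * cnt nseq r k₀ t x
      = ∑ p ∈ S, mcnt nseq r (k₀ + t + 1) := by
        rw [Finset.sum_const, smul_eq_mul, mul_comm]; rfl
    _ = (S.biUnion (fun p => fiber nseq r (k₀ + t + 1) p)).card := by
        rw [Finset.card_biUnion (fun p _ p' _ h => fiber_disjoint h)]
        refine (Finset.sum_congr rfl fun p hp => ?_).symm
        have hpA : p ∈ survA nseq r k₀ t := (Finset.mem_filter.mp hp).1
        exact card_fiber hmono h2 hr0 (by omega) (by simpa using mem_survA_lt hpA)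
    _ ≤ _ := Finset.card_le_card hsub

lemma Bset_succ_le (hmono : StrictMono nseq) (h2 : 2 ≤ nseq 1) (hr0 : 0 < r)
    (t : ℕ) (x y : ℝ) :
    (Bset nseq r k₀ (t + 1) x y).card ≤ mcnt nseq r (k₀ + t + 1) * (Bset nseq r k₀ t x y).card := by
  classical
  have hn : 0 < nseq (k₀ + t + 1) := by have := two_le hmono h2 (by omega : 1 ≤ k₀ + t + 1); omega
  have hNp : (0:ℝ) < (Nprod nseq (k₀ + t) : ℝ) := by
    exact_mod_cast Nprod_pos hmono h2 (k₀ + t)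
  have hNs : (Nprod nseq (k₀ + t + 1) : ℝ) =
      (Nprod nseq (k₀ + t) : ℝ) * (nseq (k₀ + t + 1) : ℝ) := by
    exact_mod_cast congrArg (Nat.cast : ℕ → ℝ) (Nprod_succ (k₀ + t))
  have hnR : (0:ℝ) < (nseq (k₀ + t + 1) : ℝ) := by exact_mod_cast hn
  have hsub : Bset nseq r k₀ (t + 1) x y ⊆
      (Bset nseq r k₀ t x y).biUnion (fun p => fiber nseq r (k₀ + t + 1) p) := by
    intro j hj
    simp only [Bset, Finset.mem_filter] at hj
    obtain ⟨hjA, hj1'', hj2''⟩ := hj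
    have hj1 : (j : ℝ) / (Nprod nseq (k₀ + t + 1) : ℝ) < y := hj1''
    have hj2 : x < ((j : ℝ) + 1) / (Nprod nseq (k₀ + t + 1) : ℝ) := hj2''
    set p := j / nseq (k₀ + t + 1) with hp
    have hpA : p ∈ survA nseq r k₀ t := parent_mem_survA hjA
    have hlo : p * nseq (k₀ + t + 1) ≤ j := Nat.div_mul_le_self _ _
    have hhi : j + 1 ≤ (p + 1) * nseq (k₀ + t + 1) := by
      have : j < (p + 1) * nseq (k₀ + t + 1) :=
        (Nat.div_lt_iff_lt_mul hn).mp (by omega)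
      omega
    have hploy : (p : ℝ) / (Nprod nseq (k₀ + t) : ℝ) < y := by
      refine lt_of_le_of_lt ?_ hj1
      rw [hNs, div_le_div_iff₀ hNp (by positivity)]
      have : ((p * nseq (k₀ + t + 1) : ℕ) : ℝ) ≤ (j : ℝ) := by exact_mod_cast hlo
      push_cast at this ⊢
      nlinarith [hNp]
    have hpx : x < ((p : ℝ) + 1) / (Nprod nseq (k₀ + t) : ℝ) := by
      refine lt_of_lt_of_le hj2 ?_
      rw [hNs, div_le_div_iff₀ (by positivity) hNp]
      have : ((j : ℝ) + 1) ≤ ((p : ℝ) + 1) * (nseq (k₀ + t + 1) : ℝ) := by exact_mod_cast hhi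
      nlinarith [hNp]
    rw [Finset.mem_biUnion]
    refine ⟨p, ?_, ?_⟩
    · simp only [Bset, Finset.mem_filter]; exact ⟨hpA, hploy, hpx⟩
    · simp only [fiber, Finset.mem_filter, Finset.mem_range]
      have hlt : j < Nprod nseq (k₀ + (t + 1)) := mem_survA_lt hjA
      have hg : goodInt nseq r (k₀ + (t + 1)) j := mem_survA_good hjA
      exact ⟨hlt, hg, rfl⟩
  calc (Bset nseq r k₀ (t + 1) x y).card
      ≤ ((Bset nseq r k₀ t x y).biUnion (fun p => fiber nseq r (k₀ + t + 1) p)).card :=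
        Finset.card_le_card hsub
    _ ≤ ∑ p ∈ Bset nseq r k₀ t x y, (fiber nseq r (k₀ + t + 1) p).card :=
        Finset.card_biUnion_le
    _ ≤ ∑ p ∈ Bset nseq r k₀ t x y, mcnt nseq r (k₀ + t + 1) := by
        refine Finset.sum_le_sum fun p hp => ?_
        have hpA : p ∈ survA nseq r k₀ t := (Finset.mem_filter.mp hp).1
        exact le_of_eq (card_fiber hmono h2 hr0 (by omega) (by simpa using mem_survA_lt hpA))
    _ = mcnt nseq r (k₀ + t + 1) * (Bset nseq r k₀ t x y).card := by
        rw [Finset.sum_const, smul_eq_mul, mul_comm]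

lemma Bset_ratio (hmono : StrictMono nseq) (h2 : 2 ≤ nseq 1) (hr0 : 0 < r)
    (t u : ℕ) (x y : ℝ) :
    (Bset nseq r k₀ (t + u) x y).card * (survA nseq r k₀ t).card ≤
      (Bset nseq r k₀ t x y).card * (survA nseq r k₀ (t + u)).card := by
  induction u with
  | zero => simp
  | succ m ih =>
    have h1 := Bset_succ_le hmono h2 hr0 (t + m) x y (k₀ := k₀)
    have h2' := card_survA_succ hmono h2 hr0 (t + m) (k₀ := k₀)
    have : t + (m + 1) = (t + m) + 1 := by omega
    rw [this, h2']
    calc (Bset nseq r k₀ ((t + m) + 1) x y).card * (survA nseq r k₀ t).card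
        ≤ (mcnt nseq r (k₀ + (t + m) + 1) * (Bset nseq r k₀ (t + m) x y).card) *
            (survA nseq r k₀ t).card := Nat.mul_le_mul_right _ h1
      _ = mcnt nseq r (k₀ + (t + m) + 1) *
            ((Bset nseq r k₀ (t + m) x y).card * (survA nseq r k₀ t).card) := by ring
      _ ≤ mcnt nseq r (k₀ + (t + m) + 1) *
            ((Bset nseq r k₀ t x y).card * (survA nseq r k₀ (t + m)).card) :=
          Nat.mul_le_mul_left _ ih
      _ = (Bset nseq r k₀ t x y).card *
            ((survA nseq r k₀ (t + m)).card * mcnt nseq r (k₀ + (t + m) + 1)) := by ring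

lemma cnt_le_cnt_add_B (t : ℕ) {x y : ℝ} (hxy : x ≤ y) :
    cnt nseq r k₀ t y ≤ cnt nseq r k₀ t x + (Bset nseq r k₀ t x y).card := by
  classical
  have hsub : ((survA nseq r k₀ t).filter
      (fun j : ℕ => ((j : ℝ) + 1) / (Nprod nseq (k₀ + t) : ℝ) ≤ y)) ⊆
      ((survA nseq r k₀ t).filter
        (fun j : ℕ => ((j : ℝ) + 1) / (Nprod nseq (k₀ + t) : ℝ) ≤ x)) ∪ Bset nseq r k₀ t x y := by
    intro j hj
    rw [Finset.mem_filter] at hj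
    obtain ⟨hjA, hjy⟩ := hj
    rcases le_or_gt (((j : ℝ) + 1) / (Nprod nseq (k₀ + t) : ℝ)) x with h | h
    · exact Finset.mem_union_left _ (Finset.mem_filter.mpr ⟨hjA, h⟩)
    · refine Finset.mem_union_right _ ?_
      simp only [Bset, Finset.mem_filter]
      have hNp : (0:ℝ) < (Nprod nseq (k₀ + t) : ℝ) := by
        have := mem_survA_lt hjA
        have : 0 < Nprod nseq (k₀ + t) := by omega
        exact_mod_cast this
      refine ⟨hjA, lt_of_lt_of_le ?_ hjy, h⟩
      exact (div_lt_div_iff_of_pos_right hNp).mpr (by linarith)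
  calc cnt nseq r k₀ t y ≤ _ := Finset.card_le_card hsub
    _ ≤ _ := Finset.card_union_le _ _

lemma card_le_of_mem_Ioo {S : Finset ℕ} {a b : ℝ}
    (h : ∀ p ∈ S, a < (p : ℝ) ∧ (p : ℝ) < b) (hab : a ≤ b) :
    (S.card : ℝ) ≤ b - a + 1 := by
  rcases S.eq_empty_or_nonempty with rfl | hS
  · simp; linarith
  · have hmin := S.min'_mem hS
    have hmax := S.max'_mem hS
    have hsub : S ⊆ Finset.Icc (S.min' hS) (S.max' hS) :=
      fun p hp => Finset.mem_Icc.mpr ⟨S.min'_le p hp, S.le_max' p hp⟩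
    have hcard := Finset.card_le_card hsub
    rw [Nat.card_Icc] at hcard
    have h1 : a < (S.min' hS : ℝ) := (h _ hmin).1
    have h2 : ((S.max' hS : ℝ)) < b := (h _ hmax).2
    have hle : S.min' hS ≤ S.max' hS := S.min'_le _ hmax
    calc (S.card : ℝ) ≤ ((S.max' hS + 1 - S.min' hS : ℕ) : ℝ) := by exact_mod_cast hcard
      _ = (S.max' hS : ℝ) + 1 - (S.min' hS : ℝ) := by
          rw [Nat.cast_sub (by omega)]; push_cast; ring
      _ ≤ b - a + 1 := by linarith

lemma Bset_card_le (hmono : StrictMono nseq) (h2 : 2 ≤ nseq 1)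
    (t : ℕ) {x y : ℝ} (hxy : x ≤ y) :
    ((Bset nseq r k₀ t x y).card : ℝ) ≤ (y - x) * (Nprod nseq (k₀ + t) : ℝ) + 2 := by
  have hNp : (0:ℝ) < (Nprod nseq (k₀ + t) : ℝ) := by
    exact_mod_cast Nprod_pos hmono h2 (k₀ + t)
  have h := card_le_of_mem_Ioo (S := Bset nseq r k₀ t x y)
    (a := x * (Nprod nseq (k₀ + t) : ℝ) - 1) (b := y * (Nprod nseq (k₀ + t) : ℝ)) ?_ ?_
  · linarith
  · intro p hp
    simp only [Bset, Finset.mem_filter] at hp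
    obtain ⟨hpA, h1, h2'⟩ := hp
    constructor
    · have h3 := (lt_div_iff₀ hNp).mp h2'
      linarith
    · exact (div_lt_iff₀ hNp).mp h1
  · nlinarith

lemma mcnt_pos (hmono : StrictMono nseq) (h2 : 2 ≤ nseq 1) (hr0 : 0 < r)
    {k : ℕ} (hk : 1 ≤ k) (hex : ∃ j, goodInt nseq r k j) : 0 < mcnt nseq r k := by
  classical
  obtain ⟨j, hj⟩ := hex
  rw [goodInt_iff hmono h2 hr0 hk] at hj
  have hn : 0 < nseq k := by have := two_le hmono h2 hk; omega
  refine Finset.card_pos.mpr ⟨j % nseq k, ?_⟩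
  simp only [mcnt, Finset.mem_filter, Finset.mem_range]
  exact ⟨Nat.mod_lt _ hn, hj.2.1, hj.2.2⟩

lemma survA_card_pos (hmono : StrictMono nseq) (h2 : 2 ≤ nseq 1) (hr0 : 0 < r)
    (hgood : ∀ k, k₀ ≤ k → ∃ j, goodInt nseq r k j) (hk₀ : 1 ≤ k₀) :
    ∀ t, 0 < (survA nseq r k₀ t).card := by
  intro t
  induction t with
  | zero =>
    obtain ⟨j, hj⟩ := hgood k₀ le_rfl
    refine Finset.card_pos.mpr ⟨j, ?_⟩
    rw [survA, Finset.mem_filter, Finset.mem_range]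
    exact ⟨hj.1, hj⟩
  | succ m ih =>
    rw [card_survA_succ hmono h2 hr0]
    exact Nat.mul_pos ih (mcnt_pos hmono h2 hr0 (by omega) (hgood _ (by omega)))

variable (nseq r k₀) in
structure Std : Prop where
  hmono : StrictMono nseq
  h2 : 2 ≤ nseq 1
  hr0 : 0 < r
  hr : r < 1 / 2
  hk₀ : 1 ≤ k₀
  hgood : ∀ k, k₀ ≤ k → ∃ j, goodInt nseq r k j

namespace Std

variable (H : Std nseq r k₀)
include H

lemma Mpos (t : ℕ) : (0:ℝ) < ((survA nseq r k₀ t).card : ℝ) := by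
  exact_mod_cast survA_card_pos H.hmono H.h2 H.hr0 H.hgood H.hk₀ t

lemma gfa_nonneg (t : ℕ) (x : ℝ) : 0 ≤ gfa nseq r k₀ t x := by
  have := H.Mpos t
  unfold gfa
  positivity

lemma gfa_le_one (t : ℕ) (x : ℝ) : gfa nseq r k₀ t x ≤ 1 := by
  have hM := H.Mpos t
  rw [gfa, div_le_one hM]
  exact_mod_cast Finset.card_le_card (Finset.filter_subset _ _)

lemma gfa_mono_t (t : ℕ) (x : ℝ) : gfa nseq r k₀ t x ≤ gfa nseq r k₀ (t + 1) x := by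
  have hM := H.Mpos t
  have hM1 := H.Mpos (t + 1)
  have hcnt := cnt_succ_ge H.hmono H.h2 H.hr0 t x (k₀ := k₀)
  have hcard : ((survA nseq r k₀ (t+1)).card : ℝ) =
      ((survA nseq r k₀ t).card : ℝ) * (mcnt nseq r (k₀ + t + 1) : ℝ) := by
    exact_mod_cast congrArg (Nat.cast : ℕ → ℝ) (card_survA_succ H.hmono H.h2 H.hr0 t)
  have hm : (0:ℝ) < (mcnt nseq r (k₀ + t + 1) : ℝ) := by
    have := mcnt_pos H.hmono H.h2 H.hr0 (k := k₀ + t + 1) (by omega) (H.hgood _ (by omega))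
    exact_mod_cast this
  rw [gfa, gfa, hcard, div_le_div_iff₀ hM (by positivity)]
  have : (mcnt nseq r (k₀ + t + 1) : ℝ) * (cnt nseq r k₀ t x : ℝ) ≤
      (cnt nseq r k₀ (t + 1) x : ℝ) := by exact_mod_cast hcnt
  nlinarith [this, hM]

lemma gfa_mono_t' {s t : ℕ} (hst : s ≤ t) (x : ℝ) :
    gfa nseq r k₀ s x ≤ gfa nseq r k₀ t x := by
  induction t with
  | zero => simp_all
  | succ m ih =>
    rcases Nat.eq_or_lt_of_le hst with rfl | h
    · rfl
    · exact (ih (by omega)).trans (H.gfa_mono_t m x)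

lemma gfa_mono_x (t : ℕ) {x y : ℝ} (hxy : x ≤ y) :
    gfa nseq r k₀ t x ≤ gfa nseq r k₀ t y := by
  classical
  have hM := H.Mpos t
  rw [gfa, gfa, div_le_div_iff_of_pos_right hM]
  have : cnt nseq r k₀ t x ≤ cnt nseq r k₀ t y := by
    apply Finset.card_le_card
    intro j hj
    rw [Finset.mem_filter] at hj ⊢
    exact ⟨hj.1, le_trans hj.2 hxy⟩
  exact_mod_cast this

lemma gfun_tendsto (x : ℝ) :
    Filter.Tendsto (fun t => gfa nseq r k₀ t x) atTop (nhds (gfun nseq r k₀ x)) := by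
  apply tendsto_atTop_ciSup (fun s t hst => H.gfa_mono_t' hst x)
  exact ⟨1, by rintro v ⟨t, rfl⟩; exact H.gfa_le_one t x⟩

lemma gfun_bdd (x : ℝ) : BddAbove (Set.range (fun t => gfa nseq r k₀ t x)) :=
  ⟨1, by rintro v ⟨t, rfl⟩; exact H.gfa_le_one t x⟩

lemma gfun_nonneg (x : ℝ) : 0 ≤ gfun nseq r k₀ x :=
  le_trans (H.gfa_nonneg 0 x) (le_ciSup (H.gfun_bdd x) 0)

lemma gfun_le_one (x : ℝ) : gfun nseq r k₀ x ≤ 1 :=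
  ciSup_le fun t => H.gfa_le_one t x

lemma gfun_mono {x y : ℝ} (hxy : x ≤ y) : gfun nseq r k₀ x ≤ gfun nseq r k₀ y :=
  ciSup_le fun t => le_trans (H.gfa_mono_x t hxy) (le_ciSup (H.gfun_bdd y) t)

lemma gfun_zero : gfun nseq r k₀ 0 = 0 := by
  have : ∀ t, gfa nseq r k₀ t 0 = 0 := by
    intro t
    have hNp : (0:ℝ) < (Nprod nseq (k₀ + t) : ℝ) := by
      exact_mod_cast Nprod_pos H.hmono H.h2 (k₀ + t)
    have : cnt nseq r k₀ t 0 = 0 := by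
      rw [cnt, Finset.card_eq_zero, Finset.filter_eq_empty_iff]
      intro j _
      push_neg
      positivity
    rw [gfa, this]; simp
  rw [gfun]
  simp [this]

lemma gfun_one : gfun nseq r k₀ 1 = 1 := by
  have : ∀ t, gfa nseq r k₀ t 1 = 1 := by
    intro t
    have hM := H.Mpos t
    have : cnt nseq r k₀ t 1 = (survA nseq r k₀ t).card := by
      rw [cnt]
      congr 1
      rw [Finset.filter_eq_self]
      intro j hj
      have hNp : (0:ℝ) < (Nprod nseq (k₀ + t) : ℝ) := by
        exact_mod_cast Nprod_pos H.hmono H.h2 (k₀ + t)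
      have hjN : j < Nprod nseq (k₀ + t) := mem_survA_lt hj
      rw [div_le_one hNp]
      exact_mod_cast hjN
    rw [gfa, this, div_self (ne_of_gt hM)]
  rw [gfun]
  simp [this]

/-- The principal estimate: the increment of `gfun` over `[x,y]` is controlled by the number
of level-`s` surviving intervals meeting `(x,y)`, divided by the level-`s` surviving count. -/
lemma gfun_diff_le {x y : ℝ} (hxy : x ≤ y) (s : ℕ) :
    gfun nseq r k₀ y - gfun nseq r k₀ x ≤
      ((Bset nseq r k₀ s x y).card : ℝ) / ((survA nseq r k₀ s).card : ℝ) := by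
  have hlim : Filter.Tendsto (fun t => gfa nseq r k₀ t y - gfa nseq r k₀ t x) atTop
      (nhds (gfun nseq r k₀ y - gfun nseq r k₀ x)) :=
    (H.gfun_tendsto y).sub (H.gfun_tendsto x)
  refine le_of_tendsto hlim ?_
  filter_upwards [Filter.eventually_ge_atTop s] with t hts
  obtain ⟨u, rfl⟩ : ∃ u, t = s + u := ⟨t - s, by omega⟩
  have hMs := H.Mpos s
  have hMt := H.Mpos (s + u)
  have hc := cnt_le_cnt_add_B (s + u) hxy (nseq := nseq) (r := r) (k₀ := k₀)
  have hB := Bset_ratio H.hmono H.h2 H.hr0 s u x y (k₀ := k₀)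
  rw [gfa, gfa, div_sub_div_same, div_le_div_iff₀ hMt hMs]
  have hcR : (cnt nseq r k₀ (s + u) y : ℝ) - (cnt nseq r k₀ (s + u) x : ℝ) ≤
      ((Bset nseq r k₀ (s + u) x y).card : ℝ) := by
    have h1 : (cnt nseq r k₀ (s + u) y : ℝ) ≤
        (cnt nseq r k₀ (s + u) x : ℝ) + ((Bset nseq r k₀ (s + u) x y).card : ℝ) := by
      exact_mod_cast hc
    linarith
  have hBR : ((Bset nseq r k₀ (s + u) x y).card : ℝ) * ((survA nseq r k₀ s).card : ℝ) ≤
      ((Bset nseq r k₀ s x y).card : ℝ) * ((survA nseq r k₀ (s + u)).card : ℝ) := by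
    exact_mod_cast hB
  calc ((cnt nseq r k₀ (s + u) y : ℝ) - (cnt nseq r k₀ (s + u) x : ℝ)) *
        ((survA nseq r k₀ s).card : ℝ)
      ≤ ((Bset nseq r k₀ (s + u) x y).card : ℝ) * ((survA nseq r k₀ s).card : ℝ) := by
        apply mul_le_mul_of_nonneg_right hcR hMs.le
    _ ≤ _ := hBR

end Std

lemma mcnt_ge (hr0 : 0 < r) {k : ℕ} (hn : 0 < nseq k) :
    (1 - 2 * r) * (nseq k : ℝ) - 2 ≤ (mcnt nseq r k : ℝ) := by
  classical
  set n := nseq k with hn_def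
  have hnR : (0:ℝ) < (n : ℝ) := by exact_mod_cast hn
  set a := ⌈r * (n : ℝ)⌉₊ with ha_def
  have ha1 : r * (n : ℝ) ≤ (a : ℝ) := Nat.le_ceil _
  have ha2 : (a : ℝ) < r * (n : ℝ) + 1 := Nat.ceil_lt_add_one (by positivity)
  by_cases hcase : (1 - 2 * r) * (n : ℝ) - 2 ≤ 0
  · exact le_trans hcase (by positivity)
  push_neg at hcase
  have h2a : 2 * a < n := by
    have : 2 * (a : ℝ) < (n : ℝ) := by linarith
    exact_mod_cast this
  have hsub : Finset.Icc a (n - 1 - a) ⊆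
      (Finset.range n).filter
        (fun i : ℕ => r * (n : ℝ) ≤ (i : ℝ) ∧ (i : ℝ) + 1 + r * (n : ℝ) ≤ (n : ℝ)) := by
    intro i hi
    rw [Finset.mem_Icc] at hi
    obtain ⟨hia, hib⟩ := hi
    have hin : i < n := by omega
    have hiaR : (a : ℝ) ≤ (i : ℝ) := by exact_mod_cast hia
    have hsum : i + 1 + a ≤ n := by omega
    have hsumR : (i : ℝ) + 1 + (a : ℝ) ≤ (n : ℝ) := by exact_mod_cast hsum
    rw [Finset.mem_filter, Finset.mem_range]
    exact ⟨hin, le_trans ha1 hiaR, by linarith⟩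
  have hcard := Finset.card_le_card hsub
  rw [Nat.card_Icc] at hcard
  have hIcc : n - 1 - a + 1 - a = n - 2 * a := by omega
  rw [hIcc] at hcard
  have hcard' : (n - 2 * a : ℕ) ≤ mcnt nseq r k := hcard
  have : ((n - 2 * a : ℕ) : ℝ) ≤ (mcnt nseq r k : ℝ) := by exact_mod_cast hcard'
  rw [Nat.cast_sub (by omega)] at this
  push_cast at this
  linarith

lemma tendsto_zero_of_half {R : ℕ → ℝ} (h0 : ∀ t, 0 ≤ R t) {T : ℕ}
    (h : ∀ t, T ≤ t → R (t + 1) ≤ R t / 2) : Filter.Tendsto R atTop (nhds 0) := by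
  rw [← Filter.tendsto_add_atTop_iff_nat T]
  have hb : ∀ u, R (u + T) ≤ R T * (1 / 2) ^ u := by
    intro u
    induction u with
    | zero => simp
    | succ m ih =>
      have hstep := h (m + T) (by omega)
      calc R (m + 1 + T) = R ((m + T) + 1) := by rw [show m + 1 + T = m + T + 1 from by omega]
        _ ≤ R (m + T) / 2 := hstep
        _ ≤ (R T * (1 / 2) ^ m) / 2 := by linarith
        _ = R T * (1 / 2) ^ (m + 1) := by ring
  apply squeeze_zero (fun u => h0 _) hb
  have hp : Filter.Tendsto (fun u : ℕ => (1 / 2 : ℝ) ^ u) atTop (nhds 0) :=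
    tendsto_pow_atTop_nhds_zero_of_lt_one (by norm_num) (by norm_num)
  simpa using hp.const_mul (R T)

namespace Std

variable {nseq : ℕ → ℕ} {r : ℝ} {k₀ : ℕ} (H : Std nseq r k₀)
include H

lemma nseq_ge (i : ℕ) (hi : 1 ≤ i) : i + 1 ≤ nseq i := succ_le H.hmono H.h2 i hi

lemma Rtendsto {α : ℝ} (hα0 : 0 < α) (hα1 : α < 1) :
    Filter.Tendsto (fun t => 3 * (Nprod nseq (k₀ + t + 1) : ℝ) *
      (Nprod nseq (k₀ + t) : ℝ) ^ (α - 1) / ((survA nseq r k₀ (t + 1)).card : ℝ))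
      atTop (nhds 0) := by
  set R := fun t => 3 * (Nprod nseq (k₀ + t + 1) : ℝ) *
      (Nprod nseq (k₀ + t) : ℝ) ^ (α - 1) / ((survA nseq r k₀ (t + 1)).card : ℝ) with hR
  have hNpos : ∀ k, (0:ℝ) < (Nprod nseq k : ℝ) := fun k => by
    exact_mod_cast Nprod_pos H.hmono H.h2 k
  have h0 : ∀ t, 0 ≤ R t := by
    intro t
    have := H.Mpos (t + 1)
    have := hNpos (k₀ + t + 1)
    have := hNpos (k₀ + t)
    rw [hR]
    positivity
  -- ratio identity
  have hratio : ∀ t, R (t + 1) = R t * ((nseq (k₀ + t + 2) : ℝ) *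
      (nseq (k₀ + t + 1) : ℝ) ^ (α - 1) / (mcnt nseq r (k₀ + t + 2) : ℝ)) := by
    intro t
    have hm2 : (0:ℝ) < (mcnt nseq r (k₀ + t + 2) : ℝ) := by
      exact_mod_cast mcnt_pos H.hmono H.h2 H.hr0 (by omega) (H.hgood _ (by omega))
    have hM1 := H.Mpos (t + 1)
    have hn1 : (0:ℝ) < (nseq (k₀ + t + 1) : ℝ) := by
      have := two_le H.hmono H.h2 (show 1 ≤ k₀ + t + 1 by omega); exact_mod_cast by omega
    have hn2 : (0:ℝ) < (nseq (k₀ + t + 2) : ℝ) := by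
      have := two_le H.hmono H.h2 (show 1 ≤ k₀ + t + 2 by omega); exact_mod_cast by omega
    have e1 : (Nprod nseq (k₀ + t + 2) : ℝ) =
        (Nprod nseq (k₀ + t + 1) : ℝ) * (nseq (k₀ + t + 2) : ℝ) := by
      exact_mod_cast congrArg (Nat.cast : ℕ → ℝ) (Nprod_succ (k₀ + t + 1))
    have e2 : (Nprod nseq (k₀ + t + 1) : ℝ) ^ (α - 1) =
        (Nprod nseq (k₀ + t) : ℝ) ^ (α - 1) * (nseq (k₀ + t + 1) : ℝ) ^ (α - 1) := by
      have : (Nprod nseq (k₀ + t + 1) : ℝ) =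
          (Nprod nseq (k₀ + t) : ℝ) * (nseq (k₀ + t + 1) : ℝ) := by
        exact_mod_cast congrArg (Nat.cast : ℕ → ℝ) (Nprod_succ (k₀ + t))
      rw [this, Real.mul_rpow (hNpos _).le hn1.le]
    have e3 : ((survA nseq r k₀ (t + 2)).card : ℝ) =
        ((survA nseq r k₀ (t + 1)).card : ℝ) * (mcnt nseq r (k₀ + t + 2) : ℝ) := by
      exact_mod_cast congrArg (Nat.cast : ℕ → ℝ) (card_survA_succ H.hmono H.h2 H.hr0 (t + 1))
    rw [hR]
    simp only
    rw [show k₀ + (t + 1) + 1 = k₀ + t + 2 from by omega, show k₀ + (t + 1) = k₀ + t + 1 from rfl]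
    rw [e1, e2, e3]
    field_simp
  -- eventually the ratio factor is at most 1/2
  have hfac : ∀ᶠ t in atTop, (nseq (k₀ + t + 2) : ℝ) *
      (nseq (k₀ + t + 1) : ℝ) ^ (α - 1) / (mcnt nseq r (k₀ + t + 2) : ℝ) ≤ 1 / 2 := by
    have h2r : 0 < 1 - 2 * r := by have := H.hr; linarith
    -- nseq (k₀+t+1) ≥ t and tends to infinity
    have hge : ∀ t : ℕ, (t : ℝ) ≤ (nseq (k₀ + t + 1) : ℝ) := by
      intro t
      have := H.nseq_ge (k₀ + t + 1) (by omega)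
      exact_mod_cast by omega
    have hna : Filter.Tendsto (fun t : ℕ => ((nseq (k₀ + t + 1) : ℝ))) atTop atTop :=
      tendsto_atTop_mono hge tendsto_natCast_atTop_atTop
    have hnb : Filter.Tendsto (fun t : ℕ => ((nseq (k₀ + t + 2) : ℝ))) atTop atTop := by
      have hge2 : ∀ t : ℕ, (t : ℝ) ≤ (nseq (k₀ + t + 2) : ℝ) := by
        intro t
        have := H.nseq_ge (k₀ + t + 2) (by omega)
        exact_mod_cast by omega
      exact tendsto_atTop_mono hge2 tendsto_natCast_atTop_atTop
    have hrpow : Filter.Tendsto (fun t : ℕ => ((nseq (k₀ + t + 1) : ℝ)) ^ (1 - α))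
        atTop atTop := (tendsto_rpow_atTop (by linarith)).comp hna
    have hev1 : ∀ᶠ t in atTop, 4 / (1 - 2 * r) ≤ ((nseq (k₀ + t + 1) : ℝ)) ^ (1 - α) :=
      hrpow.eventually_ge_atTop _
    have hev2 : ∀ᶠ t in atTop, 4 / (1 - 2 * r) ≤ ((nseq (k₀ + t + 2) : ℝ)) :=
      hnb.eventually_ge_atTop _
    filter_upwards [hev1, hev2] with t h1 h2
    have hn1 : (0:ℝ) < (nseq (k₀ + t + 1) : ℝ) := by
      have := two_le H.hmono H.h2 (show 1 ≤ k₀ + t + 1 by omega); exact_mod_cast by omega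
    have hn2 : (0:ℝ) < (nseq (k₀ + t + 2) : ℝ) := by
      have := two_le H.hmono H.h2 (show 1 ≤ k₀ + t + 2 by omega); exact_mod_cast by omega
    have hn2N : 0 < nseq (k₀ + t + 2) := by
      have := two_le H.hmono H.h2 (show 1 ≤ k₀ + t + 2 by omega); omega
    have h4 : (4:ℝ) ≤ (1 - 2 * r) * (nseq (k₀ + t + 2) : ℝ) := by
      have := (div_le_iff₀ h2r).mp h2
      linarith [mul_comm ((nseq (k₀ + t + 2) : ℝ)) (1 - 2*r)]
    have hm2ge : (1 - 2 * r) * (nseq (k₀ + t + 2) : ℝ) / 2 ≤ (mcnt nseq r (k₀ + t + 2) : ℝ) := by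
      have hbase := mcnt_ge (nseq := nseq) H.hr0 (k := k₀ + t + 2) hn2N
      linarith
    have hm2pos : (0:ℝ) < (1 - 2 * r) * (nseq (k₀ + t + 2) : ℝ) / 2 := by positivity
    have hfb : ((nseq (k₀ + t + 1) : ℝ)) ^ (α - 1) ≤ (1 - 2 * r) / 4 := by
      have hx : ((nseq (k₀ + t + 1) : ℝ)) ^ (α - 1) =
          (((nseq (k₀ + t + 1) : ℝ)) ^ (1 - α))⁻¹ := by
        rw [show α - 1 = -(1 - α) from by ring, Real.rpow_neg hn1.le]
      rw [hx]
      have hpos : (0:ℝ) < 4 / (1 - 2 * r) := by positivity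
      have := inv_anti₀ hpos h1
      calc (((nseq (k₀ + t + 1) : ℝ)) ^ (1 - α))⁻¹ ≤ (4 / (1 - 2 * r))⁻¹ := this
        _ = (1 - 2 * r) / 4 := by rw [inv_div]
    calc (nseq (k₀ + t + 2) : ℝ) * (nseq (k₀ + t + 1) : ℝ) ^ (α - 1) /
          (mcnt nseq r (k₀ + t + 2) : ℝ)
        ≤ ((nseq (k₀ + t + 2) : ℝ) * ((1 - 2 * r) / 4)) /
          ((1 - 2 * r) * (nseq (k₀ + t + 2) : ℝ) / 2) := by
          apply div_le_div₀ (by positivity) ?_ hm2pos hm2ge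
          apply mul_le_mul_of_nonneg_left hfb hn2.le
      _ = 1 / 2 := by
          field_simp
          ring
  obtain ⟨T, hT⟩ := Filter.eventually_atTop.mp hfac
  apply tendsto_zero_of_half h0 (T := T)
  intro t ht
  rw [hratio t]
  have hhalf := hT t ht
  have := mul_le_mul_of_nonneg_left hhalf (h0 t)
  linarith

end Std

namespace Std

variable {nseq : ℕ → ℕ} {r : ℝ} {k₀ : ℕ} (H : Std nseq r k₀)
include H

lemma exists_holder {α : ℝ} (hα0 : 0 < α) (hα1 : α < 1) :
    ∃ C : ℝ, 0 < C ∧ ∀ x y : ℝ, x ≤ y →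
      gfun nseq r k₀ y - gfun nseq r k₀ x ≤ C * (y - x) ^ α := by
  have hNpos : ∀ k, (0:ℝ) < (Nprod nseq k : ℝ) := fun k => by
    exact_mod_cast Nprod_pos H.hmono H.h2 k
  set R := fun t => 3 * (Nprod nseq (k₀ + t + 1) : ℝ) *
      (Nprod nseq (k₀ + t) : ℝ) ^ (α - 1) / ((survA nseq r k₀ (t + 1)).card : ℝ) with hRdef
  obtain ⟨C₀, hC₀⟩ := (H.Rtendsto hα0 hα1).bddAbove_range
  have hC₀' : ∀ t, R t ≤ C₀ := fun t => hC₀ ⟨t, rfl⟩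
  set C : ℝ := max (max C₀ 1) ((Nprod nseq (k₀ + 1) : ℝ) ^ α) with hCdef
  have hC1 : (1:ℝ) ≤ C := le_trans (le_max_right _ _) (le_max_left _ _)
  have hCpos : 0 < C := lt_of_lt_of_le one_pos hC1
  refine ⟨C, hCpos, ?_⟩
  intro x y hxy
  rcases eq_or_lt_of_le hxy with rfl | hlt
  · simp only [sub_self]
    rw [Real.zero_rpow (ne_of_gt hα0)]
    simp
  have hd0 : 0 < y - x := by linarith
  have hdα : (0:ℝ) < (y - x) ^ α := Real.rpow_pos_of_pos hd0 α
  rcases le_or_gt (1 / (Nprod nseq (k₀ + 1) : ℝ)) (y - x) with hbig | hsmall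
  · -- big gap : use trivial bound 1
    have h1 : gfun nseq r k₀ y - gfun nseq r k₀ x ≤ 1 := by
      have := H.gfun_le_one y
      have := H.gfun_nonneg x
      linarith
    have h2 : (1:ℝ) ≤ ((Nprod nseq (k₀ + 1) : ℝ)) ^ α * (y - x) ^ α := by
      have hr1 : (1 / (Nprod nseq (k₀ + 1) : ℝ)) ^ α ≤ (y - x) ^ α :=
        Real.rpow_le_rpow (by positivity) hbig hα0.le
      have hmul : ((Nprod nseq (k₀ + 1) : ℝ)) ^ α * (1 / (Nprod nseq (k₀ + 1) : ℝ)) ^ α = 1 := by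
        rw [← Real.mul_rpow (hNpos _).le (by positivity)]
        rw [mul_one_div, div_self (ne_of_gt (hNpos _)), Real.one_rpow]
      calc (1:ℝ) = ((Nprod nseq (k₀ + 1) : ℝ)) ^ α * (1 / (Nprod nseq (k₀ + 1) : ℝ)) ^ α :=
            hmul.symm
        _ ≤ _ := by
            apply mul_le_mul_of_nonneg_left hr1 (by positivity)
    calc gfun nseq r k₀ y - gfun nseq r k₀ x ≤ 1 := h1
      _ ≤ ((Nprod nseq (k₀ + 1) : ℝ)) ^ α * (y - x) ^ α := h2
      _ ≤ C * (y - x) ^ α := by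
          apply mul_le_mul_of_nonneg_right (le_trans (le_max_right _ _) le_rfl) hdα.le
  · -- small gap : find the right scale t ≥ 1
    have hex : ∃ s, (1:ℝ) / (Nprod nseq (k₀ + s) : ℝ) ≤ y - x := by
      obtain ⟨s, hs⟩ := pow_unbounded_of_one_lt (1 / (y - x)) (by norm_num : (1:ℝ) < 2)
      refine ⟨s, ?_⟩
      have hNge : (2:ℝ) ^ s ≤ (Nprod nseq (k₀ + s) : ℝ) := by
        have h1 : 2 ^ s * 1 ≤ 2 ^ s * Nprod nseq k₀ :=
          Nat.mul_le_mul_left _ (Nprod_pos H.hmono H.h2 k₀)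
        have h2 := Nprod_ge_pow H.hmono H.h2 k₀ s
        have : (2:ℕ) ^ s ≤ Nprod nseq (k₀ + s) := by omega
        exact_mod_cast this
      rw [div_le_iff₀ (hNpos _)]
      have h3 : 1 / (y - x) ≤ (Nprod nseq (k₀ + s) : ℝ) := le_trans (le_of_lt hs) hNge
      rw [div_le_iff₀ hd0] at h3
      linarith [mul_comm (y - x) ((Nprod nseq (k₀ + s) : ℝ))]
    classical
    set s₀ := Nat.find hex with hs₀def
    have hs₀ : (1:ℝ) / (Nprod nseq (k₀ + s₀) : ℝ) ≤ y - x := Nat.find_spec hex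
    have hnot : ∀ s < s₀, ¬ ((1:ℝ) / (Nprod nseq (k₀ + s) : ℝ) ≤ y - x) :=
      fun s hs => Nat.find_min hex hs
    have hP1 : ¬ ((1:ℝ) / (Nprod nseq (k₀ + 1) : ℝ) ≤ y - x) := not_le.mpr hsmall
    have hP0 : ¬ ((1:ℝ) / (Nprod nseq (k₀ + 0) : ℝ) ≤ y - x) := by
      apply not_le.mpr
      refine lt_of_lt_of_le hsmall ?_
      apply one_div_le_one_div_of_le (hNpos _)
      have hmono' : Nprod nseq k₀ ≤ Nprod nseq (k₀ + 1) := by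
        rw [Nprod_succ]
        have hn2 : 2 ≤ nseq (k₀ + 1) := two_le H.hmono H.h2 (by omega)
        nlinarith [Nprod_pos H.hmono H.h2 k₀]
      exact_mod_cast hmono'
    have hs₀ge2 : 2 ≤ s₀ := by
      rcases Nat.lt_or_ge s₀ 2 with hcon | hcon
      · interval_cases s₀
        · exact absurd hs₀ hP0
        · exact absurd hs₀ hP1
      · exact hcon
    set t := s₀ - 1 with ht_def
    have ht1 : 1 ≤ t := by omega
    have hPt : y - x < 1 / (Nprod nseq (k₀ + t) : ℝ) := by
      have := hnot t (by omega)
      push_neg at this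
      exact this
    have hPt1 : (1:ℝ) / (Nprod nseq (k₀ + t + 1) : ℝ) ≤ y - x := by
      rw [show k₀ + t + 1 = k₀ + s₀ from by omega]
      exact hs₀
    have hNd : (1:ℝ) ≤ (y - x) * (Nprod nseq (k₀ + t + 1) : ℝ) := by
      rw [div_le_iff₀ (hNpos _)] at hPt1
      linarith
    have hM1 := H.Mpos (t + 1)
    have hstep1 := H.gfun_diff_le hxy (t + 1)
    have hstep2' := Bset_card_le H.hmono H.h2 (t + 1) hxy (r := r) (k₀ := k₀)
    have hstep2 : ((Bset nseq r k₀ (t + 1) x y).card : ℝ) ≤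
        (y - x) * (Nprod nseq (k₀ + t + 1) : ℝ) + 2 := hstep2'
    have hB3 : ((Bset nseq r k₀ (t + 1) x y).card : ℝ) ≤
        3 * (y - x) * (Nprod nseq (k₀ + t + 1) : ℝ) := by linarith
    have key : (y - x) ≤ (Nprod nseq (k₀ + t) : ℝ) ^ (α - 1) * (y - x) ^ α := by
      have e1 : (y - x) = (y - x) ^ α * (y - x) ^ (1 - α) := by
        rw [← Real.rpow_add hd0]
        norm_num
      have e2 : (y - x) ^ (1 - α) ≤ (1 / (Nprod nseq (k₀ + t) : ℝ)) ^ (1 - α) :=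
        Real.rpow_le_rpow hd0.le hPt.le (by linarith)
      have e3 : (1 / (Nprod nseq (k₀ + t) : ℝ)) ^ (1 - α) =
          (Nprod nseq (k₀ + t) : ℝ) ^ (α - 1) := by
        rw [one_div, Real.inv_rpow (hNpos _).le, ← Real.rpow_neg (hNpos _).le]
        congr 1
        ring
      calc (y - x) = (y - x) ^ α * (y - x) ^ (1 - α) := e1
        _ ≤ (y - x) ^ α * (Nprod nseq (k₀ + t) : ℝ) ^ (α - 1) := by
            rw [← e3]
            apply mul_le_mul_of_nonneg_left e2 (by positivity)
        _ = (Nprod nseq (k₀ + t) : ℝ) ^ (α - 1) * (y - x) ^ α := by ring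
    calc gfun nseq r k₀ y - gfun nseq r k₀ x
        ≤ ((Bset nseq r k₀ (t + 1) x y).card : ℝ) / ((survA nseq r k₀ (t + 1)).card : ℝ) :=
          hstep1
      _ ≤ (3 * (y - x) * (Nprod nseq (k₀ + t + 1) : ℝ)) / ((survA nseq r k₀ (t + 1)).card : ℝ) := by
          gcongr
      _ = (3 * (Nprod nseq (k₀ + t + 1) : ℝ) / ((survA nseq r k₀ (t + 1)).card : ℝ)) * (y - x) := by
          ring
      _ ≤ (3 * (Nprod nseq (k₀ + t + 1) : ℝ) / ((survA nseq r k₀ (t + 1)).card : ℝ)) *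
            ((Nprod nseq (k₀ + t) : ℝ) ^ (α - 1) * (y - x) ^ α) := by
          apply mul_le_mul_of_nonneg_left key (by positivity)
      _ = R t * (y - x) ^ α := by rw [hRdef]; ring
      _ ≤ C₀ * (y - x) ^ α := mul_le_mul_of_nonneg_right (hC₀' t) hdα.le
      _ ≤ C * (y - x) ^ α := by
          apply mul_le_mul_of_nonneg_right (le_trans (le_max_left C₀ 1) (le_max_left _ _)) hdα.le

end Std

section Aux7
open scoped Classical

variable {nseq : ℕ → ℕ} {r : ℝ} {k₀ : ℕ}

lemma subset_parent_interval (hmono : StrictMono nseq) (h2 : 2 ≤ nseq 1)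
    {k : ℕ} (hk : 1 ≤ k) (j : ℕ) :
    Icc ((j : ℝ) / (Nprod nseq k : ℝ)) (((j : ℝ) + 1) / (Nprod nseq k : ℝ)) ⊆
      Icc (((j / nseq k : ℕ) : ℝ) / (Nprod nseq (k - 1) : ℝ))
        ((((j / nseq k : ℕ) : ℝ) + 1) / (Nprod nseq (k - 1) : ℝ)) := by
  obtain ⟨k', rfl⟩ : ∃ k', k = k' + 1 := ⟨k - 1, (Nat.succ_pred_eq_of_pos hk).symm⟩
  have hpred : (k' + 1) - 1 = k' := rfl
  rw [hpred]
  have hNp : (0:ℝ) < (Nprod nseq k' : ℝ) := by exact_mod_cast Nprod_pos hmono h2 k'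
  have hn : 0 < nseq (k' + 1) := by have := two_le hmono h2 (by omega : 1 ≤ k' + 1); omega
  have hnR : (0:ℝ) < (nseq (k' + 1) : ℝ) := by exact_mod_cast hn
  have hNs : (Nprod nseq (k' + 1) : ℝ) = (Nprod nseq k' : ℝ) * (nseq (k' + 1) : ℝ) := by
    exact_mod_cast congrArg (Nat.cast : ℕ → ℝ) (Nprod_succ k')
  have hNp1 : (0:ℝ) < (Nprod nseq (k' + 1) : ℝ) := by rw [hNs]; positivity
  set p := j / nseq (k' + 1) with hp
  have hlo : p * nseq (k' + 1) ≤ j := Nat.div_mul_le_self _ _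
  have hhi : j + 1 ≤ (p + 1) * nseq (k' + 1) := by
    have : j < (p + 1) * nseq (k' + 1) := (Nat.div_lt_iff_lt_mul hn).mp (by omega)
    omega
  have hloR : (p : ℝ) * (nseq (k' + 1) : ℝ) ≤ (j : ℝ) := by exact_mod_cast hlo
  have hhiR : (j : ℝ) + 1 ≤ ((p : ℝ) + 1) * (nseq (k' + 1) : ℝ) := by exact_mod_cast hhi
  apply Set.Icc_subset_Icc
  · rw [div_le_div_iff₀ hNp hNp1, hNs]
    nlinarith
  · rw [div_le_div_iff₀ hNp1 hNp, hNs]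
    nlinarith

lemma ancestor_interval (hmono : StrictMono nseq) (h2 : 2 ≤ nseq 1)
    {t u j : ℕ} (hj : j ∈ survA nseq r k₀ (t + u)) :
    ∃ p ∈ survA nseq r k₀ t,
      Icc ((j : ℝ) / (Nprod nseq (k₀ + (t + u)) : ℝ))
          (((j : ℝ) + 1) / (Nprod nseq (k₀ + (t + u)) : ℝ)) ⊆
        Icc ((p : ℝ) / (Nprod nseq (k₀ + t) : ℝ))
          (((p : ℝ) + 1) / (Nprod nseq (k₀ + t) : ℝ)) := by
  induction u generalizing j with
  | zero => exact ⟨j, hj, le_refl _⟩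
  | succ m ih =>
    have hj' : j ∈ survA nseq r k₀ ((t + m) + 1) := hj
    have hpar : j / nseq (k₀ + (t + m) + 1) ∈ survA nseq r k₀ (t + m) := parent_mem_survA hj'
    obtain ⟨p, hpA, hsub⟩ := ih hpar
    refine ⟨p, hpA, ?_⟩
    refine le_trans ?_ hsub
    have hsp := subset_parent_interval hmono h2
      (k := k₀ + (t + m) + 1) (by omega) j
    have hpred : (k₀ + (t + m) + 1) - 1 = k₀ + (t + m) := rfl
    rw [hpred] at hsp
    exact hsp

/-- If `z` is not in the fractal set, then `gfun` is constant near `z`. -/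
lemma locally_const (H : Std nseq r k₀) {z : ℝ} (hz : z ∉ fractalSet nseq r k₀) :
    ∃ δ > 0, ∀ x y : ℝ, |x - z| < δ → |y - z| < δ →
      gfun nseq r k₀ x = gfun nseq r k₀ y := by
  classical
  have hz' : ∃ k, k₀ ≤ k ∧ ∀ j, goodInt nseq r k j →
      z ∉ Icc ((j : ℝ) / (Nprod nseq k : ℝ)) (((j : ℝ) + 1) / (Nprod nseq k : ℝ)) := by
    by_contra hcon
    push_neg at hcon
    apply hz
    simp only [fractalSet, Set.mem_iInter, Set.mem_iUnion]
    intro k hk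
    obtain ⟨j, hj1, hj2⟩ := hcon k hk
    exact ⟨j, hj1, hj2⟩
  obtain ⟨k, hk, hknone⟩ := hz'
  set t := k - k₀ with ht
  have hkt : k = k₀ + t := by omega
  set F : Finset ℕ := (Finset.range (Nprod nseq k)).filter (fun j => goodInt nseq r k j)
    with hF
  set U : Set ℝ := ⋃ j ∈ F, Icc ((j : ℝ) / (Nprod nseq k : ℝ))
    (((j : ℝ) + 1) / (Nprod nseq k : ℝ)) with hU
  have hUclosed : IsClosed U := by
    apply Set.Finite.isClosed_biUnion F.finite_toSet
    intro j _
    exact isClosed_Icc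
  have hzU : z ∉ U := by
    intro hzz
    rw [hU, Set.mem_iUnion₂] at hzz
    obtain ⟨j, hjF, hjz⟩ := hzz
    exact hknone j (Finset.mem_filter.mp hjF).2 hjz
  obtain ⟨δ, hδ0, hδ⟩ := Metric.isOpen_iff.mp hUclosed.isOpen_compl z hzU
  refine ⟨δ, hδ0, ?_⟩
  have hnoend : ∀ s j, t ≤ s → j ∈ survA nseq r k₀ s →
      ¬ |((j : ℝ) + 1) / (Nprod nseq (k₀ + s) : ℝ) - z| < δ := by
    intro s j hts hj habs
    obtain ⟨u, rfl⟩ : ∃ u, s = t + u := ⟨s - t, by omega⟩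
    obtain ⟨p, hpA, hsub⟩ := ancestor_interval H.hmono H.h2 hj
    have hNp : (0:ℝ) < (Nprod nseq (k₀ + (t + u)) : ℝ) := by
      exact_mod_cast Nprod_pos H.hmono H.h2 _
    have hmem : ((j : ℝ) + 1) / (Nprod nseq (k₀ + (t + u)) : ℝ) ∈
        Icc ((j : ℝ) / (Nprod nseq (k₀ + (t + u)) : ℝ))
          (((j : ℝ) + 1) / (Nprod nseq (k₀ + (t + u)) : ℝ)) :=
      Set.mem_Icc.mpr ⟨by gcongr; linarith, le_rfl⟩
    have hmem2 := hsub hmem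
    have hpU : ((j : ℝ) + 1) / (Nprod nseq (k₀ + (t + u)) : ℝ) ∈ U := by
      rw [hU, Set.mem_iUnion₂]
      refine ⟨p, ?_, by rw [hkt]; exact hmem2⟩
      rw [hF, Finset.mem_filter, Finset.mem_range, hkt]
      exact ⟨mem_survA_lt hpA, mem_survA_good hpA⟩
    have hball := hδ (show _ ∈ Metric.ball z δ by rw [Metric.mem_ball, Real.dist_eq]; exact habs)
    exact hball hpU
  suffices hle : ∀ x y : ℝ, |x - z| < δ → |y - z| < δ → x ≤ y →
      gfun nseq r k₀ x = gfun nseq r k₀ y by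
    intro x y hx hy
    rcases le_total x y with hxy | hxy
    · exact hle x y hx hy hxy
    · exact (hle y x hy hx hxy).symm
  intro x y hx hy hxy
  have hcnt : ∀ s, t ≤ s → cnt nseq r k₀ s x = cnt nseq r k₀ s y := by
    intro s hts
    unfold cnt
    congr 1
    ext j
    simp only [Finset.mem_filter]
    constructor
    · rintro ⟨hjA, hjx⟩
      exact ⟨hjA, le_trans hjx hxy⟩
    · rintro ⟨hjA, hjy⟩
      refine ⟨hjA, ?_⟩
      by_contra hcon
      push_neg at hcon
      have habs : |((j : ℝ) + 1) / (Nprod nseq (k₀ + s) : ℝ) - z| < δ := by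
        rw [abs_lt] at hx hy ⊢
        constructor <;> linarith
      exact hnoend s j hts hjA habs
  have hgfa : ∀ᶠ s in atTop, gfa nseq r k₀ s x = gfa nseq r k₀ s y := by
    rw [Filter.eventually_atTop]
    exact ⟨t, fun s hs => by rw [gfa, gfa, hcnt s hs]⟩
  exact tendsto_nhds_unique (H.gfun_tendsto x) ((H.gfun_tendsto y).congr' (hgfa.mono fun s hs => hs.symm))

end Aux7

open scoped NNReal ENNReal
namespace Std

variable {nseq : ℕ → ℕ} {r : ℝ} {k₀ : ℕ} (H : Std nseq r k₀)
include H

lemma holderWith {α : ℝ≥0} (hα0 : 0 < α) (hα1 : (α : ℝ) < 1) :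
    ∃ C : ℝ≥0, HolderWith C α (gfun nseq r k₀) := by
  have hα0' : (0:ℝ) < (α : ℝ) := by exact_mod_cast hα0
  obtain ⟨C, hCpos, hC⟩ := H.exists_holder hα0' hα1
  set Cn : ℝ≥0 := ⟨C, hCpos.le⟩ with hCn
  refine ⟨Cn, ?_⟩
  have key : ∀ x y : ℝ, x ≤ y →
      edist (gfun nseq r k₀ x) (gfun nseq r k₀ y) ≤
        (Cn : ℝ≥0∞) * edist x y ^ (α : ℝ) := by
    intro x y hxy
    rw [edist_dist, edist_dist, Real.dist_eq, Real.dist_eq]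
    have hmono' := H.gfun_mono hxy
    have habs1 : |gfun nseq r k₀ x - gfun nseq r k₀ y| = gfun nseq r k₀ y - gfun nseq r k₀ x := by
      rw [abs_sub_comm, abs_of_nonneg (by linarith)]
    have habs2 : |x - y| = y - x := by rw [abs_sub_comm, abs_of_nonneg (by linarith)]
    rw [habs1, habs2]
    have hbound := hC x y hxy
    calc ENNReal.ofReal (gfun nseq r k₀ y - gfun nseq r k₀ x)
        ≤ ENNReal.ofReal (C * (y - x) ^ (α : ℝ)) := ENNReal.ofReal_le_ofReal hbound
      _ = ENNReal.ofReal C * ENNReal.ofReal ((y - x) ^ (α : ℝ)) :=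
          ENNReal.ofReal_mul hCpos.le
      _ = (Cn : ℝ≥0∞) * ENNReal.ofReal (y - x) ^ (α : ℝ) := by
          rw [ENNReal.ofReal_rpow_of_nonneg (by linarith) hα0'.le]
          congr 1
          exact (ENNReal.ofReal_eq_coe_nnreal hCpos.le)
  intro x y
  rcases _root_.le_total x y with hxy | hxy
  · exact key x y hxy
  · rw [edist_comm, edist_comm x y]
    exact key y x hxy

lemma gfun_continuous : Continuous (gfun nseq r k₀) := by
  have h0 : (0:ℝ≥0) < 1/2 := by norm_num
  obtain ⟨C, hC⟩ := H.holderWith (α := 1/2) h0 (by norm_num)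
  exact hC.continuous h0

lemma surj {u : ℝ} (hu : u ∈ Ioo (0:ℝ) 1) :
    ∃ x, x ∈ fractalSet nseq r k₀ ∧ gfun nseq r k₀ x = u := by
  classical
  have hcont := H.gfun_continuous
  set g := gfun nseq r k₀ with hg
  set E : Set ℝ := Icc (0:ℝ) 1 ∩ g ⁻¹' (Ici u) with hE
  have hE1 : (1:ℝ) ∈ E := by
    refine ⟨⟨zero_le_one, le_rfl⟩, ?_⟩
    simp only [Set.mem_preimage, Set.mem_Ici, hg]
    rw [H.gfun_one]
    exact hu.2.le
  have hEne : E.Nonempty := ⟨1, hE1⟩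
  have hEbdd : BddBelow E := ⟨0, fun x hx => hx.1.1⟩
  have hEclosed : IsClosed E :=
    IsClosed.inter isClosed_Icc (IsClosed.preimage hcont isClosed_Ici)
  set x₀ := sInf E with hx₀
  have hx₀E : x₀ ∈ E := hEclosed.csInf_mem hEne hEbdd
  have hgx₀ : u ≤ g x₀ := hx₀E.2
  have hx₀mem : x₀ ∈ Icc (0:ℝ) 1 := hx₀E.1
  have hx₀0 : 0 < x₀ := by
    rcases eq_or_lt_of_le hx₀mem.1 with heq | hlt
    · exfalso
      rw [← heq] at hgx₀
      rw [hg] at hgx₀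
      rw [H.gfun_zero] at hgx₀
      linarith [hu.1]
    · exact hlt
  have hglt : ∀ x, 0 ≤ x → x < x₀ → g x < u := by
    intro x hx0 hxx
    by_contra hcon
    push_neg at hcon
    have hxE : x ∈ E := ⟨⟨hx0, le_trans hxx.le hx₀mem.2⟩, hcon⟩
    have := csInf_le hEbdd hxE
    rw [← hx₀] at this
    linarith
  have hgeq : g x₀ = u := by
    refine le_antisymm ?_ hgx₀
    by_contra hcon
    push_neg at hcon
    have hev : ∀ᶠ x in nhds x₀, u < g x :=
      (hcont.tendsto x₀).eventually (eventually_gt_nhds hcon)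
    obtain ⟨ε, hε0, hε⟩ := Metric.eventually_nhds_iff.mp hev
    set x := max 0 (x₀ - ε / 2) with hxdef
    have hx0 : 0 ≤ x := le_max_left _ _
    have hxlt : x < x₀ := by
      rw [hxdef, max_lt_iff]
      constructor <;> [exact hx₀0; linarith]
    have hxd : dist x x₀ < ε := by
      rw [Real.dist_eq, abs_lt]
      have : x₀ - ε / 2 ≤ x := le_max_right _ _
      constructor <;> [linarith; linarith]
    have := hε hxd
    have := hglt x hx0 hxlt
    linarith
  have hxF : x₀ ∈ fractalSet nseq r k₀ := by
    by_contra hcon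
    obtain ⟨δ, hδ0, hconst⟩ := locally_const H hcon
    set x := max 0 (x₀ - δ / 2) with hxdef
    have hx0 : 0 ≤ x := le_max_left _ _
    have hxlt : x < x₀ := by
      rw [hxdef, max_lt_iff]
      constructor <;> [exact hx₀0; linarith]
    have hxd : |x - x₀| < δ := by
      rw [abs_lt]
      have : x₀ - δ / 2 ≤ x := le_max_right _ _
      constructor <;> [linarith; linarith]
    have heqc : g x = g x₀ := hconst x x₀ hxd (by simpa using hδ0)
    have := hglt x hx0 hxlt
    rw [heqc, hgeq] at this
    exact _root_.lt_irrefl u this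
  exact ⟨x₀, hxF, hgeq⟩

end Std

theorem fractalSet_dimH_eq_one (nseq : ℕ → ℕ) (hmono : StrictMono nseq)
    (h2 : 2 ≤ nseq 1) (r : ℝ) (hr0 : 0 < r) (hr : r < 1 / 2)
    (k₀ : ℕ) (hk₀ : 1 ≤ k₀) (hne : (fractalSet nseq r k₀).Nonempty) :
    dimH (fractalSet nseq r k₀) = 1 := by
  classical
  have hgood : ∀ k, k₀ ≤ k → ∃ j, goodInt nseq r k j := by
    obtain ⟨x, hx⟩ := hne
    simp only [fractalSet, Set.mem_iInter, Set.mem_iUnion] at hx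
    intro k hk
    obtain ⟨j, hj, _⟩ := hx k hk
    exact ⟨j, hj⟩
  have H : Std nseq r k₀ := ⟨hmono, h2, hr0, hr, hk₀, hgood⟩
  apply le_antisymm
  · calc dimH (fractalSet nseq r k₀) ≤ dimH (Set.univ : Set ℝ) :=
        dimH_mono (Set.subset_univ _)
      _ = 1 := Real.dimH_univ
  · apply ENNReal.le_of_forall_nnreal_lt
    intro ρ hρ
    rcases eq_or_lt_of_le (zero_le : (0:ℝ≥0) ≤ ρ) with hz | hρ0
    · simp [← hz]
    have hρ1' : ρ < 1 := by exact_mod_cast hρ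
    have hρ1 : (ρ : ℝ) < 1 := by exact_mod_cast hρ1'
    obtain ⟨C, hw⟩ := H.holderWith hρ0 hρ1
    have hho : HolderOnWith C ρ (gfun nseq r k₀) (fractalSet nseq r k₀) := hw.holderOnWith _
    have hdim := hho.dimH_image_le hρ0
    have himg : Ioo (0:ℝ) 1 ⊆ gfun nseq r k₀ '' (fractalSet nseq r k₀) := by
      intro u hu
      obtain ⟨x, hxF, hxu⟩ := H.surj hu
      exact ⟨x, hxF, hxu⟩
    have h1 : dimH (Ioo (0:ℝ) 1) = 1 := by
      rw [Real.dimH_of_mem_nhds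
        (Ioo_mem_nhds (by norm_num) (by norm_num) : Ioo (0:ℝ) 1 ∈ nhds (1/2 : ℝ))]
      simp
    have hchain : (1:ℝ≥0∞) ≤ dimH (fractalSet nseq r k₀) / (ρ : ℝ≥0∞) := by
      calc (1:ℝ≥0∞) = dimH (Ioo (0:ℝ) 1) := h1.symm
        _ ≤ dimH (gfun nseq r k₀ '' fractalSet nseq r k₀) := dimH_mono himg
        _ ≤ _ := hdim
    have hne0 : (ρ : ℝ≥0∞) ≠ 0 := by exact_mod_cast ne_of_gt hρ0
    have hnetop : (ρ : ℝ≥0∞) ≠ ⊤ := ENNReal.coe_ne_top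
    have := (ENNReal.le_div_iff_mul_le (Or.inl hne0) (Or.inl hnetop)).mp hchain
    simpa using this
end Aux3
end Aux2
end
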